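/- arXiv:2309.10189 — 5 statements merged into one kernel-verified Lean document; each statement's English description precedes it below -/
import Mathlib

section
/- Suppose s ≥ 2 and 𝒫 ∈ ℤ[x₁,…,x_s] is an integral polynomial. For each prime p let ρ_𝒫(p²) be the number of x ∈ (ℤ/p²ℤ)^s with 𝒫(x) ≡ 0 (mod p²), and suppose the infinite product 𝔖_𝒫 = ∏_p (1 − ρ_𝒫(p²)/p^{2s}) over all primes equals 0. Let N_𝒫(P₁,…,P_s) = Σ μ(|𝒫(x)|)², the sum taken over integer vectors x with |x_j| ≤ P_j for each j and 𝒫(x) ≠ 0 (i.e., the number of such x with 𝒫(x) squarefree and nonzero, where μ is the Möbius function). Then N_𝒫(P₁,…,P_s) = o(P₁⋯P_s) as min_j P_j → ∞; that is, for every η > 0 there exists P₀ such that whenever min_j P_j ≥ P₀ one has N_𝒫(P₁,…,P_s) ≤ η·P₁⋯P_s. -/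
set_option maxHeartbeats 1600000

open MvPolynomial Finset

private lemma cast_eval_aux {s : ℕ} (𝓟 : MvPolynomial (Fin s) ℤ) (n : ℕ) (x : Fin s → ℤ) :
    ((eval x 𝓟 : ℤ) : ZMod n) = aeval (fun j => ((x j : ZMod n))) 𝓟 := by
  have h := MvPolynomial.eval₂_comp_left (Int.castRingHom (ZMod n)) (RingHom.id ℤ) x 𝓟
  simp only [MvPolynomial.eval] at *
  rw [aeval_def]
  simpa [Function.comp_def] using h

instance (p : Nat.Primes) : NeZero ((p : ℕ) ^ 2) := ⟨pow_ne_zero 2 p.2.ne_zero⟩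

private lemma icc_ediv_card_bound (m : ℤ) (hmz : 0 < m) (Q : ℤ) (Pr : ℝ)
    (hQP : (Q:ℝ) ≤ Pr) (hmP : (m:ℝ) ≤ Pr) :
    (((Finset.Icc ((-Q)/m) (Q/m)).card : ℕ) : ℝ) ≤ 4 * Pr / (m:ℝ) := by
  have hmr : (0:ℝ) < (m:ℝ) := by exact_mod_cast hmz
  set a := (-Q) / m with hadef
  set b := Q / m with hbdef
  have hb : (b:ℝ) * (m:ℝ) ≤ Pr := by
    have h1 : b * m ≤ Q := Int.mul_le_of_le_ediv hmz (le_refl _)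
    have h2 : ((b * m : ℤ) : ℝ) ≤ (Q : ℝ) := by exact_mod_cast h1
    push_cast at h2
    linarith
  have ha : -Pr ≤ ((a:ℝ) + 1) * (m:ℝ) := by
    have h1 : -Q < (a + 1) * m := Int.lt_ediv_add_one_mul_self _ hmz
    have h2 : ((-Q : ℤ) : ℝ) < (((a + 1) * m : ℤ) : ℝ) := by exact_mod_cast h1
    push_cast at h2
    linarith
  rw [Int.card_Icc]
  rcases le_or_gt a b with hab | hab
  · have hcardval : (((b + 1 - a).toNat : ℕ) : ℝ) = (b:ℝ) + 1 - (a:ℝ) := by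
      exact_mod_cast Int.toNat_of_nonneg (by omega : (0:ℤ) ≤ b + 1 - a)
    rw [hcardval, le_div_iff₀ hmr]
    nlinarith
  · have hz : (b + 1 - a).toNat = 0 := by omega
    rw [hz]
    push_cast
    have hPr : 0 < Pr := lt_of_lt_of_le hmr hmP
    positivity

/-- **Squarefree density of polynomials, Theorem 3.**
If `s ≥ 2`, `𝓟 ∈ ℤ[x₁,…,x_s]` and the singular series
`𝔖_𝓟 = ∏_p (1 - ρ_𝓟(p²)/p^(2s))` vanishes, then the number of `x` with `|x_j| ≤ P_j`
for which `𝓟(x)` is nonzero and squarefree is `o(P₁⋯P_s)` as `min_j P_j → ∞`. -/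
theorem squarefree_density_thm3 (s : ℕ) (hs : 2 ≤ s) (𝓟 : MvPolynomial (Fin s) ℤ)
    (hsing : ∏' p : Nat.Primes,
        (1 - (Nat.card {x : Fin s → ZMod ((p : ℕ) ^ 2) // aeval x 𝓟 = 0} : ℝ) /
          ((p : ℕ) : ℝ) ^ (2 * s)) = 0)
    (η : ℝ) (hη : 0 < η) :
    ∃ P₀ : ℝ, ∀ P : Fin s → ℝ, (∀ j, P₀ ≤ P j) →
      (Nat.card {x : Fin s → ℤ //
          (∀ j, (|x j| : ℝ) ≤ P j) ∧ eval x 𝓟 ≠ 0 ∧ Squarefree (eval x 𝓟)} : ℝ)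
        ≤ η * ∏ j, P j := by
  classical
  set f : Nat.Primes → ℝ := fun p =>
    1 - (Nat.card {x : Fin s → ZMod ((p : ℕ) ^ 2) // aeval x 𝓟 = 0} : ℝ) /
      ((p : ℕ) : ℝ) ^ (2 * s) with hfdef
  -- the root counts
  have hρle : ∀ p : Nat.Primes,
      Nat.card {x : Fin s → ZMod ((p : ℕ) ^ 2) // aeval x 𝓟 = 0} ≤ (p : ℕ) ^ (2 * s) := by
    intro p
    have h1 : Nat.card {x : Fin s → ZMod ((p : ℕ) ^ 2) // aeval x 𝓟 = 0}
        ≤ Nat.card (Fin s → ZMod ((p : ℕ) ^ 2)) :=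
      Nat.card_le_card_of_injective _ Subtype.val_injective
    calc Nat.card {x : Fin s → ZMod ((p : ℕ) ^ 2) // aeval x 𝓟 = 0}
        ≤ Nat.card (Fin s → ZMod ((p : ℕ) ^ 2)) := h1
      _ = (p : ℕ) ^ (2 * s) := by
          rw [Nat.card_eq_fintype_card]
          simp [ZMod.card, pow_mul]
  have hf0 : ∀ p : Nat.Primes, 0 ≤ f p := by
    intro p
    have hpp : (0:ℝ) < ((p:ℕ):ℝ) := by exact_mod_cast p.2.pos
    have hp : (0:ℝ) < ((p:ℕ):ℝ) ^ (2*s) := by positivity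
    have := hρle p
    rw [hfdef]
    simp only [sub_nonneg]
    rw [div_le_one hp]
    exact_mod_cast this
  have hε : 0 < η / 4 ^ s := by positivity
  -- extract a finite set of primes with small partial product
  have hmul : Multipliable f := by
    by_contra h
    rw [hfdef] at h
    rw [tprod_eq_one_of_not_multipliable h] at hsing
    norm_num at hsing
  have hten : Filter.Tendsto (fun S : Finset Nat.Primes => ∏ p ∈ S, f p)
      Filter.atTop (nhds 0) := by
    have := hmul.hasProd
    rwa [hsing] at this
  obtain ⟨S, hS⟩ : ∃ S : Finset Nat.Primes, ∏ p ∈ S, f p < η / 4 ^ s :=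
    (hten.eventually (gt_mem_nhds hε)).exists
  set m : ℕ := ∏ p ∈ S, (p : ℕ) ^ 2 with hmdef
  have hm0 : 0 < m := Finset.prod_pos fun p _ => pow_pos p.2.pos 2
  have hmz : (0:ℤ) < (m:ℤ) := by exact_mod_cast hm0
  have hmr : (0:ℝ) < (m:ℝ) := by exact_mod_cast hm0
  refine ⟨(m : ℝ), fun P hP => ?_⟩
  have hPm : ∀ j, (m : ℝ) ≤ P j := hP
  have hPpos : ∀ j, 0 < P j := fun j => lt_of_lt_of_le hmr (hPm j)
  set QI : Fin s → ℤ := fun j => ⌊P j⌋ with hQI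
  set T₁ : Finset (∀ p : {p : Nat.Primes // p ∈ S}, Fin s → ZMod (((p : Nat.Primes) : ℕ) ^ 2)) :=
    Fintype.piFinset fun p => Finset.univ.filter fun r => aeval r 𝓟 ≠ 0 with hT₁
  set T₂ : Finset (Fin s → ℤ) :=
    Fintype.piFinset fun j => Finset.Icc ((-(QI j)) / (m:ℤ)) ((QI j) / (m:ℤ)) with hT₂
  set A := {x : Fin s → ℤ //
      (∀ j, (|x j| : ℝ) ≤ P j) ∧ eval x 𝓟 ≠ 0 ∧ Squarefree (eval x 𝓟)} with hA
  -- the injection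
  have hcard : Nat.card A ≤ (T₁ ×ˢ T₂).card := by
    have key : ∀ x : A,
        ((fun p : {p : Nat.Primes // p ∈ S} =>
            fun j => ((x.1 j : ℤ) : ZMod (((p : Nat.Primes) : ℕ) ^ 2)),
          fun j => x.1 j / (m:ℤ))
          : (∀ p : {p : Nat.Primes // p ∈ S}, Fin s → ZMod (((p : Nat.Primes) : ℕ) ^ 2))
            × (Fin s → ℤ)) ∈ T₁ ×ˢ T₂ := by
      intro x
      rw [Finset.mem_product]
      constructor
      · rw [hT₁, Fintype.mem_piFinset]
        intro p
        rw [Finset.mem_filter]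
        refine ⟨Finset.mem_univ _, ?_⟩
        intro h0
        rw [← cast_eval_aux 𝓟 (((p : Nat.Primes) : ℕ) ^ 2) x.1,
          ZMod.intCast_zmod_eq_zero_iff_dvd] at h0
        have hp2 : (((p : Nat.Primes) : ℕ) : ℤ) * (((p : Nat.Primes) : ℕ) : ℤ) ∣ eval x.1 𝓟 := by
          have : ((((p : Nat.Primes) : ℕ) ^ 2 : ℕ) : ℤ)
              = (((p : Nat.Primes) : ℕ) : ℤ) * (((p : Nat.Primes) : ℕ) : ℤ) := by
            push_cast; ring
          rwa [this] at h0
        exact (Nat.prime_iff_prime_int.mp (p : Nat.Primes).2).not_unit (x.2.2.2 _ hp2)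
      · rw [hT₂, Fintype.mem_piFinset]
        intro j
        rw [Finset.mem_Icc]
        have habs : |x.1 j| ≤ QI j := Int.le_floor.mpr (by exact_mod_cast x.2.1 j)
        obtain ⟨h1, h2⟩ := abs_le.mp habs
        exact ⟨Int.ediv_le_ediv hmz h1, Int.ediv_le_ediv hmz h2⟩
    rw [← Nat.card_eq_finsetCard (T₁ ×ˢ T₂)]
    refine Nat.card_le_card_of_injective (fun x : A => (⟨_, key x⟩ : ↥(T₁ ×ˢ T₂))) ?_
    intro x y hxy
    rw [Subtype.mk_eq_mk, Prod.mk.injEq] at hxy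
    obtain ⟨h1, h2⟩ := hxy
    apply Subtype.ext
    funext j
    have hdvd : (m:ℤ) ∣ y.1 j - x.1 j := by
      have hcast : (m:ℤ) = ∏ p ∈ S, (((p : Nat.Primes) : ℕ) : ℤ) ^ 2 := by
        rw [hmdef]; push_cast; rfl
      rw [hcast]
      refine Finset.prod_dvd_of_coprime ?_ ?_
      · intro p hp q hq hpq
        simp only [Function.onFun]
        have hne : ((p : Nat.Primes) : ℕ) ≠ ((q : Nat.Primes) : ℕ) := by
          intro h
          exact hpq (Nat.Primes.coe_nat_injective h)
        have hcop : Nat.Coprime (((p : Nat.Primes) : ℕ) ^ 2) (((q : Nat.Primes) : ℕ) ^ 2) :=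
          ((Nat.coprime_primes p.2 q.2).mpr hne).pow 2 2
        have := hcop.isCoprime
        push_cast at this ⊢
        exact this
      · intro p hp
        have hpj := congrFun (congrFun h1 ⟨p, hp⟩) j
        have hmodeq := (ZMod.intCast_eq_intCast_iff _ _ _).mp hpj
        have := Int.ModEq.dvd hmodeq
        push_cast at this ⊢
        exact this
    have hmod : x.1 j % (m:ℤ) = y.1 j % (m:ℤ) := Int.modEq_iff_dvd.mpr hdvd
    have hq := congrFun h2 j
    have hx := Int.mul_ediv_add_emod (x.1 j) (m:ℤ)
    have hy := Int.mul_ediv_add_emod (y.1 j) (m:ℤ)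
    rw [← hx, ← hy, hq, hmod]
  -- card of T₁
  have hcard₁ : (T₁.card : ℝ) = (m:ℝ) ^ s * ∏ p ∈ S, f p := by
    have hper : ∀ p : Nat.Primes,
        (((Finset.univ.filter fun r : Fin s → ZMod ((p:ℕ)^2) => aeval r 𝓟 ≠ 0).card : ℝ))
          = (((p:ℕ)^2 : ℕ):ℝ) ^ s * f p := by
      intro p
      have hroots : (Finset.univ.filter fun r : Fin s → ZMod ((p:ℕ)^2) => aeval r 𝓟 = 0).card
          = Nat.card {x : Fin s → ZMod ((p:ℕ)^2) // aeval x 𝓟 = 0} := by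
        rw [Nat.card_eq_fintype_card, Fintype.card_subtype]
      have hsplit := Finset.card_filter_add_card_filter_not
        (s := (Finset.univ : Finset (Fin s → ZMod ((p:ℕ)^2)))) (fun r => aeval r 𝓟 = 0)
      have huniv : (Finset.univ : Finset (Fin s → ZMod ((p:ℕ)^2))).card = (p:ℕ)^(2*s) := by
        rw [Finset.card_univ]; simp [ZMod.card, pow_mul]
      have hρ := hρle p
      have hcardeq : (Finset.univ.filter fun r : Fin s → ZMod ((p:ℕ)^2) => aeval r 𝓟 ≠ 0).card
          = (p:ℕ)^(2*s) - Nat.card {x : Fin s → ZMod ((p:ℕ)^2) // aeval x 𝓟 = 0} := by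
        simp only [ne_eq]
        omega
      have h2s : (0:ℝ) < (((p:ℕ)):ℝ)^(2*s) := by
        have : (0:ℝ) < ((p:ℕ):ℝ) := by exact_mod_cast p.2.pos
        positivity
      rw [hcardeq, Nat.cast_sub hρ, hfdef]
      push_cast
      rw [← pow_mul]
      field_simp
    rw [hT₁, Fintype.card_piFinset]
    push_cast
    rw [Finset.prod_coe_sort S (fun p : Nat.Primes =>
      ((Finset.univ.filter fun r : Fin s → ZMod ((p:ℕ)^2) => aeval r 𝓟 ≠ 0).card : ℝ))]
    rw [Finset.prod_congr rfl (fun p _ => hper p), Finset.prod_mul_distrib, Finset.prod_pow]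
    congr 1
    rw [hmdef]
    push_cast
    rfl
  -- card of T₂
  have hcard₂ : (T₂.card : ℝ) ≤ ∏ j, 4 * P j / (m:ℝ) := by
    rw [hT₂, Fintype.card_piFinset]
    push_cast
    refine Finset.prod_le_prod (fun j _ => by have := hPpos j; positivity) (fun j _ => ?_)
    exact icc_ediv_card_bound (m:ℤ) hmz (QI j) (P j) (Int.floor_le _) (by exact_mod_cast hPm j)
  have hNle : (Nat.card A : ℝ) ≤ (T₁.card : ℝ) * (T₂.card : ℝ) := by
    have h := hcard
    rw [Finset.card_product] at h
    exact_mod_cast h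
  have hfS : 0 ≤ ∏ p ∈ S, f p := Finset.prod_nonneg fun p _ => hf0 p
  have h4s : (0:ℝ) < 4 ^ s := by positivity
  calc (Nat.card A : ℝ) ≤ (T₁.card : ℝ) * (T₂.card : ℝ) := hNle
    _ ≤ ((m:ℝ)^s * ∏ p ∈ S, f p) * ∏ j, 4 * P j / (m:ℝ) := by
        rw [hcard₁]
        exact mul_le_mul_of_nonneg_left hcard₂ (mul_nonneg (pow_nonneg hmr.le s) hfS)
    _ = (∏ p ∈ S, f p) * (4^s * ∏ j, P j) := by
        have hsplit2 : ∏ j : Fin s, (4 * P j / (m:ℝ)) = (4/(m:ℝ))^s * ∏ j, P j := by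
          calc ∏ j : Fin s, (4 * P j / (m:ℝ)) = ∏ j : Fin s, ((4/(m:ℝ)) * P j) :=
                Finset.prod_congr rfl fun j _ => by ring
            _ = (4/(m:ℝ))^s * ∏ j, P j := by
                rw [Finset.prod_mul_distrib, Finset.prod_const, Finset.card_univ,
                  Fintype.card_fin]
        rw [hsplit2, div_pow]
        have hms : ((m:ℝ))^s ≠ 0 := pow_ne_zero s (ne_of_gt hmr)
        field_simp
    _ ≤ (η/4^s) * (4^s * ∏ j, P j) := by
        refine mul_le_mul_of_nonneg_right hS.le ?_
        have : 0 ≤ ∏ j, P j := Finset.prod_nonneg fun j _ => (hPpos j).le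
        positivity
    _ = η * ∏ j, P j := by
        field_simp
end

section
/- Suppose that a, b, n are positive integers and let Q(n;a,b) denote the number of solutions of a·x² + b·y² = n in positive integers x and y. Then Q(n;a,b) ≤ 2·d(n), where d(n) is the number of positive divisors of n. -/
namespace Estermann

/-- primitive solution of `a x² + b y² = m` -/
def IsP (a b m : ℕ) (s : ℕ × ℕ) : Prop :=
  0 < s.1 ∧ 0 < s.2 ∧ Nat.gcd s.1 s.2 = 1 ∧ a * s.1 ^ 2 + b * s.2 ^ 2 = m

def DD (s t : ℕ × ℕ) : ℤ := (s.1 : ℤ) * t.2 - (t.1 : ℤ) * s.2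
def EE (s t : ℕ × ℕ) : ℤ := (s.1 : ℤ) * t.2 + (t.1 : ℤ) * s.2

section identities

variable {a b m : ℕ} {s t : ℕ × ℕ}

lemma cast_eq (hs : a * s.1 ^ 2 + b * s.2 ^ 2 = m) :
    (a : ℤ) * (s.1:ℤ) ^ 2 + (b:ℤ) * (s.2:ℤ) ^ 2 = (m:ℤ) := by exact_mod_cast congrArg (Nat.cast (R := ℤ)) hs

lemma idA (hs : a * s.1 ^ 2 + b * s.2 ^ 2 = m) (ht : a * t.1 ^ 2 + b * t.2 ^ 2 = m) :
    (m:ℤ) * ((t.2:ℤ)^2 - (s.2:ℤ)^2) = (a:ℤ) * (DD s t * EE s t) := by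
  have hs' := cast_eq hs; have ht' := cast_eq ht
  unfold DD EE
  linear_combination (s.2:ℤ)^2 * ht' - (t.2:ℤ)^2 * hs'

lemma idB (hs : a * s.1 ^ 2 + b * s.2 ^ 2 = m) (ht : a * t.1 ^ 2 + b * t.2 ^ 2 = m) :
    (m:ℤ) * ((s.1:ℤ)^2 - (t.1:ℤ)^2) = (b:ℤ) * (DD s t * EE s t) := by
  have hs' := cast_eq hs; have ht' := cast_eq ht
  unfold DD EE
  linear_combination (t.1:ℤ)^2 * hs' - (s.1:ℤ)^2 * ht'

lemma idS (hs : a * s.1 ^ 2 + b * s.2 ^ 2 = m) (ht : a * t.1 ^ 2 + b * t.2 ^ 2 = m) :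
    ((a:ℤ) * s.1 * t.1 + (b:ℤ) * s.2 * t.2)^2 + (a:ℤ) * b * (DD s t)^2 = (m:ℤ)^2 := by
  have hs' := cast_eq hs; have ht' := cast_eq ht
  unfold DD
  linear_combination ((a:ℤ)*(t.1:ℤ)^2 + (b:ℤ)*(t.2:ℤ)^2) * hs' + (m:ℤ) * ht'

lemma m_dvd_DD_mul_EE (cop : Nat.Coprime a b)
    (hs : a * s.1 ^ 2 + b * s.2 ^ 2 = m) (ht : a * t.1 ^ 2 + b * t.2 ^ 2 = m) :
    (m:ℤ) ∣ DD s t * EE s t := by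
  obtain ⟨u, v, huv⟩ := (Nat.isCoprime_iff_coprime.mpr cop)
  have h1 : (m:ℤ) ∣ (a:ℤ) * (DD s t * EE s t) := ⟨_, (idA hs ht).symm⟩
  have h2 : (m:ℤ) ∣ (b:ℤ) * (DD s t * EE s t) := ⟨_, (idB hs ht).symm⟩
  have : DD s t * EE s t = u * ((a:ℤ) * (DD s t * EE s t)) + v * ((b:ℤ) * (DD s t * EE s t)) := by
    linear_combination (DD s t * EE s t) * huv.symm
  rw [this]
  exact dvd_add (Dvd.dvd.mul_left h1 u) (Dvd.dvd.mul_left h2 v)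

lemma size_DD (ha : 0 < a) (hb : 0 < b) (hs : IsP a b m s) (ht : IsP a b m t) :
    (a:ℤ) * b * (DD s t)^2 < (m:ℤ)^2 := by
  have h := idS hs.2.2.2 ht.2.2.2
  have hS : 1 ≤ (a:ℤ) * s.1 * t.1 + (b:ℤ) * s.2 * t.2 := by
    have h1 : 0 < a * s.1 * t.1 := Nat.mul_pos (Nat.mul_pos ha hs.1) ht.1
    have h2 : 1 ≤ a * s.1 * t.1 + b * s.2 * t.2 := le_trans h1 (Nat.le_add_right _ _)
    push_cast
    exact_mod_cast h2
  nlinarith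

lemma eq_of_DD_eq_zero (hs : IsP a b m s) (ht : IsP a b m t) (hD : DD s t = 0) : s = t := by
  obtain ⟨hs1, hs2, hsg, -⟩ := hs
  obtain ⟨ht1, ht2, htg, -⟩ := ht
  have h : s.1 * t.2 = t.1 * s.2 := by
    have := sub_eq_zero.mp hD
    exact_mod_cast this
  have h1 : s.1 ∣ t.1 := by
    have : s.1 ∣ t.1 * s.2 := ⟨t.2, h.symm⟩
    have cop : Nat.Coprime s.1 s.2 := hsg
    exact (Nat.Coprime.dvd_of_dvd_mul_right cop this)
  have h2 : t.1 ∣ s.1 := by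
    have : t.1 ∣ s.1 * t.2 := ⟨s.2, h⟩
    exact (Nat.Coprime.dvd_of_dvd_mul_right htg this)
  have e1 : s.1 = t.1 := Nat.dvd_antisymm h1 h2
  have e2 : s.2 = t.2 := by
    have : s.1 * t.2 = s.1 * s.2 := by rw [h, e1]
    exact (Nat.eq_of_mul_eq_mul_left hs1 this).symm
  exact Prod.ext e1 e2

/-- triple identity, `E`-version (`Y` side): `t.2 • E(r,s) - s.2 • E(r,t) = r.2 • D(s,t)` -/
lemma idE2D (r s t : ℕ × ℕ) :
    (t.2:ℤ) * EE r s - (s.2:ℤ) * EE r t = (r.2:ℤ) * DD s t := by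
  unfold EE DD; ring

/-- triple identity, `E`-version (`X` side) -/
lemma idE2DX (r s t : ℕ × ℕ) :
    (t.1:ℤ) * EE r s - (s.1:ℤ) * EE r t = -((r.1:ℤ) * DD s t) := by
  unfold EE DD; ring

/-- triple identity, `D`-transitivity (`Y` side): `r.2 • D(s,t) = s.2 • D(r,t) - t.2 • D(r,s)` -/
lemma idD2D (r s t : ℕ × ℕ) :
    (r.2:ℤ) * DD s t = (s.2:ℤ) * DD r t - (t.2:ℤ) * DD r s := by
  unfold DD; ring

lemma idD2DX (r s t : ℕ × ℕ) :
    (r.1:ℤ) * DD s t = (s.1:ℤ) * DD r t - (t.1:ℤ) * DD r s := by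
  unfold DD; ring

end identities
section valu

variable {a b m p : ℕ} {s : ℕ × ℕ}

lemma m_pos (ha : 0 < a) (hs : IsP a b m s) : 0 < m := by
  obtain ⟨hs1, -, -, heq⟩ := hs
  have : 0 < a * s.1 ^ 2 := by positivity
  omega

lemma unit2 (hp : p.Prime) (hpa : ¬ p ∣ a) (hpm : p ∣ m) (hs : IsP a b m s) : ¬ p ∣ s.2 := by
  obtain ⟨hs1, hs2, hsg, heq⟩ := hs
  intro hdvd
  have h2 : p ∣ b * s.2 ^ 2 := Dvd.dvd.mul_left (hdvd.trans (dvd_pow_self s.2 two_ne_zero)) b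
  have h3 : p ∣ a * s.1 ^ 2 := by
    have he : a * s.1 ^ 2 = m - b * s.2 ^ 2 := by omega
    rw [he]; exact Nat.dvd_sub hpm h2
  have h4 : p ∣ s.1 ^ 2 := ((hp.coprime_iff_not_dvd).mpr hpa).dvd_of_dvd_mul_left h3
  have h5 : p ∣ s.1 := hp.dvd_of_dvd_pow h4
  have h6 : p ∣ Nat.gcd s.1 s.2 := Nat.dvd_gcd h5 hdvd
  rw [hsg] at h6
  exact hp.one_lt.ne' (Nat.dvd_one.mp h6)

lemma forcedA (hp : p.Prime) (ha : 0 < a) (hb : 0 < b) (hpa : ¬ p ∣ a)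
    (hcase : b.factorization p < m.factorization p) (hs : IsP a b m s) :
    2 * s.1.factorization p = b.factorization p := by
  have hm0 : m ≠ 0 := (m_pos ha hs).ne'
  have hpm : p ∣ m := by
    have := Nat.ordProj_dvd m p
    exact dvd_trans (dvd_pow_self p (by omega : m.factorization p ≠ 0)) this
  have hy : ¬ p ∣ s.2 := unit2 hp hpa hpm hs
  obtain ⟨hs1, hs2, hsg, heq⟩ := hs
  set μ := b.factorization p with hμdef
  have hb0 : b ≠ 0 := hb.ne'
  have hs10 : s.1 ≠ 0 := hs1.ne'
  have cpa : Nat.Coprime p a := (hp.coprime_iff_not_dvd).mpr hpa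
  have h1 : p ^ μ ∣ m := dvd_trans (pow_dvd_pow p hcase.le) (Nat.ordProj_dvd m p)
  have h2 : p ^ μ ∣ b * s.2 ^ 2 := Dvd.dvd.mul_right (Nat.ordProj_dvd b p) _
  have h3 : p ^ μ ∣ a * s.1 ^ 2 := by
    have he : a * s.1 ^ 2 = m - b * s.2 ^ 2 := by omega
    rw [he]; exact Nat.dvd_sub h1 h2
  have h4 : p ^ μ ∣ s.1 ^ 2 := (Nat.Coprime.pow_left _ cpa).dvd_of_dvd_mul_left h3
  have h5 : ¬ p ^ (μ + 1) ∣ s.1 ^ 2 := by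
    intro hdvd
    have g1 : p ^ (μ + 1) ∣ m := dvd_trans (pow_dvd_pow p hcase) (Nat.ordProj_dvd m p)
    have g2 : p ^ (μ + 1) ∣ a * s.1 ^ 2 := Dvd.dvd.mul_left hdvd a
    have g3 : p ^ (μ + 1) ∣ b * s.2 ^ 2 := by
      have he : b * s.2 ^ 2 = m - a * s.1 ^ 2 := by omega
      rw [he]; exact Nat.dvd_sub g1 g2
    have cps2 : Nat.Coprime (p ^ (μ + 1)) (s.2 ^ 2) :=
      Nat.Coprime.pow _ _ ((hp.coprime_iff_not_dvd).mpr hy)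
    have g4 : p ^ (μ + 1) ∣ b := Nat.Coprime.dvd_of_dvd_mul_right cps2 g3
    have := (Nat.Prime.pow_dvd_iff_le_factorization hp hb0).mp g4
    omega
  have hle : μ ≤ (s.1 ^ 2).factorization p :=
    (Nat.Prime.pow_dvd_iff_le_factorization hp (pow_ne_zero _ hs10)).mp h4
  have hlt : (s.1 ^ 2).factorization p < μ + 1 := by
    by_contra hcon; push_neg at hcon
    exact h5 ((Nat.Prime.pow_dvd_iff_le_factorization hp (pow_ne_zero _ hs10)).mpr hcon)
  have hsq : (s.1 ^ 2).factorization p = 2 * s.1.factorization p := by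
    rw [Nat.factorization_pow]; simp
  omega

lemma forcedB (hp : p.Prime) (ha : 0 < a) (hpa : ¬ p ∣ a)
    (hcase : m.factorization p ≤ b.factorization p) (hs : IsP a b m s) :
    p ^ (m.factorization p - m.factorization p / 2) ∣ s.1 := by
  have hm0 : m ≠ 0 := (m_pos ha hs).ne'
  obtain ⟨hs1, hs2, hsg, heq⟩ := hs
  have hs10 : s.1 ≠ 0 := hs1.ne'
  set K := m.factorization p with hKdef
  have hK1 : p ^ K ∣ m := Nat.ordProj_dvd m p
  have hK2 : p ^ K ∣ b * s.2 ^ 2 :=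
    Dvd.dvd.mul_right (dvd_trans (pow_dvd_pow p hcase) (Nat.ordProj_dvd b p)) _
  have h3 : p ^ K ∣ a * s.1 ^ 2 := by
    have he : a * s.1 ^ 2 = m - b * s.2 ^ 2 := by omega
    rw [he]; exact Nat.dvd_sub hK1 hK2
  have h4 : p ^ K ∣ s.1 ^ 2 :=
    (Nat.Coprime.pow_left _ ((hp.coprime_iff_not_dvd).mpr hpa)).dvd_of_dvd_mul_left h3
  have h5 : K ≤ 2 * s.1.factorization p := by
    have := (Nat.Prime.pow_dvd_iff_le_factorization hp (pow_ne_zero _ hs10)).mp h4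
    have hsq : (s.1 ^ 2).factorization p = 2 * s.1.factorization p := by
      rw [Nat.factorization_pow]; simp
    omega
  have : K - K / 2 ≤ s.1.factorization p := by omega
  exact dvd_trans (pow_dvd_pow p this) (Nat.ordProj_dvd s.1 p)

end valu

section classes

variable {a b m p : ℕ} {r s t : ℕ × ℕ}

lemma not_cast_dvd {p n : ℕ} (h : ¬ p ∣ n) : ¬ (p:ℤ) ∣ (n:ℤ) :=
  fun hh => h (Int.natCast_dvd_natCast.mp hh)

lemma cast_pow_dvd {p e n : ℕ} (h : p ^ e ∣ n) : (p:ℤ) ^ e ∣ (n:ℤ) := by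
  have := Int.natCast_dvd_natCast.mpr h
  push_cast at this
  exact this

lemma pK_dvd_DDEE (cop : Nat.Coprime a b) (hs : IsP a b m s) (ht : IsP a b m t) :
    (p:ℤ) ^ (m.factorization p) ∣ DD s t * EE s t := by
  have h1 : (m:ℤ) ∣ DD s t * EE s t := m_dvd_DD_mul_EE cop hs.2.2.2 ht.2.2.2
  exact (cast_pow_dvd (Nat.ordProj_dvd m p)).trans h1

lemma EtoD {c : ℕ} (hp : p.Prime) (hr : ¬ p ∣ r.2)
    (h1 : (p:ℤ)^c ∣ EE r s) (h2 : (p:ℤ)^c ∣ EE r t) : (p:ℤ)^c ∣ DD s t := by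
  have key : (p:ℤ)^c ∣ (r.2:ℤ) * DD s t := by
    rw [← idE2D r s t]
    exact dvd_sub (h1.mul_left _) (h2.mul_left _)
  exact (Nat.prime_iff_prime_int.mp hp).pow_dvd_of_dvd_mul_left _ (not_cast_dvd hr) key

lemma EtoDX {c : ℕ} (hp : p.Prime) (hr : ¬ p ∣ r.1)
    (h1 : (p:ℤ)^c ∣ EE r s) (h2 : (p:ℤ)^c ∣ EE r t) : (p:ℤ)^c ∣ DD s t := by
  have key : (p:ℤ)^c ∣ (r.1:ℤ) * DD s t := by
    rw [← dvd_neg, ← idE2DX r s t]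
    exact dvd_sub (h1.mul_left _) (h2.mul_left _)
  exact (Nat.prime_iff_prime_int.mp hp).pow_dvd_of_dvd_mul_left _ (not_cast_dvd hr) key

lemma DtoD {c : ℕ} (hp : p.Prime) (hr : ¬ p ∣ r.2)
    (h1 : (p:ℤ)^c ∣ DD r s) (h2 : (p:ℤ)^c ∣ DD r t) : (p:ℤ)^c ∣ DD s t := by
  have key : (p:ℤ)^c ∣ (r.2:ℤ) * DD s t := by
    rw [idD2D r s t]
    exact dvd_sub (h2.mul_left _) (h1.mul_left _)
  exact (Nat.prime_iff_prime_int.mp hp).pow_dvd_of_dvd_mul_left _ (not_cast_dvd hr) key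

lemma DtoDX {c : ℕ} (hp : p.Prime) (hr : ¬ p ∣ r.1)
    (h1 : (p:ℤ)^c ∣ DD r s) (h2 : (p:ℤ)^c ∣ DD r t) : (p:ℤ)^c ∣ DD s t := by
  have key : (p:ℤ)^c ∣ (r.1:ℤ) * DD s t := by
    rw [idD2DX r s t]
    exact dvd_sub (h2.mul_left _) (h1.mul_left _)
  exact (Nat.prime_iff_prime_int.mp hp).pow_dvd_of_dvd_mul_left _ (not_cast_dvd hr) key

/-- the parity trick at `p = 2` (`Y`-side): among three pairwise "coarsely related"
solutions, fine relatedness to a common one propagates. -/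
lemma fine_two {c : ℕ} (hr2 : ¬ 2 ∣ r.2) (hs2 : ¬ 2 ∣ s.2) (ht2 : ¬ 2 ∣ t.2)
    (hrs : (2:ℤ)^c ∣ DD r s) (hrt : (2:ℤ)^c ∣ DD r t) (hst : (2:ℤ)^c ∣ DD s t)
    (nrs : ¬ (2:ℤ)^(c+1) ∣ DD r s) (nrt : ¬ (2:ℤ)^(c+1) ∣ DD r t) :
    (2:ℤ)^(c+1) ∣ DD s t := by
  by_contra nst
  obtain ⟨u1, hu1⟩ := hrs
  obtain ⟨u2, hu2⟩ := hrt
  obtain ⟨u3, hu3⟩ := hst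
  have o1 : ¬ (2:ℤ) ∣ u1 := fun ⟨w,hw⟩ => nrs ⟨w, by rw [hu1, hw]; ring⟩
  have o2 : ¬ (2:ℤ) ∣ u2 := fun ⟨w,hw⟩ => nrt ⟨w, by rw [hu2, hw]; ring⟩
  have o3 : ¬ (2:ℤ) ∣ u3 := fun ⟨w,hw⟩ => nst ⟨w, by rw [hu3, hw]; ring⟩
  have hid := idD2D r s t
  rw [hu1, hu2, hu3] at hid
  have h2c : ((2:ℤ)^c) ≠ 0 := by positivity
  have key : (r.2:ℤ) * u3 = (s.2:ℤ) * u2 - (t.2:ℤ) * u1 := by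
    apply mul_left_cancel₀ h2c
    linear_combination hid
  have m1 : ((r.2:ℤ)) % 2 = 1 := by
    have : ¬ (2:ℤ) ∣ (r.2:ℤ) := not_cast_dvd hr2
    omega
  have m2 : ((s.2:ℤ)) % 2 = 1 := by
    have : ¬ (2:ℤ) ∣ (s.2:ℤ) := not_cast_dvd hs2
    omega
  have m3 : ((t.2:ℤ)) % 2 = 1 := by
    have : ¬ (2:ℤ) ∣ (t.2:ℤ) := not_cast_dvd ht2
    omega
  have n1 : u1 % 2 = 1 := by omega
  have n2 : u2 % 2 = 1 := by omega
  have n3 : u3 % 2 = 1 := by omega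
  have e1 : ((r.2:ℤ) * u3) % 2 = 1 := by rw [Int.mul_emod, m1, n3]; decide
  have e2 : (((s.2:ℤ)) * u2 - ((t.2:ℤ)) * u1) % 2 = 0 := by
    have a1 : ((s.2:ℤ) * u2) % 2 = 1 := by rw [Int.mul_emod, m2, n2]; decide
    have a2 : ((t.2:ℤ) * u1) % 2 = 1 := by rw [Int.mul_emod, m3, n1]; decide
    omega
  rw [key] at e1
  omega

lemma fine_twoX {c : ℕ} (hr2 : ¬ 2 ∣ r.1) (hs2 : ¬ 2 ∣ s.1) (ht2 : ¬ 2 ∣ t.1)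
    (hrs : (2:ℤ)^c ∣ DD r s) (hrt : (2:ℤ)^c ∣ DD r t) (hst : (2:ℤ)^c ∣ DD s t)
    (nrs : ¬ (2:ℤ)^(c+1) ∣ DD r s) (nrt : ¬ (2:ℤ)^(c+1) ∣ DD r t) :
    (2:ℤ)^(c+1) ∣ DD s t := by
  by_contra nst
  obtain ⟨u1, hu1⟩ := hrs
  obtain ⟨u2, hu2⟩ := hrt
  obtain ⟨u3, hu3⟩ := hst
  have o1 : ¬ (2:ℤ) ∣ u1 := fun ⟨w,hw⟩ => nrs ⟨w, by rw [hu1, hw]; ring⟩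
  have o2 : ¬ (2:ℤ) ∣ u2 := fun ⟨w,hw⟩ => nrt ⟨w, by rw [hu2, hw]; ring⟩
  have o3 : ¬ (2:ℤ) ∣ u3 := fun ⟨w,hw⟩ => nst ⟨w, by rw [hu3, hw]; ring⟩
  have hid := idD2DX r s t
  rw [hu1, hu2, hu3] at hid
  have h2c : ((2:ℤ)^c) ≠ 0 := by positivity
  have key : (r.1:ℤ) * u3 = (s.1:ℤ) * u2 - (t.1:ℤ) * u1 := by
    apply mul_left_cancel₀ h2c
    linear_combination hid
  have m1 : ((r.1:ℤ)) % 2 = 1 := by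
    have : ¬ (2:ℤ) ∣ (r.1:ℤ) := not_cast_dvd hr2
    omega
  have m2 : ((s.1:ℤ)) % 2 = 1 := by
    have : ¬ (2:ℤ) ∣ (s.1:ℤ) := not_cast_dvd hs2
    omega
  have m3 : ((t.1:ℤ)) % 2 = 1 := by
    have : ¬ (2:ℤ) ∣ (t.1:ℤ) := not_cast_dvd ht2
    omega
  have n1 : u1 % 2 = 1 := by omega
  have n2 : u2 % 2 = 1 := by omega
  have n3 : u3 % 2 = 1 := by omega
  have e1 : ((r.1:ℤ) * u3) % 2 = 1 := by rw [Int.mul_emod, m1, n3]; decide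
  have e2 : (((s.1:ℤ)) * u2 - ((t.1:ℤ)) * u1) % 2 = 0 := by
    have a1 : ((s.1:ℤ) * u2) % 2 = 1 := by rw [Int.mul_emod, m2, n2]; decide
    have a2 : ((t.1:ℤ) * u1) % 2 = 1 := by rw [Int.mul_emod, m3, n1]; decide
    omega
  rw [key] at e1
  omega

/-- case-A decomposition of `DD` and `EE` at a prime `p` not dividing `a`. -/
lemma splitA (hp : p.Prime) (ha : 0 < a) (hb : 0 < b) (cop : Nat.Coprime a b) (hpa : ¬ p ∣ a)
    (hcase : b.factorization p < m.factorization p) (hs : IsP a b m s) (ht : IsP a b m t) :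
    ∃ us ut : ℕ, ∃ Dq Eq : ℤ,
      2 * (b.factorization p / 2) = b.factorization p ∧
      ¬ p ∣ us ∧ ¬ p ∣ ut ∧ ¬ p ∣ s.2 ∧ ¬ p ∣ t.2 ∧
      DD s t = (p:ℤ)^(b.factorization p / 2) * Dq ∧
      EE s t = (p:ℤ)^(b.factorization p / 2) * Eq ∧
      Dq + Eq = 2 * (us:ℤ) * (t.2:ℤ) ∧
      (p:ℤ)^(m.factorization p - b.factorization p) ∣ Dq * Eq := by
  have hm0 : m ≠ 0 := (m_pos ha hs).ne'
  have hpm : p ∣ m := (hp.dvd_iff_one_le_factorization hm0).mpr (by omega)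
  have hfs := forcedA hp ha hb hpa hcase hs
  have hft := forcedA hp ha hb hpa hcase ht
  set ν := b.factorization p / 2 with hνdef
  have hν2 : 2 * ν = b.factorization p := by omega
  have hsν : s.1.factorization p = ν := by omega
  have htν : t.1.factorization p = ν := by omega
  have hs10 : s.1 ≠ 0 := hs.1.ne'
  have ht10 : t.1 ≠ 0 := ht.1.ne'
  refine ⟨s.1 / p ^ ν, t.1 / p ^ ν,
    (s.1 / p ^ ν : ℕ) * t.2 - (t.1 / p ^ ν : ℕ) * s.2,
    (s.1 / p ^ ν : ℕ) * t.2 + (t.1 / p ^ ν : ℕ) * s.2, hν2, ?_, ?_, ?_, ?_, ?_, ?_, by ring, ?_⟩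
  · rw [← hsν]; exact Nat.not_dvd_ordCompl hp hs10
  · rw [← htν]; exact Nat.not_dvd_ordCompl hp ht10
  · exact unit2 hp hpa hpm hs
  · exact unit2 hp hpa hpm ht
  · have d1 : p ^ ν * (s.1 / p ^ ν) = s.1 := by rw [← hsν]; exact Nat.ordProj_mul_ordCompl_eq_self s.1 p
    have c1 : (s.1:ℤ) = (p:ℤ)^ν * ((s.1 / p ^ ν : ℕ):ℤ) := by exact_mod_cast congrArg (Nat.cast (R := ℤ)) d1.symm
    have d2 : p ^ ν * (t.1 / p ^ ν) = t.1 := by rw [← htν]; exact Nat.ordProj_mul_ordCompl_eq_self t.1 p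
    have c2 : (t.1:ℤ) = (p:ℤ)^ν * ((t.1 / p ^ ν : ℕ):ℤ) := by exact_mod_cast congrArg (Nat.cast (R := ℤ)) d2.symm
    unfold DD; rw [c1, c2]; ring
  · have d1 : p ^ ν * (s.1 / p ^ ν) = s.1 := by rw [← hsν]; exact Nat.ordProj_mul_ordCompl_eq_self s.1 p
    have c1 : (s.1:ℤ) = (p:ℤ)^ν * ((s.1 / p ^ ν : ℕ):ℤ) := by exact_mod_cast congrArg (Nat.cast (R := ℤ)) d1.symm
    have d2 : p ^ ν * (t.1 / p ^ ν) = t.1 := by rw [← htν]; exact Nat.ordProj_mul_ordCompl_eq_self t.1 p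
    have c2 : (t.1:ℤ) = (p:ℤ)^ν * ((t.1 / p ^ ν : ℕ):ℤ) := by exact_mod_cast congrArg (Nat.cast (R := ℤ)) d2.symm
    unfold EE; rw [c1, c2]; ring
  · -- divisibility of Dq * Eq
    have hK := pK_dvd_DDEE (p := p) cop hs ht
    have d1 : p ^ ν * (s.1 / p ^ ν) = s.1 := by rw [← hsν]; exact Nat.ordProj_mul_ordCompl_eq_self s.1 p
    have c1 : (s.1:ℤ) = (p:ℤ)^ν * ((s.1 / p ^ ν : ℕ):ℤ) := by exact_mod_cast congrArg (Nat.cast (R := ℤ)) d1.symm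
    have d2 : p ^ ν * (t.1 / p ^ ν) = t.1 := by rw [← htν]; exact Nat.ordProj_mul_ordCompl_eq_self t.1 p
    have c2 : (t.1:ℤ) = (p:ℤ)^ν * ((t.1 / p ^ ν : ℕ):ℤ) := by exact_mod_cast congrArg (Nat.cast (R := ℤ)) d2.symm
    have e1 : DD s t * EE s t = (p:ℤ)^(2*ν) *
        ((((s.1 / p ^ ν : ℕ):ℤ) * t.2 - ((t.1 / p ^ ν : ℕ):ℤ) * s.2) *
         (((s.1 / p ^ ν : ℕ):ℤ) * t.2 + ((t.1 / p ^ ν : ℕ):ℤ) * s.2)) := by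
      unfold DD EE; rw [c1, c2]; ring
    rw [e1] at hK
    have hsplit : (p:ℤ)^(m.factorization p) = (p:ℤ)^(2*ν) * (p:ℤ)^(m.factorization p - b.factorization p) := by
      rw [← pow_add]; congr 1; omega
    rw [hsplit] at hK
    have hpne : ((p:ℤ))^(2*ν) ≠ 0 := by
      have : (p:ℤ) ≠ 0 := by exact_mod_cast hp.pos.ne'
      positivity
    exact (mul_dvd_mul_iff_left hpne).mp hK

lemma pairA_odd (hp : p.Prime) (hp2 : p ≠ 2) (ha : 0 < a) (hb : 0 < b) (cop : Nat.Coprime a b)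
    (hpa : ¬ p ∣ a) (hcase : b.factorization p < m.factorization p)
    (hs : IsP a b m s) (ht : IsP a b m t) :
    (p:ℤ)^(m.factorization p - b.factorization p / 2) ∣ DD s t ∨
    (p:ℤ)^(m.factorization p - b.factorization p / 2) ∣ EE s t := by
  obtain ⟨us, ut, Dq, Eq, hν2, hus, hut, hs2, ht2, hDD, hEE, hsum, hdvd⟩ :=
    splitA hp ha hb cop hpa hcase hs ht
  set K := m.factorization p
  set μ := b.factorization p
  set ν := μ / 2
  have hKν : K - ν = ν + (K - μ) := by omega
  have hnd : ¬ (p:ℤ) ∣ Dq ∨ ¬ (p:ℤ) ∣ Eq := by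
    by_contra hc
    push_neg at hc
    have h1 : (p:ℤ) ∣ 2 * (us:ℤ) * (t.2:ℤ) := by rw [← hsum]; exact dvd_add hc.1 hc.2
    have h2 : (p:ℤ) ∣ ((2 * us * t.2 : ℕ) : ℤ) := by push_cast; convert h1 using 1
    have h3 : p ∣ 2 * us * t.2 := Int.natCast_dvd_natCast.mp h2
    rcases (Nat.Prime.dvd_mul hp).mp h3 with h4 | h4
    · rcases (Nat.Prime.dvd_mul hp).mp h4 with h5 | h5
      · exact hp2 ((Nat.prime_dvd_prime_iff_eq hp Nat.prime_two).mp h5)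
      · exact hus h5
    · exact ht2 h4
  rcases hnd with h | h
  · right
    have hE : (p:ℤ)^(K - μ) ∣ Eq :=
      (Nat.prime_iff_prime_int.mp hp).pow_dvd_of_dvd_mul_left _ h hdvd
    rw [hEE, hKν, pow_add]
    exact mul_dvd_mul_left _ hE
  · left
    have hD : (p:ℤ)^(K - μ) ∣ Dq :=
      (Nat.prime_iff_prime_int.mp hp).pow_dvd_of_dvd_mul_right _ h hdvd
    rw [hDD, hKν, pow_add]
    exact mul_dvd_mul_left _ hD

lemma pairA_two (ha : 0 < a) (hb : 0 < b) (cop : Nat.Coprime a b)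
    (hpa : ¬ 2 ∣ a) (hcase : b.factorization 2 < m.factorization 2)
    (hs : IsP a b m s) (ht : IsP a b m t) :
    (2:ℤ)^(m.factorization 2 - b.factorization 2 / 2 - 1) ∣ DD s t ∨
    (2:ℤ)^(m.factorization 2 - b.factorization 2 / 2 - 1) ∣ EE s t := by
  obtain ⟨us, ut, Dq, Eq, hν2, hus, hut, hs2, ht2, hDD, hEE, hsum, hdvd⟩ :=
    splitA Nat.prime_two ha hb cop hpa hcase hs ht
  push_cast at hDD hEE hdvd
  set K := m.factorization 2 with hKdef
  set μ := b.factorization 2 with hμdef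
  set ν := μ / 2 with hνdef
  by_cases htriv : K - ν - 1 ≤ ν
  · left
    have : (2:ℤ)^ν ∣ DD s t := ⟨Dq, hDD⟩
    exact (pow_dvd_pow _ htriv).trans this
  push_neg at htriv
  -- now K - μ ≥ 2
  have hKμ : 2 ≤ K - μ := by omega
  -- both Dq and Eq are even
  have h2Dq : (2:ℤ) ∣ Dq := by
    by_contra hD
    have hE : ¬ (2:ℤ) ∣ Eq := by
      intro hE
      apply hD
      have : Dq = 2 * (us:ℤ) * (t.2:ℤ) - Eq := by omega
      rw [this]
      exact dvd_sub ⟨(us:ℤ) * (t.2:ℤ), by ring⟩ hE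
    have hprod : ¬ (2:ℤ) ∣ Dq * Eq := fun hh =>
      ((Int.prime_two.dvd_mul).mp hh).elim hD hE
    have h1 : (2:ℤ) ∣ Dq * Eq := by
      have := (pow_dvd_pow (2:ℤ) (by omega : 1 ≤ K - μ)).trans hdvd
      simpa using this
    exact hprod h1
  have h2Eq : (2:ℤ) ∣ Eq := by
    have : Eq = 2 * (us:ℤ) * (t.2:ℤ) - Dq := by omega
    rw [this]
    exact dvd_sub ⟨(us:ℤ) * (t.2:ℤ), by ring⟩ h2Dq
  obtain ⟨Dr, hDr⟩ := h2Dq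
  obtain ⟨Er, hEr⟩ := h2Eq
  have hsum' : Dr + Er = (us:ℤ) * (t.2:ℤ) := by
    have : 2 * (Dr + Er) = 2 * ((us:ℤ) * (t.2:ℤ)) := by
      rw [mul_add, ← hDr, ← hEr]; linear_combination hsum
    omega
  have hodd : ¬ (2:ℤ) ∣ Dr ∨ ¬ (2:ℤ) ∣ Er := by
    by_contra hc
    push_neg at hc
    have h1 : (2:ℤ) ∣ (us:ℤ) * (t.2:ℤ) := by rw [← hsum']; exact dvd_add hc.1 hc.2
    have h2 : (2:ℤ) ∣ ((us * t.2 : ℕ) : ℤ) := by push_cast; exact h1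
    have h3 : 2 ∣ us * t.2 := Int.natCast_dvd_natCast.mp h2
    rcases (Nat.Prime.dvd_mul Nat.prime_two).mp h3 with h4 | h4
    · exact hus h4
    · exact ht2 h4
  have hdvd' : (2:ℤ)^(K - μ - 2) ∣ Dr * Er := by
    have e1 : Dq * Eq = (2:ℤ)^2 * (Dr * Er) := by rw [hDr, hEr]; ring
    rw [e1] at hdvd
    have e2 : (2:ℤ)^(K - μ) = (2:ℤ)^2 * (2:ℤ)^(K - μ - 2) := by rw [← pow_add]; congr 1; omega
    rw [e2] at hdvd
    exact (mul_dvd_mul_iff_left (by positivity : ((2:ℤ)^2) ≠ 0)).mp hdvd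
  have hexp : K - ν - 1 = (ν + 1) + (K - μ - 2) := by omega
  rcases hodd with h | h
  · right
    have hE : (2:ℤ)^(K - μ - 2) ∣ Er :=
      Int.prime_two.pow_dvd_of_dvd_mul_left _ h hdvd'
    rw [hEE, hEr, hexp, pow_add, pow_succ]
    calc (2:ℤ)^ν * 2 * (2:ℤ)^(K-μ-2) ∣ (2:ℤ)^ν * 2 * Er := mul_dvd_mul_left _ hE
    _ = (2:ℤ)^ν * (2 * Er) := by ring
  · left
    have hD : (2:ℤ)^(K - μ - 2) ∣ Dr :=
      Int.prime_two.pow_dvd_of_dvd_mul_right _ h hdvd'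
    rw [hDD, hDr, hexp, pow_add, pow_succ]
    calc (2:ℤ)^ν * 2 * (2:ℤ)^(K-μ-2) ∣ (2:ℤ)^ν * 2 * Dr := mul_dvd_mul_left _ hD
    _ = (2:ℤ)^ν * (2 * Dr) := by ring

end classes


section labels

variable {a b m p : ℕ}

lemma iff_of_ite_eq {P Q : Prop} [Decidable P] [Decidable Q]
    (h : (if P then true else false) = (if Q then true else false)) : P ↔ Q := by
  by_cases hP : P <;> by_cases hQ : Q <;> simp [hP, hQ] at h ⊢

lemma IsP.swap {s : ℕ × ℕ} (hs : IsP a b m s) : IsP b a m (s.2, s.1) := by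
  obtain ⟨h1, h2, h3, h4⟩ := hs
  exact ⟨h2, h1, by rwa [Nat.gcd_comm], (Nat.add_comm _ _).trans h4⟩

lemma DD_swap (s t : ℕ × ℕ) : DD (s.2, s.1) (t.2, t.1) = - DD s t := by
  simp only [DD]
  ring

lemma lem_odd_core (hp : p.Prime) (hp2 : p ≠ 2) (ha : 0 < a) (hb : 0 < b)
    (cop : Nat.Coprime a b) (hpa : ¬ p ∣ a) :
    ∃ lab : ℕ × ℕ → Bool, ∀ s t, IsP a b m s → IsP a b m t → lab s = lab t →
      (p:ℤ) ^ (m.factorization p - min ((a*b).factorization p / 2) (m.factorization p / 2)) ∣ DD s t := by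
  classical
  have hμab : (a*b).factorization p = b.factorization p := by
    rw [Nat.factorization_mul ha.ne' hb.ne']
    simp [Nat.factorization_eq_zero_of_not_dvd hpa]
  by_cases hcase : b.factorization p < m.factorization p
  · by_cases hex : ∃ r, IsP a b m r
    · obtain ⟨r₀, hr₀⟩ := hex
      have hmin : min ((a*b).factorization p / 2) (m.factorization p / 2)
          = b.factorization p / 2 := by
        rw [hμab]
        exact min_eq_left (Nat.div_le_div_right hcase.le)
      rw [hmin]
      have hm0 : m ≠ 0 := (m_pos ha hr₀).ne'
      have hpm : p ∣ m := (hp.dvd_iff_one_le_factorization hm0).mpr (by omega)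
      have hr2 : ¬ p ∣ r₀.2 := unit2 hp hpa hpm hr₀
      refine ⟨fun s => if (p:ℤ)^(m.factorization p - b.factorization p / 2) ∣ DD r₀ s
        then true else false, ?_⟩
      intro s t hs ht hlab
      have hiff := iff_of_ite_eq hlab
      by_cases h1 : (p:ℤ)^(m.factorization p - b.factorization p / 2) ∣ DD r₀ s
      · exact DtoD hp hr2 h1 (hiff.mp h1)
      · have h2 : ¬ (p:ℤ)^(m.factorization p - b.factorization p / 2) ∣ DD r₀ t :=
          fun hh => h1 (hiff.mpr hh)
        have e1 := (pairA_odd hp hp2 ha hb cop hpa hcase hr₀ hs).resolve_left h1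
        have e2 := (pairA_odd hp hp2 ha hb cop hpa hcase hr₀ ht).resolve_left h2
        exact EtoD hp hr2 e1 e2
    · exact ⟨fun _ => true, fun s t hs ht _ => absurd ⟨s, hs⟩ hex⟩
  · push_neg at hcase
    have hmin : min ((a*b).factorization p / 2) (m.factorization p / 2)
        = m.factorization p / 2 := by
      rw [hμab]
      exact min_eq_right (Nat.div_le_div_right hcase)
    rw [hmin]
    refine ⟨fun _ => true, ?_⟩
    intro s t hs ht _
    have d1 := cast_pow_dvd (forcedB hp ha hpa hcase hs)
    have d2 := cast_pow_dvd (forcedB hp ha hpa hcase ht)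
    unfold DD
    exact dvd_sub (d1.mul_right _) (d2.mul_right _)

lemma lem_two_core (ha : 0 < a) (hb : 0 < b) (cop : Nat.Coprime a b) (hpa : ¬ 2 ∣ a) :
    ∃ lab : ℕ × ℕ → Bool × Bool, ∀ s t, IsP a b m s → IsP a b m t → lab s = lab t →
      (2:ℤ) ^ (m.factorization 2 - min ((a*b).factorization 2 / 2) (m.factorization 2 / 2)) ∣ DD s t := by
  classical
  have hμab : (a*b).factorization 2 = b.factorization 2 := by
    rw [Nat.factorization_mul ha.ne' hb.ne']
    simp [Nat.factorization_eq_zero_of_not_dvd hpa]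
  by_cases hcase : b.factorization 2 < m.factorization 2
  · by_cases hex : ∃ r, IsP a b m r
    · obtain ⟨r₀, hr₀⟩ := hex
      have hmin : min ((a*b).factorization 2 / 2) (m.factorization 2 / 2)
          = b.factorization 2 / 2 := by
        rw [hμab]
        exact min_eq_left (Nat.div_le_div_right hcase.le)
      rw [hmin]
      have hm0 : m ≠ 0 := (m_pos ha hr₀).ne'
      have hpm : 2 ∣ m := (Nat.prime_two.dvd_iff_one_le_factorization hm0).mpr (by omega)
      have hr02 : ¬ 2 ∣ r₀.2 := unit2 Nat.prime_two hpa hpm hr₀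
      have hccf : m.factorization 2 - b.factorization 2 / 2
          = (m.factorization 2 - b.factorization 2 / 2 - 1) + 1 := by omega
      obtain ⟨r₁, hr₁⟩ : ∃ r₁, (∃ r', IsP a b m r' ∧
          ¬ (2:ℤ)^(m.factorization 2 - b.factorization 2 / 2 - 1) ∣ DD r₀ r') →
          (IsP a b m r₁ ∧
            ¬ (2:ℤ)^(m.factorization 2 - b.factorization 2 / 2 - 1) ∣ DD r₀ r₁) := by
        by_cases h : ∃ r', IsP a b m r' ∧
            ¬ (2:ℤ)^(m.factorization 2 - b.factorization 2 / 2 - 1) ∣ DD r₀ r'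
        · exact ⟨h.choose, fun _ => h.choose_spec⟩
        · exact ⟨r₀, fun hh => absurd hh h⟩
      refine ⟨fun s =>
        (if (2:ℤ)^(m.factorization 2 - b.factorization 2 / 2 - 1) ∣ DD r₀ s then true else false,
         if (2:ℤ)^(m.factorization 2 - b.factorization 2 / 2) ∣
            DD (if (2:ℤ)^(m.factorization 2 - b.factorization 2 / 2 - 1) ∣ DD r₀ s
              then r₀ else r₁) s then true else false), ?_⟩
      intro s t hs ht hlab
      have hs2 : ¬ 2 ∣ s.2 := unit2 Nat.prime_two hpa hpm hs
      have ht2 : ¬ 2 ∣ t.2 := unit2 Nat.prime_two hpa hpm ht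
      have h1 := iff_of_ite_eq (congrArg Prod.fst hlab)
      have h2' := congrArg Prod.snd hlab
      simp only at h1 h2'
      by_cases hC : (2:ℤ)^(m.factorization 2 - b.factorization 2 / 2 - 1) ∣ DD r₀ s
      · have hCt : (2:ℤ)^(m.factorization 2 - b.factorization 2 / 2 - 1) ∣ DD r₀ t := h1.mp hC
        rw [if_pos hC, if_pos hCt] at h2'
        have h2 := iff_of_ite_eq h2'
        by_cases hF : (2:ℤ)^(m.factorization 2 - b.factorization 2 / 2) ∣ DD r₀ s
        · exact DtoD Nat.prime_two hr02 hF (h2.mp hF)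
        · have hFt : ¬ (2:ℤ)^(m.factorization 2 - b.factorization 2 / 2) ∣ DD r₀ t :=
            fun hh => hF (h2.mpr hh)
          have hCst : (2:ℤ)^(m.factorization 2 - b.factorization 2 / 2 - 1) ∣ DD s t :=
            DtoD Nat.prime_two hr02 hC hCt
          rw [hccf]
          refine fine_two hr02 hs2 ht2 hC hCt hCst ?_ ?_
          · rw [← hccf]; exact hF
          · rw [← hccf]; exact hFt
      · have hCt : ¬ (2:ℤ)^(m.factorization 2 - b.factorization 2 / 2 - 1) ∣ DD r₀ t :=
          fun hh => hC (h1.mpr hh)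
        obtain ⟨hr₁P, hr₁C⟩ := hr₁ ⟨s, hs, hC⟩
        have hr12 : ¬ 2 ∣ r₁.2 := unit2 Nat.prime_two hpa hpm hr₁P
        have e_s := (pairA_two ha hb cop hpa hcase hr₀ hs).resolve_left hC
        have e_t := (pairA_two ha hb cop hpa hcase hr₀ ht).resolve_left hCt
        have e_r₁ := (pairA_two ha hb cop hpa hcase hr₀ hr₁P).resolve_left hr₁C
        have dC_s : (2:ℤ)^(m.factorization 2 - b.factorization 2 / 2 - 1) ∣ DD r₁ s :=
          EtoD Nat.prime_two hr02 e_r₁ e_s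
        have dC_t : (2:ℤ)^(m.factorization 2 - b.factorization 2 / 2 - 1) ∣ DD r₁ t :=
          EtoD Nat.prime_two hr02 e_r₁ e_t
        have dC_st : (2:ℤ)^(m.factorization 2 - b.factorization 2 / 2 - 1) ∣ DD s t :=
          EtoD Nat.prime_two hr02 e_s e_t
        rw [if_neg hC, if_neg hCt] at h2'
        have h2 := iff_of_ite_eq h2'
        by_cases hF : (2:ℤ)^(m.factorization 2 - b.factorization 2 / 2) ∣ DD r₁ s
        · exact DtoD Nat.prime_two hr12 hF (h2.mp hF)
        · have hFt : ¬ (2:ℤ)^(m.factorization 2 - b.factorization 2 / 2) ∣ DD r₁ t :=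
            fun hh => hF (h2.mpr hh)
          rw [hccf]
          refine fine_two hr12 hs2 ht2 dC_s dC_t dC_st ?_ ?_
          · rw [← hccf]; exact hF
          · rw [← hccf]; exact hFt
    · exact ⟨fun _ => (true, true), fun s t hs ht _ => absurd ⟨s, hs⟩ hex⟩
  · push_neg at hcase
    have hmin : min ((a*b).factorization 2 / 2) (m.factorization 2 / 2)
        = m.factorization 2 / 2 := by
      rw [hμab]
      exact min_eq_right (Nat.div_le_div_right hcase)
    rw [hmin]
    refine ⟨fun _ => (true, true), ?_⟩
    intro s t hs ht _
    have d1 := cast_pow_dvd (forcedB Nat.prime_two ha hpa hcase hs)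
    have d2 := cast_pow_dvd (forcedB Nat.prime_two ha hpa hcase ht)
    unfold DD
    exact dvd_sub (d1.mul_right _) (d2.mul_right _)

lemma lem_odd (hp : p.Prime) (hp2 : p ≠ 2) (ha : 0 < a) (hb : 0 < b) (cop : Nat.Coprime a b) :
    ∃ lab : ℕ × ℕ → Bool, ∀ s t, IsP a b m s → IsP a b m t → lab s = lab t →
      (p:ℤ) ^ (m.factorization p - min ((a*b).factorization p / 2) (m.factorization p / 2)) ∣ DD s t := by
  by_cases hpa : p ∣ a
  · have hpb : ¬ p ∣ b := by
      intro hpb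
      have h := Nat.dvd_gcd hpa hpb
      rw [cop] at h
      exact hp.one_lt.ne' (Nat.dvd_one.mp h)
    obtain ⟨lab, hlab⟩ := lem_odd_core (a := b) (b := a) (m := m) hp hp2 hb ha cop.symm hpb
    refine ⟨fun s => lab (s.2, s.1), ?_⟩
    intro s t hs ht h
    have hD := hlab (s.2, s.1) (t.2, t.1) hs.swap ht.swap h
    rw [DD_swap, mul_comm b a] at hD
    exact (dvd_neg).mp hD
  · exact lem_odd_core hp hp2 ha hb cop hpa

lemma lem_two (ha : 0 < a) (hb : 0 < b) (cop : Nat.Coprime a b) :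
    ∃ lab : ℕ × ℕ → Bool × Bool, ∀ s t, IsP a b m s → IsP a b m t → lab s = lab t →
      (2:ℤ) ^ (m.factorization 2 - min ((a*b).factorization 2 / 2) (m.factorization 2 / 2)) ∣ DD s t := by
  by_cases hpa : 2 ∣ a
  · have hpb : ¬ 2 ∣ b := by
      intro hpb
      have h := Nat.dvd_gcd hpa hpb
      rw [cop] at h
      exact Nat.prime_two.one_lt.ne' (Nat.dvd_one.mp h)
    obtain ⟨lab, hlab⟩ := lem_two_core (a := b) (b := a) (m := m) hb ha cop.symm hpb
    refine ⟨fun s => lab (s.2, s.1), ?_⟩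
    intro s t hs ht h
    have hD := hlab (s.2, s.1) (t.2, t.1) hs.swap ht.swap h
    rw [DD_swap, mul_comm b a] at hD
    exact (dvd_neg).mp hD
  · exact lem_two_core ha hb cop hpa

end labels


section global

variable {a b : ℕ}

lemma prod_pow_dvd {S : Finset ℕ} (hS : ∀ p ∈ S, p.Prime) (f : ℕ → ℕ) (N : ℕ)
    (h : ∀ p ∈ S, p ^ f p ∣ N) : (∏ p ∈ S, p ^ f p) ∣ N := by
  classical
  induction S using Finset.induction_on with
  | empty => simpa using one_dvd N
  | @insert q T hq ih =>
    rw [Finset.prod_insert hq]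
    have hqP : q.Prime := hS q (Finset.mem_insert_self q T)
    have h1 : q ^ f q ∣ N := h q (Finset.mem_insert_self q T)
    have h2 : (∏ p ∈ T, p ^ f p) ∣ N :=
      ih (fun p hp => hS p (Finset.mem_insert_of_mem hp))
         (fun p hp => h p (Finset.mem_insert_of_mem hp))
    have hcop : Nat.Coprime (q ^ f q) (∏ p ∈ T, p ^ f p) := by
      apply Nat.Coprime.prod_right
      intro p hp
      have hpP : p.Prime := hS p (Finset.mem_insert_of_mem hp)
      have hne : q ≠ p := fun hqp => hq (hqp ▸ hp)
      exact Nat.Coprime.pow _ _ ((Nat.coprime_primes hqP hpP).mpr hne)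
    exact Nat.Coprime.mul_dvd_of_dvd_of_dvd hcop h1 h2

lemma fact_encode {S : Finset ℕ} (hS : ∀ p ∈ S, p.Prime) (f : ℕ → ℕ) {e : ℕ} (he : e ≠ 0)
    (q : ℕ) :
    (e * ∏ p ∈ S, p ^ f p).factorization q
      = e.factorization q + (if q ∈ S then f q else 0) := by
  classical
  have hfac0 : ∀ p ∈ S, p ^ f p ≠ 0 := fun p hp => pow_ne_zero _ (hS p hp).pos.ne'
  have hprod0 : (∏ p ∈ S, p ^ f p) ≠ 0 := Finset.prod_ne_zero_iff.mpr hfac0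
  rw [Nat.factorization_mul he hprod0, Finsupp.add_apply]
  congr 1
  rw [Nat.factorization_prod hfac0, Finsupp.finset_sum_apply]
  have : ∀ p ∈ S, (p ^ f p).factorization q = if p = q then f p else 0 := by
    intro p hp
    rw [(hS p hp).factorization_pow, Finsupp.single_apply]
  rw [Finset.sum_congr rfl this, Finset.sum_ite_eq' S q f]

/-- The global injection on primitive solutions of a fixed `m`. -/
lemma prim_inject (ha : 0 < a) (hb : 0 < b) (cop : Nat.Coprime a b) (m : ℕ) :
    ∃ (lab1 : ℕ → (ℕ × ℕ) → Bool) (lab2 : (ℕ × ℕ) → Bool),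
      ∀ s t, IsP a b m s → IsP a b m t →
        (∀ p ∈ m.primeFactors, lab1 p s = lab1 p t) → lab2 s = lab2 t → s = t := by
  classical
  set expo : ℕ → ℕ := fun p =>
    m.factorization p - min ((a*b).factorization p / 2) (m.factorization p / 2) with hexpo
  have hodd : ∀ p : ℕ, ∃ lab : ℕ × ℕ → Bool, p.Prime ∧ p ≠ 2 →
      ∀ s t, IsP a b m s → IsP a b m t → lab s = lab t → (p:ℤ) ^ expo p ∣ DD s t := by
    intro p
    by_cases h : p.Prime ∧ p ≠ 2
    · obtain ⟨lab, hlab⟩ := lem_odd (m := m) h.1 h.2 ha hb cop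
      exact ⟨lab, fun _ => hlab⟩
    · exact ⟨fun _ => true, fun hh => absurd hh h⟩
  choose labodd hlabodd using hodd
  obtain ⟨labtwo, hlabtwo⟩ := lem_two (m := m) ha hb cop
  refine ⟨fun p s => if p = 2 then (labtwo s).1 else labodd p s,
    fun s => (labtwo s).2, ?_⟩
  intro s t hs ht h1 h2
  have hdvd : ∀ p ∈ m.primeFactors, (p:ℤ) ^ expo p ∣ DD s t := by
    intro p hpF
    have hp : p.Prime := Nat.prime_of_mem_primeFactors hpF
    by_cases hp2 : p = 2
    · subst hp2
      have hfst : (labtwo s).1 = (labtwo t).1 := by simpa using h1 2 hpF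
      have : labtwo s = labtwo t := Prod.ext hfst h2
      exact hlabtwo s t hs ht this
    · have hl : labodd p s = labodd p t := by simpa [hp2] using h1 p hpF
      exact hlabodd p ⟨hp, hp2⟩ s t hs ht hl
  -- now conclude DD s t = 0
  by_cases hD0 : DD s t = 0
  · exact eq_of_DD_eq_zero hs ht hD0
  exfalso
  have hm0 : m ≠ 0 := (m_pos ha hs).ne'
  have hab0 : a * b ≠ 0 := by positivity
  set N := (DD s t).natAbs with hN
  have hN0 : N ≠ 0 := Int.natAbs_ne_zero.mpr hD0
  set MM := ∏ p ∈ m.primeFactors, p ^ expo p with hMM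
  have hMMdvd : MM ∣ N := by
    apply prod_pow_dvd (fun p hp => Nat.prime_of_mem_primeFactors hp)
    intro p hpF
    have h' : ((p ^ expo p : ℕ) : ℤ) ∣ DD s t := by push_cast; exact hdvd p hpF
    exact Int.natCast_dvd.mp h' 
  -- size comparison : m ^ 2 ≤ a * b * MM ^ 2
  have hGdvd : (∏ p ∈ m.primeFactors, p ^ (2 * min ((a*b).factorization p / 2) (m.factorization p / 2))) ∣ a * b := by
    apply prod_pow_dvd (fun p hp => Nat.prime_of_mem_primeFactors hp)
    intro p hpF
    have hp : p.Prime := Nat.prime_of_mem_primeFactors hpF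
    rw [Nat.Prime.pow_dvd_iff_le_factorization hp hab0]
    omega
  have hGle : (∏ p ∈ m.primeFactors, p ^ (2 * min ((a*b).factorization p / 2) (m.factorization p / 2))) ≤ a * b :=
    Nat.le_of_dvd (by positivity) hGdvd
  have hmprod : m = ∏ p ∈ m.primeFactors, p ^ (m.factorization p) := by
    conv_lhs => rw [← Nat.factorization_prod_pow_eq_self hm0]
    rfl
  have hsq : m ^ 2 = MM ^ 2 *
      (∏ p ∈ m.primeFactors, p ^ (2 * min ((a*b).factorization p / 2) (m.factorization p / 2))) := by
    rw [hMM, ← Finset.prod_pow, ← Finset.prod_mul_distrib]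
    conv_lhs => rw [hmprod, ← Finset.prod_pow]
    apply Finset.prod_congr rfl
    intro p hpF
    rw [← pow_mul, ← pow_mul, ← pow_add]
    congr 1
    simp only [hexpo]
    omega
  have hle : m ^ 2 ≤ a * b * MM ^ 2 := by
    calc m ^ 2 = MM ^ 2 * _ := hsq
    _ ≤ MM ^ 2 * (a * b) := Nat.mul_le_mul_left _ hGle
    _ = a * b * MM ^ 2 := Nat.mul_comm _ _
  -- integer size bound
  have hsize := size_DD ha hb hs ht
  have hMMleN : MM ≤ N := Nat.le_of_dvd (Nat.pos_of_ne_zero hN0) hMMdvd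
  have habs : (N : ℤ)^2 = (DD s t)^2 := by
    rw [hN]
    push_cast [Int.natAbs_sq]
    rw [sq_abs]
  have hcontr : (a*b : ℤ) * (N:ℤ)^2 < ((m:ℤ))^2 := by
    rw [habs]
    push_cast
    exact_mod_cast hsize
  have : (m:ℤ)^2 ≤ (a*b : ℤ) * (MM:ℤ)^2 := by exact_mod_cast hle
  have hMN : (MM:ℤ)^2 ≤ (N:ℤ)^2 := by
    have : (MM:ℤ) ≤ N := by exact_mod_cast hMMleN
    have h0 : (0:ℤ) ≤ MM := by positivity
    nlinarith
  have hfin : (a*b:ℤ) * (MM:ℤ)^2 ≤ (a*b:ℤ) * (N:ℤ)^2 :=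
    mul_le_mul_of_nonneg_left hMN (by positivity)
  linarith

end global


section encode

lemma pow2_fact_le {n e q : ℕ} (hn : n ≠ 0) (he : e ≠ 0) (h2 : e^2 ∣ n) :
    2 * e.factorization q ≤ n.factorization q := by
  have h := (Nat.factorization_le_iff_dvd (pow_ne_zero 2 he) hn).mpr h2
  have h' := h q
  rwa [Nat.factorization_pow, Finsupp.smul_apply, smul_eq_mul] at h'

lemma encode_ne_zero {e : ℕ} (he : e ≠ 0) {S : Finset ℕ} (hS : ∀ p ∈ S, p.Prime)
    (f : ℕ → ℕ) : e * ∏ p ∈ S, p ^ f p ≠ 0 :=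
  mul_ne_zero he (Finset.prod_ne_zero_iff.mpr (fun p hp => pow_ne_zero _ (hS p hp).pos.ne'))

lemma encode_mem_divisors {n e : ℕ} (hn : n ≠ 0) (he : e ≠ 0) (h2 : e^2 ∣ n)
    {S : Finset ℕ} (hS : S ⊆ (n / e^2).primeFactors) :
    e * ∏ p ∈ S, p ^ (n.factorization p - 2 * e.factorization p) ∈ n.divisors := by
  classical
  have hSp : ∀ p ∈ S, p.Prime := fun p hp => Nat.prime_of_mem_primeFactors (hS hp)
  rw [Nat.mem_divisors]
  refine ⟨?_, hn⟩
  rw [← Nat.factorization_le_iff_dvd (encode_ne_zero he hSp (fun p => n.factorization p - 2 * e.factorization p)) hn]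
  rw [Finsupp.le_def]
  intro q
  rw [fact_encode hSp (fun p => n.factorization p - 2 * e.factorization p) he q]
  have hq := pow2_fact_le (q := q) hn he h2
  by_cases hqS : q ∈ S
  · rw [if_pos hqS]; omega
  · rw [if_neg hqS]; omega

lemma encode_inj {n e e' : ℕ} (hn : n ≠ 0) (he : e ≠ 0) (he' : e' ≠ 0)
    (h2 : e^2 ∣ n) (h2' : e'^2 ∣ n)
    {S S' : Finset ℕ} (hS : S ⊆ (n / e^2).primeFactors) (hS' : S' ⊆ (n / e'^2).primeFactors)
    (heq : e * ∏ p ∈ S, p ^ (n.factorization p - 2 * e.factorization p)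
         = e' * ∏ p ∈ S', p ^ (n.factorization p - 2 * e'.factorization p)) :
    e = e' ∧ S = S' := by
  classical
  have hSp : ∀ p ∈ S, p.Prime := fun p hp => Nat.prime_of_mem_primeFactors (hS hp)
  have hS'p : ∀ p ∈ S', p.Prime := fun p hp => Nat.prime_of_mem_primeFactors (hS' hp)
  have hmemS : ∀ q ∈ S, 1 ≤ n.factorization q - 2 * e.factorization q := by
    intro q hq
    have hq1 := hS hq
    have hq2 : (n / e^2).factorization q ≠ 0 := by
      rw [← Finsupp.mem_support_iff, Nat.support_factorization]
      exact hq1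
    rw [Nat.factorization_div h2, Finsupp.tsub_apply, Nat.factorization_pow,
      Finsupp.smul_apply, smul_eq_mul] at hq2
    omega
  have hmemS' : ∀ q ∈ S', 1 ≤ n.factorization q - 2 * e'.factorization q := by
    intro q hq
    have hq1 := hS' hq
    have hq2 : (n / e'^2).factorization q ≠ 0 := by
      rw [← Finsupp.mem_support_iff, Nat.support_factorization]
      exact hq1
    rw [Nat.factorization_div h2', Finsupp.tsub_apply, Nat.factorization_pow,
      Finsupp.smul_apply, smul_eq_mul] at hq2
    omega
  have key : ∀ q, e.factorization q = e'.factorization q ∧ ((q ∈ S) ↔ (q ∈ S')) := by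
    intro q
    have hfq := congrArg (fun x => x.factorization q) heq
    rw [fact_encode hSp _ he q, fact_encode hS'p _ he' q] at hfq
    have hb1 := pow2_fact_le (q := q) hn he h2
    have hb2 := pow2_fact_le (q := q) hn he' h2'
    by_cases h1 : q ∈ S <;> by_cases h1' : q ∈ S'
    · rw [if_pos h1, if_pos h1'] at hfq
      have := hmemS q h1
      have := hmemS' q h1'
      exact ⟨by omega, by tauto⟩
    · rw [if_pos h1, if_neg h1'] at hfq
      have := hmemS q h1
      omega
    · rw [if_neg h1, if_pos h1'] at hfq
      have := hmemS' q h1'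
      omega
    · rw [if_neg h1, if_neg h1'] at hfq
      exact ⟨by omega, by tauto⟩
  have hee : e = e' := by
    refine Nat.dvd_antisymm ?_ ?_
    · rw [← Nat.factorization_le_iff_dvd he he', Finsupp.le_def]
      intro q
      exact (key q).1.le
    · rw [← Nat.factorization_le_iff_dvd he' he, Finsupp.le_def]
      intro q
      exact (key q).1.ge
  refine ⟨hee, ?_⟩
  ext q
  exact (key q).2

end encode


section main

lemma bool_eq_of_iff {x y : Bool} (h : x = true ↔ y = true) : x = y := by
  cases x <;> cases y <;> simp_all

lemma decomp {a b n : ℕ} (ha : 0 < a) {xy : ℕ × ℕ}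
    (h : 0 < xy.1 ∧ 0 < xy.2 ∧ a * xy.1 ^ 2 + b * xy.2 ^ 2 = n) :
    0 < Nat.gcd xy.1 xy.2 ∧ (Nat.gcd xy.1 xy.2)^2 ∣ n ∧
      IsP a b (n / (Nat.gcd xy.1 xy.2)^2)
        (xy.1 / Nat.gcd xy.1 xy.2, xy.2 / Nat.gcd xy.1 xy.2) ∧
      xy.1 = Nat.gcd xy.1 xy.2 * (xy.1 / Nat.gcd xy.1 xy.2) ∧
      xy.2 = Nat.gcd xy.1 xy.2 * (xy.2 / Nat.gcd xy.1 xy.2) := by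
  obtain ⟨hx, hy, heq⟩ := h
  have he : 0 < Nat.gcd xy.1 xy.2 := Nat.gcd_pos_of_pos_left _ hx
  have hdx : Nat.gcd xy.1 xy.2 ∣ xy.1 := Nat.gcd_dvd_left _ _
  have hdy : Nat.gcd xy.1 xy.2 ∣ xy.2 := Nat.gcd_dvd_right _ _
  have hX : xy.1 = Nat.gcd xy.1 xy.2 * (xy.1 / Nat.gcd xy.1 xy.2) := (Nat.mul_div_cancel' hdx).symm
  have hY : xy.2 = Nat.gcd xy.1 xy.2 * (xy.2 / Nat.gcd xy.1 xy.2) := (Nat.mul_div_cancel' hdy).symm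
  have hXpos : 0 < xy.1 / Nat.gcd xy.1 xy.2 := Nat.div_pos (Nat.le_of_dvd hx hdx) he
  have hYpos : 0 < xy.2 / Nat.gcd xy.1 xy.2 := Nat.div_pos (Nat.le_of_dvd hy hdy) he
  have hcop := Nat.coprime_div_gcd_div_gcd (m := xy.1) (n := xy.2) he
  have hval : (Nat.gcd xy.1 xy.2)^2 * (a * (xy.1 / Nat.gcd xy.1 xy.2)^2
      + b * (xy.2 / Nat.gcd xy.1 xy.2)^2) = n := by
    have e1 : Nat.gcd xy.1 xy.2 * (xy.1 / Nat.gcd xy.1 xy.2) = xy.1 := Nat.mul_div_cancel' hdx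
    have e2 : Nat.gcd xy.1 xy.2 * (xy.2 / Nat.gcd xy.1 xy.2) = xy.2 := Nat.mul_div_cancel' hdy
    calc (Nat.gcd xy.1 xy.2)^2 * (a * (xy.1 / Nat.gcd xy.1 xy.2)^2
        + b * (xy.2 / Nat.gcd xy.1 xy.2)^2)
        = a * (Nat.gcd xy.1 xy.2 * (xy.1 / Nat.gcd xy.1 xy.2))^2
          + b * (Nat.gcd xy.1 xy.2 * (xy.2 / Nat.gcd xy.1 xy.2))^2 := by ring
      _ = a * xy.1^2 + b * xy.2^2 := by rw [e1, e2]
      _ = n := heq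
  have h2 : (Nat.gcd xy.1 xy.2)^2 ∣ n := ⟨_, hval.symm⟩
  have hm : a * (xy.1 / Nat.gcd xy.1 xy.2)^2 + b * (xy.2 / Nat.gcd xy.1 xy.2)^2
      = n / (Nat.gcd xy.1 xy.2)^2 := by
    rw [← hval, Nat.mul_div_cancel_left _ (by positivity)]
  exact ⟨he, h2, ⟨hXpos, hYpos, hcop, hm⟩, hX, hY⟩

theorem main_coprime {a b : ℕ} (n : ℕ) (ha : 0 < a) (hb : 0 < b) (hn : 0 < n)
    (cop : Nat.Coprime a b) :
    Nat.card {xy : ℕ × ℕ // 0 < xy.1 ∧ 0 < xy.2 ∧ a * xy.1 ^ 2 + b * xy.2 ^ 2 = n}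
      ≤ 2 * n.divisors.card := by
  classical
  have hn0 : n ≠ 0 := hn.ne'
  choose lab1 lab2 hlab using fun m : ℕ => prim_inject ha hb cop m
  -- the injection
  have hmemT : ∀ xy : ℕ × ℕ, (0 < xy.1 ∧ 0 < xy.2 ∧ a * xy.1 ^ 2 + b * xy.2 ^ 2 = n) →
      (Nat.gcd xy.1 xy.2) * ∏ p ∈ (n / (Nat.gcd xy.1 xy.2)^2).primeFactors.filter
          (fun p => lab1 (n / (Nat.gcd xy.1 xy.2)^2) p
            (xy.1 / Nat.gcd xy.1 xy.2, xy.2 / Nat.gcd xy.1 xy.2) = true),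
        p ^ (n.factorization p - 2 * (Nat.gcd xy.1 xy.2).factorization p) ∈ n.divisors := by
    intro xy h
    obtain ⟨he, h2, hP, hX, hY⟩ := decomp ha h
    exact encode_mem_divisors hn0 he.ne' h2 (Finset.filter_subset _ _)
  have hinj : ∀ xy zw : ℕ × ℕ, (0 < xy.1 ∧ 0 < xy.2 ∧ a * xy.1 ^ 2 + b * xy.2 ^ 2 = n) →
      (0 < zw.1 ∧ 0 < zw.2 ∧ a * zw.1 ^ 2 + b * zw.2 ^ 2 = n) →
      ((Nat.gcd xy.1 xy.2) * ∏ p ∈ (n / (Nat.gcd xy.1 xy.2)^2).primeFactors.filter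
          (fun p => lab1 (n / (Nat.gcd xy.1 xy.2)^2) p
            (xy.1 / Nat.gcd xy.1 xy.2, xy.2 / Nat.gcd xy.1 xy.2) = true),
        p ^ (n.factorization p - 2 * (Nat.gcd xy.1 xy.2).factorization p))
      = ((Nat.gcd zw.1 zw.2) * ∏ p ∈ (n / (Nat.gcd zw.1 zw.2)^2).primeFactors.filter
          (fun p => lab1 (n / (Nat.gcd zw.1 zw.2)^2) p
            (zw.1 / Nat.gcd zw.1 zw.2, zw.2 / Nat.gcd zw.1 zw.2) = true),
        p ^ (n.factorization p - 2 * (Nat.gcd zw.1 zw.2).factorization p)) →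
      lab2 (n / (Nat.gcd xy.1 xy.2)^2) (xy.1 / Nat.gcd xy.1 xy.2, xy.2 / Nat.gcd xy.1 xy.2)
        = lab2 (n / (Nat.gcd zw.1 zw.2)^2) (zw.1 / Nat.gcd zw.1 zw.2, zw.2 / Nat.gcd zw.1 zw.2) →
      xy = zw := by
    intro xy zw hxy hzw hT hL2
    obtain ⟨he, h2, hP, hX, hY⟩ := decomp ha hxy
    obtain ⟨he', h2', hP', hX', hY'⟩ := decomp ha hzw
    obtain ⟨hee, hSSeq⟩ := encode_inj hn0 he.ne' he'.ne' h2 h2'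
      (Finset.filter_subset _ _) (Finset.filter_subset _ _) hT
    have hMeq : n / (Nat.gcd xy.1 xy.2)^2 = n / (Nat.gcd zw.1 zw.2)^2 := by rw [hee]
    rw [← hMeq] at hP' hL2
    have hlabs : ∀ p ∈ (n / (Nat.gcd xy.1 xy.2)^2).primeFactors,
        lab1 (n / (Nat.gcd xy.1 xy.2)^2) p (xy.1 / Nat.gcd xy.1 xy.2, xy.2 / Nat.gcd xy.1 xy.2)
          = lab1 (n / (Nat.gcd xy.1 xy.2)^2) p (zw.1 / Nat.gcd zw.1 zw.2, zw.2 / Nat.gcd zw.1 zw.2) := by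
      intro p hpF
      apply bool_eq_of_iff
      have hmem := Finset.ext_iff.mp hSSeq p
      rw [Finset.mem_filter, Finset.mem_filter, ← hMeq] at hmem
      constructor
      · intro hh
        exact (hmem.mp ⟨hpF, hh⟩).2
      · intro hh
        exact (hmem.mpr ⟨hpF, hh⟩).2
    have hPP := hlab (n / (Nat.gcd xy.1 xy.2)^2)
      (xy.1 / Nat.gcd xy.1 xy.2, xy.2 / Nat.gcd xy.1 xy.2)
      (zw.1 / Nat.gcd zw.1 zw.2, zw.2 / Nat.gcd zw.1 zw.2) hP hP' hlabs hL2
    have h1 : xy.1 / Nat.gcd xy.1 xy.2 = zw.1 / Nat.gcd zw.1 zw.2 := congrArg Prod.fst hPP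
    have h2'' : xy.2 / Nat.gcd xy.1 xy.2 = zw.2 / Nat.gcd zw.1 zw.2 := congrArg Prod.snd hPP
    apply Prod.ext
    · rw [hX, hX', h1, hee]
    · rw [hY, hY', h2'', hee]
  -- conclude by cardinality
  have hcard := Nat.card_le_card_of_injective
    (f := fun s : {xy : ℕ × ℕ // 0 < xy.1 ∧ 0 < xy.2 ∧ a * xy.1 ^ 2 + b * xy.2 ^ 2 = n} =>
      ((⟨_, hmemT s.1 s.2⟩ : {d : ℕ // d ∈ n.divisors}),
        lab2 (n / (Nat.gcd s.1.1 s.1.2)^2) (s.1.1 / Nat.gcd s.1.1 s.1.2, s.1.2 / Nat.gcd s.1.1 s.1.2)))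
    (by
      intro s s' h
      have h1 := congrArg (fun z => (Prod.fst z).val) h
      have h2 := congrArg Prod.snd h
      simp only at h1 h2
      exact Subtype.ext (hinj s.1 s'.1 s.2 s'.2 h1 h2))
  refine le_trans hcard ?_
  rw [Nat.card_prod, Nat.card_eq_finsetCard]
  have : Nat.card Bool = 2 := by
    rw [Nat.card_eq_fintype_card]
    rfl
  rw [this]
  omega

end main


end Estermann


/-- **Estermann's lemma on `ax² + by² = n`.**
For positive integers `a`, `b`, `n`, the number of solutions of `ax² + by² = n` in
positive integers `x`, `y` is at most `2 d(n)`. -/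
theorem count_ax2_add_by2_le (a b n : ℕ) (ha : 0 < a) (hb : 0 < b) (hn : 0 < n) :
    Nat.card {xy : ℕ × ℕ // 0 < xy.1 ∧ 0 < xy.2 ∧ a * xy.1 ^ 2 + b * xy.2 ^ 2 = n}
      ≤ 2 * n.divisors.card := by
  classical
  have hga : Nat.gcd a b ∣ a := Nat.gcd_dvd_left _ _
  have hgb : Nat.gcd a b ∣ b := Nat.gcd_dvd_right _ _
  have hgpos : 0 < Nat.gcd a b := Nat.gcd_pos_of_pos_left _ ha
  by_cases hgn : Nat.gcd a b ∣ n
  · have ha' : 0 < a / Nat.gcd a b := Nat.div_pos (Nat.le_of_dvd ha hga) hgpos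
    have hb' : 0 < b / Nat.gcd a b := Nat.div_pos (Nat.le_of_dvd hb hgb) hgpos
    have hn' : 0 < n / Nat.gcd a b := Nat.div_pos (Nat.le_of_dvd hn hgn) hgpos
    have hcop : Nat.Coprime (a / Nat.gcd a b) (b / Nat.gcd a b) :=
      Nat.coprime_div_gcd_div_gcd hgpos
    have e1 : Nat.gcd a b * (a / Nat.gcd a b) = a := Nat.mul_div_cancel' hga
    have e2 : Nat.gcd a b * (b / Nat.gcd a b) = b := Nat.mul_div_cancel' hgb
    have e3 : Nat.gcd a b * (n / Nat.gcd a b) = n := Nat.mul_div_cancel' hgn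
    have hiff : ∀ xy : ℕ × ℕ,
        (0 < xy.1 ∧ 0 < xy.2 ∧ a * xy.1 ^ 2 + b * xy.2 ^ 2 = n) ↔
        (0 < xy.1 ∧ 0 < xy.2 ∧
          (a / Nat.gcd a b) * xy.1 ^ 2 + (b / Nat.gcd a b) * xy.2 ^ 2 = n / Nat.gcd a b) := by
      intro xy
      constructor
      · rintro ⟨h1, h2, h3⟩
        refine ⟨h1, h2, ?_⟩
        apply Nat.eq_of_mul_eq_mul_left hgpos
        calc Nat.gcd a b * ((a / Nat.gcd a b) * xy.1 ^ 2 + (b / Nat.gcd a b) * xy.2 ^ 2)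
            = (Nat.gcd a b * (a / Nat.gcd a b)) * xy.1 ^ 2
              + (Nat.gcd a b * (b / Nat.gcd a b)) * xy.2 ^ 2 := by ring
          _ = a * xy.1 ^ 2 + b * xy.2 ^ 2 := by rw [e1, e2]
          _ = n := h3
          _ = Nat.gcd a b * (n / Nat.gcd a b) := e3.symm
      · rintro ⟨h1, h2, h3⟩
        refine ⟨h1, h2, ?_⟩
        calc a * xy.1 ^ 2 + b * xy.2 ^ 2
            = (Nat.gcd a b * (a / Nat.gcd a b)) * xy.1 ^ 2
              + (Nat.gcd a b * (b / Nat.gcd a b)) * xy.2 ^ 2 := by rw [e1, e2]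
          _ = Nat.gcd a b * ((a / Nat.gcd a b) * xy.1 ^ 2 + (b / Nat.gcd a b) * xy.2 ^ 2) := by
              ring
          _ = Nat.gcd a b * (n / Nat.gcd a b) := by rw [h3]
          _ = n := e3
    have hcardeq :
        Nat.card {xy : ℕ × ℕ // 0 < xy.1 ∧ 0 < xy.2 ∧ a * xy.1 ^ 2 + b * xy.2 ^ 2 = n}
          = Nat.card {xy : ℕ × ℕ // 0 < xy.1 ∧ 0 < xy.2 ∧
              (a / Nat.gcd a b) * xy.1 ^ 2 + (b / Nat.gcd a b) * xy.2 ^ 2 = n / Nat.gcd a b} :=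
      Nat.card_congr (Equiv.subtypeEquivRight hiff)
    rw [hcardeq]
    refine le_trans (Estermann.main_coprime (n / Nat.gcd a b) ha' hb' hn' hcop) ?_
    have hsub : (n / Nat.gcd a b).divisors ⊆ n.divisors := by
      intro d hd
      rw [Nat.mem_divisors] at hd ⊢
      exact ⟨hd.1.trans (Nat.div_dvd_of_dvd hgn), hn.ne'⟩
    have := Finset.card_le_card hsub
    omega
  · have hempty : IsEmpty {xy : ℕ × ℕ // 0 < xy.1 ∧ 0 < xy.2 ∧ a * xy.1 ^ 2 + b * xy.2 ^ 2 = n} := by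
      constructor
      rintro ⟨xy, h1, h2, h3⟩
      apply hgn
      rw [← h3]
      exact dvd_add (Dvd.dvd.mul_right hga _) (Dvd.dvd.mul_right hgb _)
    rw [Nat.card_of_isEmpty]
    exact Nat.zero_le _
end

section
/- Suppose that a, b, m, n are positive integers and let R(n;a,b) denote the number of solutions of a·x² − b·y² = n in positive integers x and y with a·x² ≤ m. Then R(n;a,b) ≤ 2·d(n)·(1 + log m), where d(n) is the number of positive divisors of n. -/
open Classical Finset

namespace EstLemma

/-! ### Integer local lemmas -/

lemma transfer_sub {p : ℕ} {J : ℕ} {xr yr x1 y1 x2 y2 : ℤ} (hp : p.Prime)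
    (hxr : ¬ (p:ℤ) ∣ xr)
    (h1 : (p:ℤ)^J ∣ xr * y1 - x1 * yr) (h2 : (p:ℤ)^J ∣ xr * y2 - x2 * yr) :
    (p:ℤ)^J ∣ x1 * y2 - x2 * y1 := by
  have key : xr * (x1 * y2 - x2 * y1)
      = x1 * (xr * y2 - x2 * yr) - x2 * (xr * y1 - x1 * yr) := by ring
  have h : (p:ℤ)^J ∣ xr * (x1*y2 - x2*y1) := by
    rw [key]; exact dvd_sub (h2.mul_left x1) (h1.mul_left x2)
  exact (Nat.prime_iff_prime_int.mp hp).pow_dvd_of_dvd_mul_left J hxr h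

lemma transfer_add {p : ℕ} {J : ℕ} {xr yr x1 y1 x2 y2 : ℤ} (hp : p.Prime)
    (hxr : ¬ (p:ℤ) ∣ xr)
    (h1 : (p:ℤ)^J ∣ xr * y1 + x1 * yr) (h2 : (p:ℤ)^J ∣ xr * y2 + x2 * yr) :
    (p:ℤ)^J ∣ x1 * y2 - x2 * y1 := by
  have key : xr * (x1 * y2 - x2 * y1)
      = x1 * (xr * y2 + x2 * yr) - x2 * (xr * y1 + x1 * yr) := by ring
  have h : (p:ℤ)^J ∣ xr * (x1*y2 - x2*y1) := by
    rw [key]; exact dvd_sub (h2.mul_left x1) (h1.mul_left x2)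
  exact (Nat.prime_iff_prime_int.mp hp).pow_dvd_of_dvd_mul_left J hxr h

lemma pairwise_or {p K : ℕ} (hp : p.Prime) {A B x1 y1 x2 y2 : ℤ}
    (hA : ¬(p:ℤ) ∣ A) (hx1 : ¬(p:ℤ) ∣ x1) (hy1 : ¬(p:ℤ) ∣ y1)
    (hx2 : ¬(p:ℤ) ∣ x2) (hy2 : ¬(p:ℤ) ∣ y2)
    (h1 : (p:ℤ)^K ∣ A * x1^2 - B * y1^2) (h2 : (p:ℤ)^K ∣ A * x2^2 - B * y2^2) :
    (p:ℤ)^(K - (if p = 2 then 1 else 0)) ∣ (x1*y2 - x2*y1)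
    ∨ (p:ℤ)^(K - (if p = 2 then 1 else 0)) ∣ (x1*y2 + x2*y1) := by
  have hpz : Prime (p:ℤ) := Nat.prime_iff_prime_int.mp hp
  have hprod : (p:ℤ)^K ∣ (x1*y2 - x2*y1) * (x1*y2 + x2*y1) := by
    have key : A * ((x1*y2 - x2*y1) * (x1*y2 + x2*y1))
        = y2^2 * (A*x1^2 - B*y1^2) - y1^2 * (A*x2^2 - B*y2^2) := by ring
    have h : (p:ℤ)^K ∣ A * ((x1*y2 - x2*y1) * (x1*y2 + x2*y1)) := by
      rw [key]; exact dvd_sub (h1.mul_left _) (h2.mul_left _)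
    exact hpz.pow_dvd_of_dvd_mul_left K hA h
  by_cases hp2 : p = 2
  · -- 2-adic case
    subst hp2
    have hExp : (K - (if (2:ℕ) = 2 then 1 else 0)) = K - 1 := by norm_num
    rw [hExp]
    rcases Nat.lt_or_ge K 2 with hK | hK
    · left
      have h0 : K - 1 = 0 := by omega
      rw [h0, pow_zero]; exact one_dvd _
    · -- all of x1 y1 x2 y2 odd
      have c2 : ((2:ℕ):ℤ) = 2 := by norm_num
      rw [c2] at hprod hx1 hy1 hx2 hy2 ⊢
      have hodd : ∀ z : ℤ, ¬(2:ℤ) ∣ z → Odd z := by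
        intro z hz
        rcases Int.even_or_odd z with he | ho
        · exact absurd he.two_dvd hz
        · exact ho
      have h1o : Odd (x1 * y2) := (hodd _ hx1).mul (hodd _ hy2)
      have h2o : Odd (x2 * y1) := (hodd _ hx2).mul (hodd _ hy1)
      have hue : Even (x1*y2 - x2*y1) := h1o.sub_odd h2o
      have hwe : Even (x1*y2 + x2*y1) := h1o.add_odd h2o
      obtain ⟨u', hu'⟩ := hue
      obtain ⟨w', hw'⟩ := hwe
      have hu2 : x1*y2 - x2*y1 = 2*u' := by omega
      have hw2 : x1*y2 + x2*y1 = 2*w' := by omega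
      have hso : Odd (u' + w') := by
        have hsum : u' + w' = x1*y2 := by omega
        rw [hsum]; exact h1o
      have hcore : (2:ℤ)^(K-2) ∣ u' * w' := by
        have hK4 : (4:ℤ) * ((2:ℤ)^(K-2)) ∣ 4 * (u'*w') := by
          have e1 : (4:ℤ) * (u'*w') = (2*u')*(2*w') := by ring
          have e2 : (4:ℤ) * ((2:ℤ)^(K-2)) = 2^K := by
            rw [show (4:ℤ) = 2^2 by norm_num, ← pow_add]
            congr 1; omega
          rw [e1, e2, ← hu2, ← hw2]; exact hprod
        exact (mul_dvd_mul_iff_left (by norm_num : (4:ℤ) ≠ 0)).mp hK4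
      have step : ∀ a' b' : ℤ, ¬ (2:ℤ) ∣ b' → (2:ℤ)^(K-2) ∣ a' * b' → (2:ℤ)^(K-1) ∣ 2 * a' := by
        intro a' b' hb' hab
        have ha' : (2:ℤ)^(K-2) ∣ a' := Int.prime_two.pow_dvd_of_dvd_mul_right (K-2) hb' hab
        have e3 : (2:ℤ)^(K-1) = 2 * 2^(K-2) := by
          rw [← pow_succ']
          congr 1; omega
        rw [e3]; exact mul_dvd_mul_left 2 ha'
      rcases Int.even_or_odd u' with heu | hou
      · have hnw : ¬(2:ℤ) ∣ w' := by
          rcases hso with ⟨t, ht⟩; rcases heu with ⟨i, hi⟩; omega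
        left
        rw [hu2]; exact step u' w' hnw hcore
      · right
        have hnu : ¬(2:ℤ) ∣ u' := by rcases hou with ⟨t, ht⟩; omega
        rw [hw2]; exact step w' u' hnu (by rwa [mul_comm] at hcore)
  · -- odd case
    simp only [if_neg hp2, Nat.sub_zero]
    have hnot : ¬((p:ℤ) ∣ (x1*y2 - x2*y1) ∧ (p:ℤ) ∣ (x1*y2 + x2*y1)) := by
      rintro ⟨hu, hw⟩
      have hsum : (p:ℤ) ∣ 2 * (x1*y2) := by
        have h := dvd_add hu hw
        have e : (x1*y2 - x2*y1) + (x1*y2 + x2*y1) = 2*(x1*y2) := by ring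
        rwa [e] at h
      rcases hpz.dvd_mul.mp hsum with h | h
      · have : (p:ℕ) ∣ 2 := by exact_mod_cast h
        exact hp2 ((Nat.prime_dvd_prime_iff_eq hp Nat.prime_two).mp this)
      · rcases hpz.dvd_mul.mp h with h | h
        exacts [hx1 h, hy2 h]
    by_cases hw : (p:ℤ) ∣ (x1*y2 + x2*y1)
    · right
      have hu : ¬(p:ℤ) ∣ (x1*y2 - x2*y1) := fun hu => hnot ⟨hu, hw⟩
      exact hpz.pow_dvd_of_dvd_mul_left K hu hprod
    · left
      exact hpz.pow_dvd_of_dvd_mul_right K hw hprod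


/-! ### Valuation dichotomy -/

lemma fact_mul_sq {a X p : ℕ} (ha : a ≠ 0) (hX : X ≠ 0) :
    (a * X^2).factorization p = a.factorization p + 2 * X.factorization p := by
  rw [Nat.factorization_mul ha (pow_ne_zero _ hX)]
  simp [Nat.factorization_pow, two_mul, mul_comm]

lemma decomp {p a b ν X Y : ℕ} (hp : p.Prime) (ha : a ≠ 0) (hb : b ≠ 0) (hν : ν ≠ 0)
    (hX : X ≠ 0) (hY : Y ≠ 0) (hcop : Nat.Coprime X Y)
    (heq : a * X^2 = b * Y^2 + ν) :
    (ν.factorization p ≤ a.factorization p + 2 * X.factorization p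
      ∧ ν.factorization p ≤ b.factorization p + 2 * Y.factorization p)
    ∨ (max (a.factorization p) (b.factorization p) < ν.factorization p
      ∧ a.factorization p + 2 * X.factorization p
          = max (a.factorization p) (b.factorization p)
      ∧ b.factorization p + 2 * Y.factorization p
          = max (a.factorization p) (b.factorization p)) := by
  have haX : a * X^2 ≠ 0 := mul_ne_zero ha (pow_ne_zero _ hX)
  have hbY : b * Y^2 ≠ 0 := mul_ne_zero hb (pow_ne_zero _ hY)
  have hva : (a*X^2).factorization p = a.factorization p + 2 * X.factorization p :=
    fact_mul_sq ha hX
  have hvb : (b*Y^2).factorization p = b.factorization p + 2 * Y.factorization p :=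
    fact_mul_sq hb hY
  set k := ν.factorization p with hk
  have hkν : p ^ k ∣ ν := Nat.ordProj_dvd ν p
  by_cases hcase : k ≤ (a*X^2).factorization p
  · left
    refine ⟨by omega, ?_⟩
    have h1 : p ^ k ∣ a * X^2 :=
      (hp.pow_dvd_iff_le_factorization haX).mpr hcase
    have h2 : p ^ k ∣ b * Y^2 := by
      have := Nat.dvd_sub h1 hkν
      rwa [show a*X^2 - ν = b*Y^2 by omega] at this
    have := (hp.pow_dvd_iff_le_factorization hbY).mp h2
    omega
  · right
    push_neg at hcase
    set va := (a*X^2).factorization p with hva'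
    -- p^va divides b Y^2
    have h1 : p ^ va ∣ a * X^2 :=
      (hp.pow_dvd_iff_le_factorization haX).mpr le_rfl
    have h2 : p ^ va ∣ ν := dvd_trans (pow_dvd_pow p (by omega)) hkν
    have h3 : p ^ va ∣ b * Y^2 := by
      have := Nat.dvd_sub h1 h2
      rwa [show a*X^2 - ν = b*Y^2 by omega] at this
    have hle1 : va ≤ (b*Y^2).factorization p :=
      (hp.pow_dvd_iff_le_factorization hbY).mp h3
    -- min (vb, k) ≤ va
    set vb := (b*Y^2).factorization p with hvb'
    have h4 : p ^ (min vb k) ∣ b * Y^2 :=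
      (hp.pow_dvd_iff_le_factorization hbY).mpr (min_le_left _ _)
    have h5 : p ^ (min vb k) ∣ ν := dvd_trans (pow_dvd_pow p (min_le_right _ _)) hkν
    have h6 : p ^ (min vb k) ∣ a * X^2 := by
      rw [heq]; exact dvd_add h4 h5
    have hle2 : min vb k ≤ va :=
      (hp.pow_dvd_iff_le_factorization haX).mp h6
    -- one of the valuations of X, Y vanishes
    have hor : X.factorization p = 0 ∨ Y.factorization p = 0 := by
      by_contra hcon
      push_neg at hcon
      have hdX : p ∣ X := Nat.dvd_of_factorization_pos hcon.1
      have hdY : p ∣ Y := Nat.dvd_of_factorization_pos hcon.2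
      have : p ∣ 1 := hcop ▸ Nat.dvd_gcd hdX hdY
      exact hp.one_lt.ne' (Nat.dvd_one.mp this)
    omega

/-- In the LOW case, the reduced congruence holds. -/
lemma low_cong {p a b ν X Y : ℕ} (hp : p.Prime) (ha : a ≠ 0) (hb : b ≠ 0) (hν : ν ≠ 0)
    (hX : X ≠ 0) (hY : Y ≠ 0)
    (heq : a * X^2 = b * Y^2 + ν)
    (hA : a.factorization p + 2 * X.factorization p
        = max (a.factorization p) (b.factorization p))
    (hB : b.factorization p + 2 * Y.factorization p
        = max (a.factorization p) (b.factorization p))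
    (hs : max (a.factorization p) (b.factorization p) < ν.factorization p) :
    (p:ℤ)^(ν.factorization p - max (a.factorization p) (b.factorization p))
      ∣ (((ordCompl[p] a : ℕ) : ℤ) * ((ordCompl[p] X : ℕ) : ℤ)^2
         - ((ordCompl[p] b : ℕ) : ℤ) * ((ordCompl[p] Y : ℕ) : ℤ)^2) := by
  set s := max (a.factorization p) (b.factorization p) with hsdef
  set k := ν.factorization p with hkdef
  set A' := ordCompl[p] a with hA'
  set B' := ordCompl[p] b with hB'
  set X' := ordCompl[p] X with hX'
  set Y' := ordCompl[p] Y with hY'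
  have e1 : (p:ℕ)^(a.factorization p) * A' = a := Nat.ordProj_mul_ordCompl_eq_self a p
  have e2 : (p:ℕ)^(X.factorization p) * X' = X := Nat.ordProj_mul_ordCompl_eq_self X p
  have e3 : (p:ℕ)^(b.factorization p) * B' = b := Nat.ordProj_mul_ordCompl_eq_self b p
  have e4 : (p:ℕ)^(Y.factorization p) * Y' = Y := Nat.ordProj_mul_ordCompl_eq_self Y p
  have hax : a * X^2 = p^s * (A' * X'^2) := by
    have h0 : a * X^2 = p ^ (a.factorization p + 2*X.factorization p) * (A' * X'^2) := by
      conv_lhs => rw [← e1, ← e2]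
      ring
    rwa [hA] at h0
  have hby : b * Y^2 = p^s * (B' * Y'^2) := by
    have h0 : b * Y^2 = p ^ (b.factorization p + 2*Y.factorization p) * (B' * Y'^2) := by
      conv_lhs => rw [← e3, ← e4]
      ring
    rwa [hB] at h0
  have hν' : (ν : ℤ) = (p:ℤ)^s * ((A' : ℤ) * (X' : ℤ)^2 - (B' : ℤ) * (Y' : ℤ)^2) := by
    have c1 : (a:ℤ) * (X:ℤ)^2 = (p:ℤ)^s * ((A' : ℤ) * (X' : ℤ)^2) := by exact_mod_cast congrArg (fun t : ℕ => (t:ℤ)) hax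
    have c2 : (b:ℤ) * (Y:ℤ)^2 = (p:ℤ)^s * ((B' : ℤ) * (Y' : ℤ)^2) := by exact_mod_cast congrArg (fun t : ℕ => (t:ℤ)) hby
    have c3 : (a:ℤ) * (X:ℤ)^2 = (b:ℤ)*(Y:ℤ)^2 + ν := by exact_mod_cast heq
    rw [mul_sub, ← c1, ← c2]; omega
  have hkν : (p:ℤ) ^ k ∣ (ν:ℤ) := by exact_mod_cast (Nat.ordProj_dvd ν p : (p:ℕ)^k ∣ ν)
  have hfin : (p:ℤ)^s * (p:ℤ)^(k-s) ∣ (p:ℤ)^s * ((A' : ℤ) * (X' : ℤ)^2 - (B' : ℤ) * (Y' : ℤ)^2) := by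
    rw [← pow_add, show s + (k-s) = k by omega, ← hν']
    exact hkν
  exact (mul_dvd_mul_iff_left (pow_ne_zero s (by exact_mod_cast hp.ne_zero : (p:ℤ) ≠ 0))).mp hfin


/-! ### factorization of explicit prime-power products -/

lemma prod_pow_fact {s : Finset ℕ} (hs : ∀ p ∈ s, p.Prime) (f : ℕ → ℕ) (q : ℕ) :
    (∏ p ∈ s, p ^ f p).factorization q = if q ∈ s then f q else 0 := by
  rw [Nat.factorization_prod (fun p hp => pow_ne_zero _ (hs p hp).pos.ne')]
  have : ∀ p ∈ s, (p ^ f p).factorization q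
      = (Finsupp.single p (f p)) q := by
    intro p hp
    rw [(hs p hp).factorization_pow]
  rw [Finsupp.finset_sum_apply]
  rw [Finset.sum_congr rfl this]
  simp only [Finsupp.single_apply]
  exact Finset.sum_ite_eq' s q f

lemma prod_pow_ne_zero {s : Finset ℕ} (hs : ∀ p ∈ s, p.Prime) (f : ℕ → ℕ) :
    (∏ p ∈ s, p ^ f p) ≠ 0 :=
  Finset.prod_ne_zero_iff.mpr (fun p hp => pow_ne_zero _ (hs p hp).pos.ne')

lemma arith_high {k t2 i al be g d : ℕ} (hi : i ≤ 1) (ht : t2 = (al+be)/2 + i)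
    (h5 : k ≤ al + 2*g) (h6 : k ≤ be + 2*d) : k - min k t2 ≤ g + d := by omega

lemma arith_low {k s t2 i al be g d : ℕ} (hi : i ≤ 1) (ht : t2 = (al+be)/2 + i)
    (hs : s = max al be) (hA : al + 2*g = s) (hB : be + 2*d = s) (hsk : s < k)
    (h0 : g = 0 ∨ d = 0) :
    k - min k t2 ≤ (g + d) + (k - s - i) := by omega

lemma arith_contra {k al be g d : ℕ} (h : max al be < k)
    (h1 : k ≤ al + 2*g) (h2 : k ≤ be + 2*d) (h0 : g = 0 ∨ d = 0) : False := by omega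

/-! ### The technical core -/

lemma tech {a b ν : ℕ} (ha : a ≠ 0) (hb : b ≠ 0) (hν : ν ≠ 0)
    {X1 Y1 X2 Y2 : ℕ} (hX1 : X1 ≠ 0) (hY1 : Y1 ≠ 0) (hX2 : X2 ≠ 0) (hY2 : Y2 ≠ 0)
    (hcop1 : Nat.Coprime X1 Y1) (hcop2 : Nat.Coprime X2 Y2)
    (heq1 : a * X1^2 = b * Y1^2 + ν) (heq2 : a * X2^2 = b * Y2^2 + ν)
    (hbits : ∀ p ∈ ν.primeFactors,
       max (a.factorization p) (b.factorization p) < ν.factorization p →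
       (p:ℤ)^(ν.factorization p - max (a.factorization p) (b.factorization p)
              - (if p = 2 then 1 else 0))
         ∣ (((ordCompl[p] X1 : ℕ):ℤ) * ((ordCompl[p] Y2 : ℕ):ℤ)
            - ((ordCompl[p] X2 : ℕ):ℤ) * ((ordCompl[p] Y1 : ℕ):ℤ)))
    (hsize : 144 * (a*b) * ((X1:ℤ)*Y2 - X2*Y1).natAbs^2 < 25 * ν^2) :
    (X1:ℤ)*Y2 - X2*Y1 = 0 := by
  by_contra hΔ
  set Δ : ℤ := (X1:ℤ)*Y2 - X2*Y1 with hΔdef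
  -- step 1: per-prime divisibility
  have hper : ∀ p ∈ ν.primeFactors,
      p ^ (ν.factorization p - min (ν.factorization p)
            ((a.factorization p + b.factorization p)/2 + if p = 2 then 1 else 0)) ∣ Δ.natAbs := by
    intro p hpν
    have hp : p.Prime := Nat.prime_of_mem_primeFactors hpν
    set ι := (if p = 2 then 1 else 0 : ℕ) with hι
    have hι01 : ι ≤ 1 := by
      by_cases h : p = 2 <;> simp [hι, h]
    set t2 := (a.factorization p + b.factorization p)/2 + ι with ht2
    set km := min (ν.factorization p) t2 with hkm
    by_cases he0 : (ν.factorization p - km) = 0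
    · rw [he0, pow_zero]; exact one_dvd _
    have main : (p:ℤ) ^ (ν.factorization p - km) ∣ Δ := by
      rcases le_or_gt (ν.factorization p) (max (a.factorization p) (b.factorization p)) with hHI | hLO
      · -- HIGH stratum
        have h1 := decomp (X := X1) (Y := Y1) hp ha hb hν hX1 hY1 hcop1 heq1 (p := p)
        have h2 := decomp (X := X2) (Y := Y2) hp ha hb hν hX2 hY2 hcop2 heq2 (p := p)
        have hh1 : ν.factorization p ≤ a.factorization p + 2 * X1.factorization p
            ∧ ν.factorization p ≤ b.factorization p + 2 * Y1.factorization p := by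
          rcases h1 with h | h
          · exact h
          · exact ((lt_irrefl _ (lt_of_lt_of_le h.1 hHI))).elim
        have hh2 : ν.factorization p ≤ a.factorization p + 2 * X2.factorization p
            ∧ ν.factorization p ≤ b.factorization p + 2 * Y2.factorization p := by
          rcases h2 with h | h
          · exact h
          · exact ((lt_irrefl _ (lt_of_lt_of_le h.1 hHI))).elim
        have d1 : (p:ℤ) ^ (ν.factorization p - km) ∣ (X1:ℤ) * Y2 := by
          have dX : (p:ℕ) ^ (X1.factorization p) ∣ X1 := Nat.ordProj_dvd _ _
          have dY : (p:ℕ) ^ (Y2.factorization p) ∣ Y2 := Nat.ordProj_dvd _ _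
          have dprod : (p:ℕ) ^ (X1.factorization p + Y2.factorization p) ∣ X1 * Y2 := by
            rw [pow_add]; exact mul_dvd_mul dX dY
          have hle : (ν.factorization p - km)
              ≤ X1.factorization p + Y2.factorization p := by
            rw [hkm]; exact arith_high hι01 ht2 hh1.1 hh2.2
          have hfin : (p:ℕ) ^ (ν.factorization p - km) ∣ X1 * Y2 :=
            dvd_trans (pow_dvd_pow p hle) dprod
          exact_mod_cast (Int.natCast_dvd_natCast.mpr hfin)
        have d2 : (p:ℤ) ^ (ν.factorization p - km) ∣ (X2:ℤ) * Y1 := by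
          have dX : (p:ℕ) ^ (X2.factorization p) ∣ X2 := Nat.ordProj_dvd _ _
          have dY : (p:ℕ) ^ (Y1.factorization p) ∣ Y1 := Nat.ordProj_dvd _ _
          have dprod : (p:ℕ) ^ (X2.factorization p + Y1.factorization p) ∣ X2 * Y1 := by
            rw [pow_add]; exact mul_dvd_mul dX dY
          have hle : (ν.factorization p - km)
              ≤ X2.factorization p + Y1.factorization p := by
            rw [hkm]; exact arith_high hι01 ht2 hh2.1 hh1.2
          have hfin : (p:ℕ) ^ (ν.factorization p - km) ∣ X2 * Y1 :=
            dvd_trans (pow_dvd_pow p hle) dprod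
          exact_mod_cast (Int.natCast_dvd_natCast.mpr hfin)
        exact dvd_sub d1 d2
      · -- LOW stratum
        have h1 := decomp (X := X1) (Y := Y1) hp ha hb hν hX1 hY1 hcop1 heq1 (p := p)
        have h2 := decomp (X := X2) (Y := Y2) hp ha hb hν hX2 hY2 hcop2 heq2 (p := p)
        have hor1 : X1.factorization p = 0 ∨ Y1.factorization p = 0 := by
          by_contra hcon
          push_neg at hcon
          have hdX : p ∣ X1 := Nat.dvd_of_factorization_pos hcon.1
          have hdY : p ∣ Y1 := Nat.dvd_of_factorization_pos hcon.2
          have : p ∣ 1 := hcop1 ▸ Nat.dvd_gcd hdX hdY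
          exact hp.one_lt.ne' (Nat.dvd_one.mp this)
        have hor2 : X2.factorization p = 0 ∨ Y2.factorization p = 0 := by
          by_contra hcon
          push_neg at hcon
          have hdX : p ∣ X2 := Nat.dvd_of_factorization_pos hcon.1
          have hdY : p ∣ Y2 := Nat.dvd_of_factorization_pos hcon.2
          have : p ∣ 1 := hcop2 ▸ Nat.dvd_gcd hdX hdY
          exact hp.one_lt.ne' (Nat.dvd_one.mp this)
        have hh1 : a.factorization p + 2 * X1.factorization p
              = max (a.factorization p) (b.factorization p)
            ∧ b.factorization p + 2 * Y1.factorization p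
              = max (a.factorization p) (b.factorization p) := by
          rcases h1 with h | h
          · exact (arith_contra hLO h.1 h.2 hor1).elim
          · exact ⟨h.2.1, h.2.2⟩
        have hh2 : a.factorization p + 2 * X2.factorization p
              = max (a.factorization p) (b.factorization p)
            ∧ b.factorization p + 2 * Y2.factorization p
              = max (a.factorization p) (b.factorization p) := by
          rcases h2 with h | h
          · exact (arith_contra hLO h.1 h.2 hor2).elim
          · exact ⟨h.2.1, h.2.2⟩
        have hγ : X1.factorization p = X2.factorization p := by omega
        have hδ : Y1.factorization p = Y2.factorization p := by omega
        have e1 : (p:ℕ)^(X1.factorization p) * ordCompl[p] X1 = X1 := Nat.ordProj_mul_ordCompl_eq_self X1 p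
        have e2 : (p:ℕ)^(Y1.factorization p) * ordCompl[p] Y1 = Y1 := Nat.ordProj_mul_ordCompl_eq_self Y1 p
        have e3 : (p:ℕ)^(X2.factorization p) * ordCompl[p] X2 = X2 := Nat.ordProj_mul_ordCompl_eq_self X2 p
        have e4 : (p:ℕ)^(Y2.factorization p) * ordCompl[p] Y2 = Y2 := Nat.ordProj_mul_ordCompl_eq_self Y2 p
        have hDelta : Δ = (p:ℤ)^(X1.factorization p + Y1.factorization p)
            * (((ordCompl[p] X1 : ℕ):ℤ) * ((ordCompl[p] Y2 : ℕ):ℤ)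
               - ((ordCompl[p] X2 : ℕ):ℤ) * ((ordCompl[p] Y1 : ℕ):ℤ)) := by
          have c1 : (X1:ℤ) = (p:ℤ)^(X1.factorization p) * ((ordCompl[p] X1 : ℕ):ℤ) := by exact_mod_cast (congrArg (fun t:ℕ => (t:ℤ)) e1).symm
          have c2 : (Y1:ℤ) = (p:ℤ)^(Y1.factorization p) * ((ordCompl[p] Y1 : ℕ):ℤ) := by exact_mod_cast (congrArg (fun t:ℕ => (t:ℤ)) e2).symm
          have c3 : (X2:ℤ) = (p:ℤ)^(X1.factorization p) * ((ordCompl[p] X2 : ℕ):ℤ) := by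
            rw [hγ]; exact_mod_cast (congrArg (fun t:ℕ => (t:ℤ)) e3).symm
          have c4 : (Y2:ℤ) = (p:ℤ)^(Y1.factorization p) * ((ordCompl[p] Y2 : ℕ):ℤ) := by
            rw [hδ]; exact_mod_cast (congrArg (fun t:ℕ => (t:ℤ)) e4).symm
          rw [hΔdef, c1, c2, c3, c4, pow_add]; ring
        have hu := hbits p hpν hLO
        have hexp : (ν.factorization p - km)
            ≤ (X1.factorization p + Y1.factorization p)
            + (ν.factorization p - max (a.factorization p) (b.factorization p) - ι) := by
          rw [hkm]; exact arith_low hι01 ht2 rfl hh1.1 hh1.2 hLO hor1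
        calc (p:ℤ) ^ (ν.factorization p - km)
            ∣ (p:ℤ) ^ ((X1.factorization p + Y1.factorization p)
            + (ν.factorization p - max (a.factorization p) (b.factorization p) - ι)) := pow_dvd_pow _ hexp
          _ ∣ Δ := by
              rw [hDelta, pow_add]
              exact mul_dvd_mul dvd_rfl hu
    have h2 : ((p:ℤ) ^ (ν.factorization p - km)).natAbs
        ∣ Δ.natAbs := Int.natAbs_dvd_natAbs.mpr main
    rwa [Int.natAbs_pow, Int.natAbs_natCast] at h2
  -- step 2: assemble
  have hprimes : ∀ p ∈ ν.primeFactors, p.Prime := fun p hp => Nat.prime_of_mem_primeFactors hp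
  have hΔn : Δ.natAbs ≠ 0 := Int.natAbs_ne_zero.mpr hΔ
  set M := ∏ p ∈ ν.primeFactors, p ^ (ν.factorization p - min (ν.factorization p)
      ((a.factorization p + b.factorization p)/2 + if p = 2 then 1 else 0)) with hM
  set N := ∏ p ∈ ν.primeFactors, p ^ (min (ν.factorization p)
      ((a.factorization p + b.factorization p)/2 + if p = 2 then 1 else 0)) with hN
  have hMne : M ≠ 0 := prod_pow_ne_zero hprimes _
  have hMN : M * N = ν := by
    rw [hM, hN, ← Finset.prod_mul_distrib]
    have hc : ∀ p ∈ ν.primeFactors,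
        p ^ (ν.factorization p - min (ν.factorization p)
          ((a.factorization p + b.factorization p)/2 + if p = 2 then 1 else 0))
        * p ^ (min (ν.factorization p)
          ((a.factorization p + b.factorization p)/2 + if p = 2 then 1 else 0))
        = p ^ (ν.factorization p) := by
      intro p hp
      rw [← pow_add]
      congr 1
      omega
    rw [Finset.prod_congr rfl hc]
    have hfin := Nat.factorization_prod_pow_eq_self hν
    rwa [Finsupp.prod, Nat.support_factorization] at hfin
  have hMdvd : M ∣ Δ.natAbs := by
    rw [← Nat.factorization_le_iff_dvd hMne hΔn, Finsupp.le_def]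
    intro q
    rw [hM, prod_pow_fact hprimes _ q]
    by_cases hq : q ∈ ν.primeFactors
    · simp only [hq, if_true]
      exact (Nat.Prime.pow_dvd_iff_le_factorization (hprimes q hq) hΔn).mp (hper q hq)
    · simp [hq]
  have hNsq : N^2 ≤ 4*(a*b) := by
    have h1 : N^2 = ∏ p ∈ ν.primeFactors, p ^ (2 * (min (ν.factorization p)
        ((a.factorization p + b.factorization p)/2 + if p = 2 then 1 else 0))) := by
      rw [hN, ← Finset.prod_pow]
      exact Finset.prod_congr rfl (fun p _ => by rw [← pow_mul, mul_comm _ 2])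
    have h2 : ∀ p ∈ ν.primeFactors, p ^ (2 * (min (ν.factorization p)
        ((a.factorization p + b.factorization p)/2 + if p = 2 then 1 else 0)))
        ≤ p ^ ((a*b).factorization p + 2 * (if p = 2 then 1 else 0)) := by
      intro p hp
      apply Nat.pow_le_pow_right (hprimes p hp).pos
      rw [Nat.factorization_mul ha hb, Finsupp.add_apply]
      omega
    have h3 : N^2 ≤ ∏ p ∈ ν.primeFactors,
        p ^ ((a*b).factorization p + 2*(if p = 2 then 1 else 0)) := by
      rw [h1]; exact Finset.prod_le_prod' h2
    have h4 : (∏ p ∈ ν.primeFactors, p ^ ((a*b).factorization p + 2*(if p = 2 then 1 else 0)))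
        = (∏ p ∈ ν.primeFactors, p ^ ((a*b).factorization p))
          * (∏ p ∈ ν.primeFactors, p ^ (2*(if p = 2 then 1 else 0))) := by
      rw [← Finset.prod_mul_distrib]
      exact Finset.prod_congr rfl (fun p _ => pow_add p _ _)
    have h5 : (∏ p ∈ ν.primeFactors, p ^ ((a*b).factorization p)) ∣ a*b := by
      rw [← Nat.factorization_le_iff_dvd (prod_pow_ne_zero hprimes _) (mul_ne_zero ha hb),
        Finsupp.le_def]
      intro q
      rw [prod_pow_fact hprimes _ q]
      by_cases hq : q ∈ ν.primeFactors <;> simp [hq]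
    have h5' : (∏ p ∈ ν.primeFactors, p ^ ((a*b).factorization p)) ≤ a*b :=
      Nat.le_of_dvd (Nat.pos_of_ne_zero (mul_ne_zero ha hb)) h5
    have h6 : (∏ p ∈ ν.primeFactors, p ^ (2*(if p = 2 then 1 else 0))) ≤ 4 := by
      have hterm : ∀ p ∈ ν.primeFactors, p ^ (2*(if p = 2 then 1 else 0))
          = if p = 2 then 4 else 1 := by
        intro p hp
        by_cases h : p = 2 <;> simp [h]
      rw [Finset.prod_congr rfl hterm]
      rw [Finset.prod_ite_eq' ν.primeFactors 2 (fun _ => 4)]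
      split <;> norm_num
    calc N^2 ≤ (∏ p ∈ ν.primeFactors, p ^ ((a*b).factorization p))
          * (∏ p ∈ ν.primeFactors, p ^ (2*(if p = 2 then 1 else 0))) := h4 ▸ h3
      _ ≤ (a*b) * 4 := Nat.mul_le_mul h5' h6
      _ = 4*(a*b) := by ring
  have hMle : M ≤ Δ.natAbs := Nat.le_of_dvd (Nat.pos_of_ne_zero hΔn) hMdvd
  have hcalc : 25 * ν^2 ≤ 144*(a*b)*Δ.natAbs^2 := by
    have e1 : 25 * ν^2 = 25 * M^2 * N^2 := by rw [← hMN]; ring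
    have e2 : 25 * M^2 * N^2 ≤ 25 * M^2 * (4*(a*b)) :=
      Nat.mul_le_mul_left _ hNsq
    have e3 : 25 * M^2 * (4*(a*b)) = 100 * (a*b) * M^2 := by ring
    have e4 : 100 * (a*b) * M^2 ≤ 100 * (a*b) * Δ.natAbs^2 :=
      Nat.mul_le_mul_left _ (Nat.pow_le_pow_left hMle 2)
    have e5 : 100 * (a*b) * Δ.natAbs^2 ≤ 144 * (a*b) * Δ.natAbs^2 := by
      have h100 : (100:ℕ) ≤ 144 := by norm_num
      exact Nat.mul_le_mul_right _ (Nat.mul_le_mul_right _ h100)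
    omega
  omega


/-! ### Outer setup -/

def SolT (a b m n : ℕ) (xy : ℕ × ℕ) : Prop :=
  0 < xy.1 ∧ 0 < xy.2 ∧ (a : ℤ) * (xy.1 : ℤ) ^ 2 - (b : ℤ) * (xy.2 : ℤ) ^ 2 = (n : ℤ)
    ∧ a * xy.1 ^ 2 ≤ m

def cOf (xy : ℕ × ℕ) : ℕ := xy.1.gcd xy.2
def XOf (xy : ℕ × ℕ) : ℕ := xy.1 / cOf xy
def YOf (xy : ℕ × ℕ) : ℕ := xy.2 / cOf xy
def nuOf (n : ℕ) (xy : ℕ × ℕ) : ℕ := n / (cOf xy)^2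

lemma stratum {a b m n : ℕ} (ha : 0 < a) (hn : 0 < n) {xy : ℕ × ℕ}
    (h : SolT a b m n xy) :
    xy.1 = cOf xy * XOf xy ∧ xy.2 = cOf xy * YOf xy
    ∧ Nat.Coprime (XOf xy) (YOf xy)
    ∧ (cOf xy)^2 * nuOf n xy = n
    ∧ a * (XOf xy)^2 = b * (YOf xy)^2 + nuOf n xy
    ∧ 0 < XOf xy ∧ 0 < YOf xy ∧ 0 < nuOf n xy := by
  obtain ⟨hx, hy, heqZ, _⟩ := h
  have heqN : a * xy.1^2 = b * xy.2^2 + n := by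
    have h0 : ((a * xy.1^2 : ℕ) : ℤ) = ((b * xy.2^2 + n : ℕ) : ℤ) := by
      push_cast; linarith
    exact_mod_cast h0
  have hc : 0 < cOf xy := Nat.gcd_pos_of_pos_left _ hx
  have hX : xy.1 = cOf xy * XOf xy :=
    (Nat.mul_div_cancel' (Nat.gcd_dvd_left _ _)).symm
  have hY : xy.2 = cOf xy * YOf xy :=
    (Nat.mul_div_cancel' (Nat.gcd_dvd_right _ _)).symm
  have hcop : Nat.Coprime (XOf xy) (YOf xy) := Nat.coprime_div_gcd_div_gcd hc
  have hdvd : (cOf xy)^2 ∣ n := by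
    have d1 : (cOf xy)^2 ∣ a * xy.1^2 := ⟨a * (XOf xy)^2, by rw [hX]; ring⟩
    have d2 : (cOf xy)^2 ∣ b * xy.2^2 := ⟨b * (YOf xy)^2, by rw [hY]; ring⟩
    have := Nat.dvd_sub d1 d2
    rwa [show a * xy.1^2 - b * xy.2^2 = n by omega] at this
  have hnu : (cOf xy)^2 * nuOf n xy = n := Nat.mul_div_cancel' hdvd
  have heqX : a * (XOf xy)^2 = b * (YOf xy)^2 + nuOf n xy := by
    have hsq : 0 < (cOf xy)^2 := pow_pos hc 2
    apply Nat.eq_of_mul_eq_mul_left hsq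
    calc (cOf xy)^2 * (a * (XOf xy)^2) = a * (cOf xy * XOf xy)^2 := by ring
      _ = a * xy.1^2 := by rw [← hX]
      _ = b * xy.2^2 + n := heqN
      _ = b * (cOf xy * YOf xy)^2 + (cOf xy)^2 * nuOf n xy := by rw [← hY, hnu]
      _ = (cOf xy)^2 * (b * (YOf xy)^2 + nuOf n xy) := by ring
  have hXpos : 0 < XOf xy := by
    rcases Nat.eq_zero_or_pos (XOf xy) with h0 | h0
    · rw [h0, Nat.mul_zero] at hX; omega
    · exact h0
  have hYpos : 0 < YOf xy := by
    rcases Nat.eq_zero_or_pos (YOf xy) with h0 | h0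
    · rw [h0, Nat.mul_zero] at hY; omega
    · exact h0
  have hnupos : 0 < nuOf n xy := by
    rcases Nat.eq_zero_or_pos (nuOf n xy) with h0 | h0
    · rw [h0, Nat.mul_zero] at hnu; omega
    · exact h0
  exact ⟨hX, hY, hcop, hnu, heqX, hXpos, hYpos, hnupos⟩

open Classical in
noncomputable def refp (a b m n c : ℕ) : ℕ × ℕ :=
  if h : ∃ xy : ℕ × ℕ, SolT a b m n xy ∧ cOf xy = c then h.choose else (1, 1)

lemma refp_spec {a b m n c : ℕ} (h : ∃ xy : ℕ × ℕ, SolT a b m n xy ∧ cOf xy = c) :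
    SolT a b m n (refp a b m n c) ∧ cOf (refp a b m n c) = c := by
  rw [refp, dif_pos h]
  exact h.choose_spec

open Classical in
noncomputable def bitP (a b m n p : ℕ) (xy : ℕ × ℕ) : Prop :=
  max (a.factorization p) (b.factorization p) < (nuOf n xy).factorization p ∧
  (p:ℤ)^((nuOf n xy).factorization p - max (a.factorization p) (b.factorization p)
      - (if p = 2 then 1 else 0))
    ∣ (((ordCompl[p] (XOf (refp a b m n (cOf xy))) : ℕ) : ℤ)
        * ((ordCompl[p] (YOf xy) : ℕ) : ℤ)
       - ((ordCompl[p] (XOf xy) : ℕ) : ℤ)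
        * ((ordCompl[p] (YOf (refp a b m n (cOf xy))) : ℕ) : ℤ))

open Classical in
noncomputable def deltaP (a b m n p : ℕ) (xy : ℕ × ℕ) : ℕ :=
  if bitP a b m n p xy then n.factorization p - (cOf xy).factorization p
  else (cOf xy).factorization p

noncomputable def DmapP (a b m n : ℕ) (xy : ℕ × ℕ) : ℕ :=
  ∏ p ∈ n.primeFactors, p ^ deltaP a b m n p xy

noncomputable def xiR (a b : ℕ) (xy : ℕ × ℕ) : ℝ :=
  Real.sqrt a * xy.1 + Real.sqrt b * xy.2

noncomputable def wdxP (a b : ℕ) (xy : ℕ × ℕ) : ℕ :=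
  ⌊Real.log (xiR a b xy) / Real.log (3/2)⌋₊


/-! ### Window analysis -/

lemma xi_facts {a b m n : ℕ} (ha : 0 < a) (hb : 0 < b) (hn : 0 < n) {xy : ℕ × ℕ}
    (h : SolT a b m n xy) :
    1 < xiR a b xy ∧ (Real.sqrt a * xy.1 - Real.sqrt b * xy.2) * xiR a b xy = n
      ∧ 0 < Real.sqrt a * xy.1 - Real.sqrt b * xy.2 := by
  obtain ⟨hx, hy, heqZ, _⟩ := h
  have ha1 : (1:ℝ) ≤ Real.sqrt a := by
    rw [show (1:ℝ) = Real.sqrt 1 by simp]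
    exact Real.sqrt_le_sqrt (by exact_mod_cast ha)
  have hbpos : (0:ℝ) < Real.sqrt b := Real.sqrt_pos.mpr (by exact_mod_cast hb)
  have hx1 : (1:ℝ) ≤ (xy.1 : ℝ) := by exact_mod_cast hx
  have hy1 : (1:ℝ) ≤ (xy.2 : ℝ) := by exact_mod_cast hy
  have hxi : 1 < xiR a b xy := by
    rw [xiR]
    nlinarith [mul_pos hbpos (lt_of_lt_of_le one_pos hy1)]
  have hprod : (Real.sqrt a * xy.1 - Real.sqrt b * xy.2) * xiR a b xy = n := by
    rw [xiR]
    have e1 : Real.sqrt a * Real.sqrt a = (a:ℝ) := Real.mul_self_sqrt (by positivity)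
    have e2 : Real.sqrt b * Real.sqrt b = (b:ℝ) := Real.mul_self_sqrt (by positivity)
    have heqR : (a:ℝ) * (xy.1:ℝ)^2 - (b:ℝ) * (xy.2:ℝ)^2 = (n:ℝ) := by exact_mod_cast heqZ
    nlinarith [e1, e2, heqR]
  have heta : 0 < Real.sqrt a * xy.1 - Real.sqrt b * xy.2 := by
    have hnpos : (0:ℝ) < n := by exact_mod_cast hn
    nlinarith [hprod, hxi]
  exact ⟨hxi, hprod, heta⟩

set_option maxHeartbeats 1000000 in
lemma window_size {a b m n : ℕ} (ha : 0 < a) (hb : 0 < b) (hn : 0 < n) {P Q : ℕ × ℕ}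
    (hP : SolT a b m n P) (hQ : SolT a b m n Q)
    (hw : wdxP a b P = wdxP a b Q) :
    144 * (a*b) * ((P.1:ℤ) * Q.2 - Q.1 * P.2).natAbs^2 < 25 * n^2 := by
  obtain ⟨hxiP, hprodP, hetaP⟩ := xi_facts ha hb hn hP
  obtain ⟨hxiQ, hprodQ, hetaQ⟩ := xi_facts ha hb hn hQ
  set u := xiR a b P with hu
  set v := xiR a b Q with hv
  set eP := Real.sqrt a * P.1 - Real.sqrt b * P.2 with heP
  set eQ := Real.sqrt a * Q.1 - Real.sqrt b * Q.2 with heQ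
  have hL : 0 < Real.log (3/2) := Real.log_pos (by norm_num)
  have hupos : 0 < u := lt_trans one_pos hxiP
  have hvpos : 0 < v := lt_trans one_pos hxiQ
  -- same window: |log u - log v| < log (3/2)
  have hlog : |Real.log u - Real.log v| < Real.log (3/2) := by
    have h1 : Real.log u / Real.log (3/2) ≥ 0 := by
      apply div_nonneg (Real.log_nonneg (le_of_lt hxiP)) (le_of_lt hL)
    have h2 : Real.log v / Real.log (3/2) ≥ 0 := by
      apply div_nonneg (Real.log_nonneg (le_of_lt hxiQ)) (le_of_lt hL)
    have hfl : (⌊Real.log u / Real.log (3/2)⌋₊ : ℝ) ≤ Real.log u / Real.log (3/2)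
        ∧ Real.log u / Real.log (3/2) < ⌊Real.log u / Real.log (3/2)⌋₊ + 1 :=
      ⟨Nat.floor_le h1, Nat.lt_floor_add_one _⟩
    have hfl2 : (⌊Real.log v / Real.log (3/2)⌋₊ : ℝ) ≤ Real.log v / Real.log (3/2)
        ∧ Real.log v / Real.log (3/2) < ⌊Real.log v / Real.log (3/2)⌋₊ + 1 :=
      ⟨Nat.floor_le h2, Nat.lt_floor_add_one _⟩
    have heqf : (⌊Real.log u / Real.log (3/2)⌋₊ : ℝ) = ⌊Real.log v / Real.log (3/2)⌋₊ := by
      exact_mod_cast congrArg (Nat.cast (R := ℝ)) hw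
    have habs : |Real.log u / Real.log (3/2) - Real.log v / Real.log (3/2)| < 1 := by
      rw [abs_lt]; constructor <;> nlinarith [hfl.1, hfl.2, hfl2.1, hfl2.2]
    have : |(Real.log u - Real.log v) / Real.log (3/2)| < 1 := by
      rw [sub_div]; exact habs
    rw [abs_div, abs_of_pos hL, div_lt_one hL] at this
    exact this
  -- ratio bounds
  have hratio1 : v < (3/2) * u := by
    have h1 : Real.log v - Real.log u < Real.log (3/2) := by
      have := abs_lt.mp hlog; linarith
    have h2 : Real.log v < Real.log ((3/2) * u) := by
      rw [Real.log_mul (by norm_num) (ne_of_gt hupos)]; linarith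
    exact (Real.log_lt_log_iff hvpos (by positivity)).mp h2
  have hratio2 : u < (3/2) * v := by
    have h1 : Real.log u - Real.log v < Real.log (3/2) := by
      have := abs_lt.mp hlog; linarith
    have h2 : Real.log u < Real.log ((3/2) * v) := by
      rw [Real.log_mul (by norm_num) (ne_of_gt hvpos)]; linarith
    exact (Real.log_lt_log_iff hupos (by positivity)).mp h2
  -- the key identity
  set D : ℤ := (P.1:ℤ) * Q.2 - Q.1 * P.2 with hD
  have hiden : v * eP - u * eQ
      = 2 * (Real.sqrt a * Real.sqrt b) * ((P.1:ℝ) * Q.2 - (Q.1:ℝ) * P.2) := by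
    simp only [hu, hv, heP, heQ, xiR]; ring
  have hsq : (v * eP - u * eQ) * (u * v) = (n:ℝ) * (v^2 - u^2) := by
    have e1 : (v * eP - u * eQ) * (u * v) = (eP * u) * v^2 - (eQ * v) * u^2 := by ring
    rw [e1, hprodP, hprodQ]; ring
  have hnR : (0:ℝ) < (n:ℝ) := by exact_mod_cast hn
  have habs2 : |v * eP - u * eQ| * (u*v) < (5/6) * n * (u*v) := by
    have h1 : |(v * eP - u * eQ) * (u*v)| = |v*eP - u*eQ| * (u*v) := by
      rw [abs_mul, abs_of_pos (mul_pos hupos hvpos)]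
    have h2 : |(n:ℝ) * (v^2 - u^2)| = n * |v^2 - u^2| := by
      rw [abs_mul, abs_of_pos hnR]
    have h3 : |v^2 - u^2| < (5/6) * (u*v) := by
      rw [abs_lt]
      constructor <;>
        nlinarith [mul_lt_mul_of_pos_right hratio1 hvpos, mul_lt_mul_of_pos_right hratio2 hupos,
          mul_lt_mul_of_pos_right hratio1 hupos, mul_lt_mul_of_pos_right hratio2 hvpos,
          mul_pos hupos hvpos]
    calc |v*eP - u*eQ| * (u*v) = |(v * eP - u * eQ) * (u*v)| := h1.symm
      _ = |(n:ℝ) * (v^2 - u^2)| := by rw [hsq]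
      _ = n * |v^2 - u^2| := h2
      _ < n * ((5/6) * (u*v)) := by
          apply mul_lt_mul_of_pos_left h3 hnR
      _ = (5/6) * n * (u*v) := by ring
  have habs3 : |v * eP - u * eQ| < (5/6) * n :=
    lt_of_mul_lt_mul_right (by exact habs2) (le_of_lt (mul_pos hupos hvpos))
  -- square it
  have hsab : Real.sqrt a * Real.sqrt b ≥ 0 := by positivity
  have hDcast : |v * eP - u * eQ| = 2 * (Real.sqrt a * Real.sqrt b) * |(D:ℝ)| := by
    rw [hiden, abs_mul]
    have : |2 * (Real.sqrt a * Real.sqrt b)| = 2 * (Real.sqrt a * Real.sqrt b) := by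
      rw [abs_of_nonneg]; positivity
    rw [this]
    congr 1
    rw [hD]; push_cast; ring_nf
  have hfin : 144 * ((a:ℝ)*b) * (D:ℝ)^2 < 25 * (n:ℝ)^2 := by
    have f1 : (Real.sqrt a)^2 = (a:ℝ) := Real.sq_sqrt (by positivity)
    have f2 : (Real.sqrt b)^2 = (b:ℝ) := Real.sq_sqrt (by positivity)
    have h0 : 2 * (Real.sqrt a * Real.sqrt b) * |(D:ℝ)| < (5/6) * n := by
      rw [← hDcast]; exact habs3
    have hsqr : (2 * (Real.sqrt a * Real.sqrt b) * |(D:ℝ)|)^2 < ((5/6) * (n:ℝ))^2 :=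
      pow_lt_pow_left₀ h0 (by positivity) (by norm_num)
    have hexp : (2 * (Real.sqrt a * Real.sqrt b) * |(D:ℝ)|)^2
        = 4 * ((a:ℝ)*b) * (D:ℝ)^2 := by
      calc (2 * (Real.sqrt a * Real.sqrt b) * |(D:ℝ)|)^2
          = 4 * ((Real.sqrt a)^2) * ((Real.sqrt b)^2) * (|(D:ℝ)|^2) := by ring
        _ = 4 * ((a:ℝ)*b) * (D:ℝ)^2 := by rw [f1, f2, sq_abs]; ring
    rw [hexp] at hsqr
    nlinarith [hsqr]
  have hcast : ((144 * (a*b) * D.natAbs^2 : ℕ) : ℝ) < ((25 * n^2 : ℕ) : ℝ) := by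
    push_cast
    have hna : ((D.natAbs : ℝ))^2 = (D:ℝ)^2 := by
      simp [Nat.cast_natAbs, Int.cast_abs, sq_abs]
    rw [hna]
    linarith [hfin]
  exact_mod_cast hcast


/-! ### LOW data extraction -/

lemma low_data {p a b ν X Y : ℕ} (hp : p.Prime) (ha : a ≠ 0) (hb : b ≠ 0) (hν : ν ≠ 0)
    (hX : X ≠ 0) (hY : Y ≠ 0) (hcop : Nat.Coprime X Y) (heq : a*X^2 = b*Y^2+ν)
    (hLO : max (a.factorization p) (b.factorization p) < ν.factorization p) :
    a.factorization p + 2*X.factorization p = max (a.factorization p) (b.factorization p)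
    ∧ b.factorization p + 2*Y.factorization p
        = max (a.factorization p) (b.factorization p) := by
  have hor : X.factorization p = 0 ∨ Y.factorization p = 0 := by
    by_contra hcon
    push_neg at hcon
    have hdX : p ∣ X := Nat.dvd_of_factorization_pos hcon.1
    have hdY : p ∣ Y := Nat.dvd_of_factorization_pos hcon.2
    have : p ∣ 1 := hcop ▸ Nat.dvd_gcd hdX hdY
    exact hp.one_lt.ne' (Nat.dvd_one.mp this)
  rcases decomp hp ha hb hν hX hY hcop heq with h | h
  · exact (arith_contra hLO h.1 h.2 hor).elim
  · exact ⟨h.2.1, h.2.2⟩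

/-! ### Main gluing : equal data forces equal solutions -/

set_option maxHeartbeats 1000000 in
lemma same_sol {a b m n : ℕ} (ha : 0 < a) (hb : 0 < b) (hn : 0 < n) {P Q : ℕ × ℕ}
    (hP : SolT a b m n P) (hQ : SolT a b m n Q)
    (hc : cOf P = cOf Q)
    (hbit : ∀ p ∈ n.primeFactors, (bitP a b m n p P ↔ bitP a b m n p Q))
    (hw : wdxP a b P = wdxP a b Q) : P = Q := by
  obtain ⟨hXP, hYP, hcopP, hnuP, heqP, hXposP, hYposP, hnuposP⟩ := stratum ha hn hP
  obtain ⟨hXQ, hYQ, hcopQ, hnuQ, heqQ, hXposQ, hYposQ, hnuposQ⟩ := stratum ha hn hQ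
  have hnuPQ : nuOf n P = nuOf n Q := by rw [nuOf, nuOf, hc]
  -- the reference solution
  have hex : ∃ xy : ℕ × ℕ, SolT a b m n xy ∧ cOf xy = cOf P := ⟨P, hP, rfl⟩
  obtain ⟨hrSol, hrC⟩ := refp_spec hex
  obtain ⟨hXr, hYr, hcopr, hnur, heqr, hXposr, hYposr, hnuposr⟩ := stratum ha hn hrSol
  have hnur' : nuOf n (refp a b m n (cOf P)) = nuOf n P := by
    rw [nuOf, nuOf, hrC]
  rw [hnur'] at heqr hnuposr
  rw [hrC] at hnur
  -- prepare tech hypotheses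
  have hbits : ∀ p ∈ (nuOf n P).primeFactors,
      max (a.factorization p) (b.factorization p) < (nuOf n P).factorization p →
      (p:ℤ)^((nuOf n P).factorization p - max (a.factorization p) (b.factorization p)
             - (if p = 2 then 1 else 0))
        ∣ (((ordCompl[p] (XOf P) : ℕ):ℤ) * ((ordCompl[p] (YOf Q) : ℕ):ℤ)
           - ((ordCompl[p] (XOf Q) : ℕ):ℤ) * ((ordCompl[p] (YOf P) : ℕ):ℤ)) := by
    intro p hpν hLO
    have hp : p.Prime := Nat.prime_of_mem_primeFactors hpν
    have hpn : p ∈ n.primeFactors := by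
      refine Nat.primeFactors_mono ⟨(cOf P)^2, ?_⟩ hn.ne' hpν
      rw [mul_comm]; exact hnuP.symm
    -- LOW data for the three solutions
    have hldP := low_data hp ha.ne' hb.ne' hnuposP.ne'
      hXposP.ne' hYposP.ne' hcopP heqP hLO
    have hldQ := low_data hp ha.ne' hb.ne' hnuposP.ne'
      hXposQ.ne' hYposQ.ne' hcopQ
      (by rw [← hnuPQ] at heqQ; exact heqQ) hLO
    have hldr := low_data hp ha.ne' hb.ne' hnuposP.ne'
      hXposr.ne'
      hYposr.ne' hcopr heqr hLO
    -- reduced congruences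
    have hcongP := low_cong hp ha.ne' hb.ne' hnuposP.ne'
      hXposP.ne' hYposP.ne' heqP hldP.1 hldP.2 hLO
    have hcongQ := low_cong hp ha.ne' hb.ne' hnuposP.ne'
      hXposQ.ne' hYposQ.ne'
      (by rw [← hnuPQ] at heqQ; exact heqQ) hldQ.1 hldQ.2 hLO
    have hcongr := low_cong hp ha.ne' hb.ne' hnuposP.ne'
      hXposr.ne'
      hYposr.ne' heqr hldr.1 hldr.2 hLO
    -- non-divisibility side conditions
    have ndA : ¬(p:ℤ) ∣ ((ordCompl[p] a : ℕ) : ℤ) := by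
      intro h
      exact Nat.not_dvd_ordCompl hp ha.ne' (by exact_mod_cast h)
    have ndXr : ¬(p:ℤ) ∣ ((ordCompl[p] (XOf (refp a b m n (cOf P))) : ℕ) : ℤ) := by
      intro h
      exact Nat.not_dvd_ordCompl hp hXposr.ne' (by exact_mod_cast h)
    have ndYr : ¬(p:ℤ) ∣ ((ordCompl[p] (YOf (refp a b m n (cOf P))) : ℕ) : ℤ) := by
      intro h
      exact Nat.not_dvd_ordCompl hp hYposr.ne' (by exact_mod_cast h)
    have ndXP : ¬(p:ℤ) ∣ ((ordCompl[p] (XOf P) : ℕ) : ℤ) := by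
      intro h
      exact Nat.not_dvd_ordCompl hp hXposP.ne' (by exact_mod_cast h)
    have ndYP : ¬(p:ℤ) ∣ ((ordCompl[p] (YOf P) : ℕ) : ℤ) := by
      intro h
      exact Nat.not_dvd_ordCompl hp hYposP.ne' (by exact_mod_cast h)
    have ndXQ : ¬(p:ℤ) ∣ ((ordCompl[p] (XOf Q) : ℕ) : ℤ) := by
      intro h
      exact Nat.not_dvd_ordCompl hp hXposQ.ne' (by exact_mod_cast h)
    have ndYQ : ¬(p:ℤ) ∣ ((ordCompl[p] (YOf Q) : ℕ) : ℤ) := by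
      intro h
      exact Nat.not_dvd_ordCompl hp hYposQ.ne' (by exact_mod_cast h)
    -- pairwise alternative for (r, P) and (r, Q)
    have hP2 := pairwise_or hp ndA ndXr ndYr ndXP ndYP hcongr hcongP
    have hQ2 := pairwise_or hp ndA ndXr ndYr ndXQ ndYQ hcongr hcongQ
    -- unfold the bit for P and Q
    have hbitP_iff : bitP a b m n p P ↔
        (max (a.factorization p) (b.factorization p) < (nuOf n P).factorization p ∧
        (p:ℤ)^((nuOf n P).factorization p - max (a.factorization p) (b.factorization p)
            - (if p = 2 then 1 else 0))
          ∣ (((ordCompl[p] (XOf (refp a b m n (cOf P))) : ℕ) : ℤ)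
              * ((ordCompl[p] (YOf P) : ℕ) : ℤ)
             - ((ordCompl[p] (XOf P) : ℕ) : ℤ)
              * ((ordCompl[p] (YOf (refp a b m n (cOf P))) : ℕ) : ℤ))) := Iff.rfl
    have hbitQ_iff : bitP a b m n p Q ↔
        (max (a.factorization p) (b.factorization p) < (nuOf n P).factorization p ∧
        (p:ℤ)^((nuOf n P).factorization p - max (a.factorization p) (b.factorization p)
            - (if p = 2 then 1 else 0))
          ∣ (((ordCompl[p] (XOf (refp a b m n (cOf P))) : ℕ) : ℤ)
              * ((ordCompl[p] (YOf Q) : ℕ) : ℤ)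
             - ((ordCompl[p] (XOf Q) : ℕ) : ℤ)
              * ((ordCompl[p] (YOf (refp a b m n (cOf P))) : ℕ) : ℤ))) := by
      rw [bitP, ← hc, hnuPQ]
    by_cases hbP : bitP a b m n p P
    · have hbQ := (hbit p hpn).mp hbP
      have d1 := (hbitP_iff.mp hbP).2
      have d2 := (hbitQ_iff.mp hbQ).2
      exact transfer_sub hp ndXr d1 d2
    · have hbQ : ¬ bitP a b m n p Q := fun h => hbP ((hbit p hpn).mpr h)
      have d1 : (p:ℤ)^((nuOf n P).factorization p
          - max (a.factorization p) (b.factorization p) - (if p = 2 then 1 else 0))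
          ∣ (((ordCompl[p] (XOf (refp a b m n (cOf P))) : ℕ) : ℤ)
              * ((ordCompl[p] (YOf P) : ℕ) : ℤ)
             + ((ordCompl[p] (XOf P) : ℕ) : ℤ)
              * ((ordCompl[p] (YOf (refp a b m n (cOf P))) : ℕ) : ℤ)) := by
        rcases hP2 with h | h
        · exact absurd (hbitP_iff.mpr ⟨hLO, h⟩) hbP
        · exact h
      have d2 : (p:ℤ)^((nuOf n P).factorization p
          - max (a.factorization p) (b.factorization p) - (if p = 2 then 1 else 0))
          ∣ (((ordCompl[p] (XOf (refp a b m n (cOf P))) : ℕ) : ℤ)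
              * ((ordCompl[p] (YOf Q) : ℕ) : ℤ)
             + ((ordCompl[p] (XOf Q) : ℕ) : ℤ)
              * ((ordCompl[p] (YOf (refp a b m n (cOf P))) : ℕ) : ℤ)) := by
        rcases hQ2 with h | h
        · exact absurd (hbitQ_iff.mpr ⟨hLO, h⟩) hbQ
        · exact h
      exact transfer_add hp ndXr d1 d2
  -- size hypothesis
  have hws := window_size ha hb hn hP hQ hw
  have hDxy : (P.1:ℤ) * Q.2 - Q.1 * P.2
      = ((cOf P:ℤ))^2 * ((XOf P:ℤ) * (YOf Q:ℤ) - (XOf Q:ℤ) * (YOf P:ℤ)) := by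
    have c1 : (P.1:ℤ) = (cOf P:ℤ) * (XOf P:ℤ) := by exact_mod_cast congrArg (fun t:ℕ => (t:ℤ)) hXP
    have c2 : (P.2:ℤ) = (cOf P:ℤ) * (YOf P:ℤ) := by exact_mod_cast congrArg (fun t:ℕ => (t:ℤ)) hYP
    have c3 : (Q.1:ℤ) = (cOf P:ℤ) * (XOf Q:ℤ) := by
      rw [hc]; exact_mod_cast congrArg (fun t:ℕ => (t:ℤ)) hXQ
    have c4 : (Q.2:ℤ) = (cOf P:ℤ) * (YOf Q:ℤ) := by
      rw [hc]; exact_mod_cast congrArg (fun t:ℕ => (t:ℤ)) hYQ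
    rw [c1, c2, c3, c4]; ring
  have hsize : 144 * (a*b) * ((XOf P:ℤ) * (YOf Q:ℤ) - (XOf Q:ℤ)*(YOf P:ℤ)).natAbs^2
      < 25 * (nuOf n P)^2 := by
    have hnatabs : ((P.1:ℤ) * Q.2 - Q.1 * P.2).natAbs
        = (cOf P)^2 * ((XOf P:ℤ) * (YOf Q:ℤ) - (XOf Q:ℤ)*(YOf P:ℤ)).natAbs := by
      rw [hDxy, Int.natAbs_mul]
      simp [Int.natAbs_pow]
    rw [hnatabs] at hws
    have hc4 : 0 < ((cOf P)^2)^2 := by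
      have : 0 < cOf P := Nat.gcd_pos_of_pos_left _ hP.1
      positivity
    apply Nat.lt_of_mul_lt_mul_left (a := ((cOf P)^2)^2)
    calc ((cOf P)^2)^2 * (144 * (a*b) * ((XOf P:ℤ) * (YOf Q:ℤ) - (XOf Q:ℤ)*(YOf P:ℤ)).natAbs^2)
        = 144 * (a*b) * ((cOf P)^2 * ((XOf P:ℤ) * (YOf Q:ℤ) - (XOf Q:ℤ)*(YOf P:ℤ)).natAbs)^2 := by ring
      _ < 25 * n^2 := hws
      _ = ((cOf P)^2)^2 * (25 * (nuOf n P)^2) := by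
          conv_lhs => rw [← hnuP]
          ring
  -- apply the technical lemma
  have htech := tech ha.ne' hb.ne' hnuposP.ne'
    hXposP.ne' hYposP.ne' hXposQ.ne' hYposQ.ne'
    hcopP hcopQ heqP (by rw [← hnuPQ] at heqQ; exact heqQ) hbits hsize
  -- conclude equality
  have hxyz : (P.1:ℤ) * Q.2 - Q.1 * P.2 = 0 := by
    rw [hDxy, htech, mul_zero]
  obtain ⟨hxPpos, hyPpos, heqZP, _⟩ := hP
  obtain ⟨hxQpos, hyQpos, heqZQ, _⟩ := hQ
  have exZ : (P.1:ℤ) * Q.2 = (Q.1:ℤ) * P.2 := sub_eq_zero.mp hxyz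
  have hyy : (n:ℤ) * ((Q.2:ℤ)^2 - (P.2:ℤ)^2) = 0 := by
    linear_combination (-(Q.2:ℤ)^2) * heqZP + ((P.2:ℤ)^2) * heqZQ
      + (a:ℤ) * ((P.1:ℤ)*Q.2 + (Q.1:ℤ)*P.2) * exZ
  have hy2 : (Q.2:ℤ)^2 = (P.2:ℤ)^2 := by
    have hnne : (n:ℤ) ≠ 0 := by exact_mod_cast hn.ne'
    exact sub_eq_zero.mp ((mul_eq_zero.mp hyy).resolve_left hnne)
  have hy : Q.2 = P.2 := by
    have hnat : Q.2^2 = P.2^2 := by exact_mod_cast hy2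
    exact Nat.pow_left_injective (by norm_num) hnat
  have hx : P.1 = Q.1 := by
    have h1 : (P.1:ℤ) * P.2 = (Q.1:ℤ) * P.2 := by rw [← hy] at exZ ⊢; exact exZ
    have h2 : (P.1:ℤ) = (Q.1:ℤ) := by
      have hp2 : (P.2:ℤ) ≠ 0 := by exact_mod_cast hyPpos.ne'
      exact mul_right_cancel₀ hp2 h1
    exact_mod_cast h2
  exact Prod.ext hx hy.symm


/-! ### Decoding the divisor map -/

lemma decode {a b m n : ℕ} (ha : 0 < a) (hn : 0 < n) {P Q : ℕ × ℕ}
    (hP : SolT a b m n P) (hQ : SolT a b m n Q)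
    (hD : DmapP a b m n P = DmapP a b m n Q) :
    cOf P = cOf Q ∧ ∀ p ∈ n.primeFactors, (bitP a b m n p P ↔ bitP a b m n p Q) := by
  obtain ⟨hXP, hYP, hcopP, hnuP, heqP, hXposP, hYposP, hnuposP⟩ := stratum ha hn hP
  obtain ⟨hXQ, hYQ, hcopQ, hnuQ, heqQ, hXposQ, hYposQ, hnuposQ⟩ := stratum ha hn hQ
  have hcPpos : 0 < cOf P := Nat.gcd_pos_of_pos_left _ hP.1
  have hcQpos : 0 < cOf Q := Nat.gcd_pos_of_pos_left _ hQ.1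
  have hprimes : ∀ p ∈ n.primeFactors, p.Prime := fun p hp => Nat.prime_of_mem_primeFactors hp
  have hfacP : ∀ p, 2 * (cOf P).factorization p + (nuOf n P).factorization p
      = n.factorization p := by
    intro p
    have h0 : ((cOf P)^2 * nuOf n P).factorization p
        = ((cOf P)^2).factorization p + (nuOf n P).factorization p := by
      rw [Nat.factorization_mul (pow_ne_zero 2 hcPpos.ne') hnuposP.ne']
      simp
    rw [hnuP] at h0
    rw [h0]
    have : ((cOf P)^2).factorization p = 2 * (cOf P).factorization p := by
      rw [Nat.factorization_pow]; simp [two_mul, mul_comm]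
    omega
  have hfacQ : ∀ p, 2 * (cOf Q).factorization p + (nuOf n Q).factorization p
      = n.factorization p := by
    intro p
    have h0 : ((cOf Q)^2 * nuOf n Q).factorization p
        = ((cOf Q)^2).factorization p + (nuOf n Q).factorization p := by
      rw [Nat.factorization_mul (pow_ne_zero 2 hcQpos.ne') hnuposQ.ne']
      simp
    rw [hnuQ] at h0
    rw [h0]
    have : ((cOf Q)^2).factorization p = 2 * (cOf Q).factorization p := by
      rw [Nat.factorization_pow]; simp [two_mul, mul_comm]
    omega
  have hsame : ∀ p ∈ n.primeFactors,
      (cOf P).factorization p = (cOf Q).factorization p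
      ∧ (bitP a b m n p P ↔ bitP a b m n p Q) := by
    intro p hp
    have e1 : (DmapP a b m n P).factorization p = deltaP a b m n p P := by
      rw [DmapP, prod_pow_fact hprimes _ p, if_pos hp]
    have e2 : (DmapP a b m n Q).factorization p = deltaP a b m n p Q := by
      rw [DmapP, prod_pow_fact hprimes _ p, if_pos hp]
    have hdel : deltaP a b m n p P = deltaP a b m n p Q := by
      rw [← e1, ← e2, hD]
    have hkP : bitP a b m n p P → 0 < (nuOf n P).factorization p := by
      intro hbit
      exact lt_of_le_of_lt (Nat.zero_le _) hbit.1
    have hkQ : bitP a b m n p Q → 0 < (nuOf n Q).factorization p := by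
      intro hbit
      exact lt_of_le_of_lt (Nat.zero_le _) hbit.1
    rw [deltaP, deltaP] at hdel
    by_cases hbP : bitP a b m n p P <;> by_cases hbQ : bitP a b m n p Q
    · rw [if_pos hbP, if_pos hbQ] at hdel
      have h1 := hfacP p
      have h2 := hfacQ p
      exact ⟨by omega, ⟨fun _ => hbQ, fun _ => hbP⟩⟩
    · rw [if_pos hbP, if_neg hbQ] at hdel
      have h1 := hfacP p
      have h2 := hfacQ p
      have h3 := hkP hbP
      omega
    · rw [if_neg hbP, if_pos hbQ] at hdel
      have h1 := hfacP p
      have h2 := hfacQ p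
      have h3 := hkQ hbQ
      omega
    · rw [if_neg hbP, if_neg hbQ] at hdel
      exact ⟨hdel, ⟨fun h => absurd h hbP, fun h => absurd h hbQ⟩⟩
  have hcdvdP : cOf P ∣ n := dvd_trans (dvd_pow_self (cOf P) two_ne_zero) ⟨nuOf n P, hnuP.symm⟩
  have hcdvdQ : cOf Q ∣ n := dvd_trans (dvd_pow_self (cOf Q) two_ne_zero) ⟨nuOf n Q, hnuQ.symm⟩
  constructor
  · apply Nat.eq_of_factorization_eq hcPpos.ne' hcQpos.ne'
    intro p
    by_cases hp : p ∈ n.primeFactors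
    · exact (hsame p hp).1
    · by_cases hpp : p.Prime
      · have hnd : ¬ p ∣ n := by
          intro hdvd
          exact hp (Nat.mem_primeFactors.mpr ⟨hpp, hdvd, hn.ne'⟩)
        rw [Nat.factorization_eq_zero_of_not_dvd (fun h => hnd (dvd_trans h hcdvdP)),
          Nat.factorization_eq_zero_of_not_dvd (fun h => hnd (dvd_trans h hcdvdQ))]
      · rw [Nat.factorization_eq_zero_of_not_prime _ hpp,
          Nat.factorization_eq_zero_of_not_prime _ hpp]
  · exact fun p hp => (hsame p hp).2

/-! ### Window index bound and membership -/

lemma Dmap_mem {a b m n : ℕ} (ha : 0 < a) (hn : 0 < n) {xy : ℕ × ℕ}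
    (h : SolT a b m n xy) : DmapP a b m n xy ∈ n.divisors := by
  obtain ⟨hX, hY, hcop, hnu, heq, hXpos, hYpos, hnupos⟩ := stratum ha hn h
  have hcpos : 0 < cOf xy := Nat.gcd_pos_of_pos_left _ h.1
  have hcdvd : cOf xy ∣ n := dvd_trans (dvd_pow_self (cOf xy) two_ne_zero) ⟨nuOf n xy, hnu.symm⟩
  have hprimes : ∀ p ∈ n.primeFactors, p.Prime := fun p hp => Nat.prime_of_mem_primeFactors hp
  rw [Nat.mem_divisors]
  refine ⟨?_, hn.ne'⟩
  rw [DmapP, ← Nat.factorization_le_iff_dvd (prod_pow_ne_zero hprimes _) hn.ne', Finsupp.le_def]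
  intro q
  rw [prod_pow_fact hprimes _ q]
  by_cases hq : q ∈ n.primeFactors
  · rw [if_pos hq]
    have hcf : (cOf xy).factorization q ≤ n.factorization q :=
      (Nat.factorization_le_iff_dvd hcpos.ne' hn.ne').mpr hcdvd q
    rw [deltaP]
    split_ifs
    · omega
    · omega
  · simp [hq]

lemma wdx_lt {a b m n : ℕ} (ha : 0 < a) (hb : 0 < b) (hn : 0 < n) {xy : ℕ × ℕ}
    (h : SolT a b m n xy) :
    wdxP a b xy < ⌊(Real.log 2 + Real.log m / 2) / Real.log (3/2)⌋₊ + 1 := by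
  obtain ⟨hx, hy, heqZ, hsz⟩ := h
  have heqN : a * xy.1^2 = b * xy.2^2 + n := by
    have h0 : ((a * xy.1^2 : ℕ) : ℤ) = ((b * xy.2^2 + n : ℕ) : ℤ) := by
      push_cast; linarith
    exact_mod_cast h0
  have hL : 0 < Real.log (3/2) := Real.log_pos (by norm_num)
  -- ξ < 2 √m
  have hby : Real.sqrt b * xy.2 < Real.sqrt a * xy.1 := by
    have h1 : (b:ℝ) * (xy.2:ℝ)^2 < (a:ℝ) * (xy.1:ℝ)^2 := by
      have : b * xy.2^2 < a * xy.1^2 := by omega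
      exact_mod_cast this
    have h2 : Real.sqrt ((b:ℝ) * (xy.2:ℝ)^2) < Real.sqrt ((a:ℝ) * (xy.1:ℝ)^2) :=
      Real.sqrt_lt_sqrt (by positivity) h1
    rwa [Real.sqrt_mul (by positivity) , Real.sqrt_mul (by positivity),
      Real.sqrt_sq (by positivity), Real.sqrt_sq (by positivity)] at h2
  have hax : Real.sqrt a * xy.1 ≤ Real.sqrt m := by
    have h1 : (a:ℝ) * (xy.1:ℝ)^2 ≤ (m:ℝ) := by exact_mod_cast hsz
    have h2 : Real.sqrt ((a:ℝ) * (xy.1:ℝ)^2) ≤ Real.sqrt m := Real.sqrt_le_sqrt h1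
    rwa [Real.sqrt_mul (by positivity), Real.sqrt_sq (by positivity)] at h2
  have hxi2 : xiR a b xy < 2 * Real.sqrt m := by
    rw [xiR]; nlinarith
  have hmpos : (0:ℝ) < Real.sqrt m := by
    have : (1:ℝ) ≤ (m:ℝ) := by
      exact_mod_cast Nat.one_le_iff_ne_zero.mpr (by
        rintro rfl
        simp at hsz
        rcases hsz with h | h
        · omega
        · omega)
    positivity
  have hxipos : 0 < xiR a b xy := by
    have h1 : (1:ℝ) ≤ Real.sqrt a := by
      rw [show (1:ℝ) = Real.sqrt 1 by simp]
      exact Real.sqrt_le_sqrt (by exact_mod_cast ha)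
    have hx1 : (1:ℝ) ≤ (xy.1:ℝ) := by exact_mod_cast hx
    have hy1 : (0:ℝ) ≤ Real.sqrt b * xy.2 := by positivity
    rw [xiR]; nlinarith
  have hlog : Real.log (xiR a b xy) ≤ Real.log 2 + Real.log m / 2 := by
    have h1 : Real.log (xiR a b xy) ≤ Real.log (2 * Real.sqrt m) :=
      Real.log_le_log (by positivity) (le_of_lt hxi2)
    rwa [Real.log_mul (by norm_num) hmpos.ne', Real.log_sqrt (by positivity)] at h1
  rw [wdxP, Nat.lt_succ_iff]
  apply Nat.floor_mono
  gcongr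


/-! ### Numerical bound on the number of windows -/

lemma exp_two_lt : Real.exp 2 < 7.59375 := by
  have h1 : Real.exp 2 = (Real.exp 1)^2 := by
    rw [show (2:ℝ) = 1 + 1 by norm_num, Real.exp_add]; ring
  rw [h1]
  nlinarith [Real.exp_one_lt_d9, Real.exp_pos 1]

lemma log_32_ge : (0.4:ℝ) ≤ Real.log (3/2) := by
  rw [Real.le_log_iff_exp_le (by norm_num : (0:ℝ) < 3/2)]
  by_contra hcon
  push_neg at hcon
  have h5 : (Real.exp 0.4)^5 = Real.exp 2 := by
    rw [← Real.exp_nat_mul]; norm_num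
  have hlt : ((3:ℝ)/2)^5 < (Real.exp 0.4)^5 := by
    apply pow_lt_pow_left₀ hcon (by norm_num)
    norm_num
  rw [h5] at hlt
  norm_num at hlt
  nlinarith [exp_two_lt]

lemma log_two_ge_half : (1/2:ℝ) ≤ Real.log 2 := by
  rw [Real.le_log_iff_exp_le (by norm_num : (0:ℝ) < 2)]
  by_contra hcon
  push_neg at hcon
  have h2 : (Real.exp (1/2))^2 = Real.exp 1 := by
    rw [← Real.exp_nat_mul]; norm_num
  have hlt : Real.exp 1 < 4 := lt_trans Real.exp_one_lt_d9 (by norm_num)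
  nlinarith [Real.exp_pos (1/2:ℝ), h2]

lemma log_three_ge_one : (1:ℝ) ≤ Real.log 3 := by
  rw [Real.le_log_iff_exp_le (by norm_num : (0:ℝ) < 3)]
  exact le_of_lt (lt_trans Real.exp_one_lt_d9 (by norm_num))

lemma Wb_le {m : ℕ} (hm : 0 < m) :
    ((⌊(Real.log 2 + Real.log m / 2) / Real.log (3/2)⌋₊ + 1 : ℕ) : ℝ)
      ≤ 2 * (1 + Real.log m) := by
  have hL : 0 < Real.log (3/2) := Real.log_pos (by norm_num)
  have hlog2pos : 0 < Real.log 2 := Real.log_pos (by norm_num)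
  have hlog2 : Real.log 2 < 0.6931471808 := Real.log_two_lt_d9
  have hL04 := log_32_ge
  rcases Nat.lt_or_ge m 3 with hm3 | hm3
  · interval_cases m
    · -- m = 1
      have hq : (Real.log 2 + Real.log (1:ℕ) / 2) / Real.log (3/2) < 2 := by
        rw [Nat.cast_one, Real.log_one]
        rw [div_lt_iff₀ hL]
        have h94 : Real.log 2 < 2 * Real.log (3/2) := by
          have : 2 * Real.log (3/2) = Real.log ((3/2)^2) := by
            rw [Real.log_pow]; push_cast; ring
          rw [this]
          apply Real.log_lt_log (by norm_num)
          norm_num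
        linarith
      have hfl : ⌊(Real.log 2 + Real.log (1:ℕ) / 2) / Real.log (3/2)⌋₊ < 2 := by
        rw [Nat.floor_lt (by positivity)]
        exact_mod_cast hq
      have : (⌊(Real.log 2 + Real.log (1:ℕ) / 2) / Real.log (3/2)⌋₊ : ℕ) ≤ 1 := by omega
      have hcast : ((⌊(Real.log 2 + Real.log (1:ℕ) / 2) / Real.log (3/2)⌋₊ + 1 : ℕ) : ℝ) ≤ 2 := by
        exact_mod_cast Nat.add_le_add_right this 1
      rw [Nat.cast_one, Real.log_one]
      rw [Nat.cast_one, Real.log_one] at hcast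
      linarith
    · -- m = 2
      have hq : (Real.log 2 + Real.log (2:ℕ) / 2) / Real.log (3/2) < 3 := by
        rw [Nat.cast_ofNat]
        rw [div_lt_iff₀ hL]
        have h94 : Real.log 2 < 2 * Real.log (3/2) := by
          have : 2 * Real.log (3/2) = Real.log ((3/2)^2) := by
            rw [Real.log_pow]; push_cast; ring
          rw [this]
          apply Real.log_lt_log (by norm_num)
          norm_num
        linarith
      have hfl : ⌊(Real.log 2 + Real.log (2:ℕ) / 2) / Real.log (3/2)⌋₊ < 3 := by
        rw [Nat.floor_lt (by positivity)]
        exact_mod_cast hq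
      have h1 : (⌊(Real.log 2 + Real.log (2:ℕ) / 2) / Real.log (3/2)⌋₊ : ℕ) ≤ 2 := by omega
      have hcast : ((⌊(Real.log 2 + Real.log (2:ℕ) / 2) / Real.log (3/2)⌋₊ + 1 : ℕ) : ℝ) ≤ 3 := by
        exact_mod_cast Nat.add_le_add_right h1 1
      have hc2 : Real.log ((2:ℕ):ℝ) = Real.log 2 := by norm_num
      rw [hc2] at hcast ⊢
      have := log_two_ge_half
      linarith
  · -- m ≥ 3
    have hm1 : (1:ℝ) ≤ Real.log m := by
      calc (1:ℝ) ≤ Real.log 3 := log_three_ge_one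
        _ ≤ Real.log m := by
            apply Real.log_le_log (by norm_num)
            exact_mod_cast hm3
    have hq : (Real.log 2 + Real.log m / 2) / Real.log (3/2) ≤ 1 + 2 * Real.log m := by
      rw [div_le_iff₀ hL]
      have hprod : (0.3:ℝ) * 1 ≤ (2 * Real.log (3/2) - 1/2) * Real.log m := by
        apply mul_le_mul (by linarith) hm1 (by norm_num) (by linarith)
      nlinarith [hL04, hlog2, hm1]
    have hfl : (⌊(Real.log 2 + Real.log m / 2) / Real.log (3/2)⌋₊ : ℝ)
        ≤ (Real.log 2 + Real.log m / 2) / Real.log (3/2) :=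
      Nat.floor_le (by positivity)
    have : ((⌊(Real.log 2 + Real.log m / 2) / Real.log (3/2)⌋₊ + 1 : ℕ) : ℝ)
        = (⌊(Real.log 2 + Real.log m / 2) / Real.log (3/2)⌋₊ : ℝ) + 1 := by push_cast; ring
    rw [this]
    linarith

end EstLemma

/-- **Estermann's lemma on `ax² - by² = n`.**
For positive integers `a`, `b`, `m`, `n`, the number of solutions of `ax² - by² = n` in
positive integers `x`, `y` with `ax² ≤ m` is at most `2 d(n) (1 + log m)`. -/
theorem count_ax2_sub_by2_le (a b m n : ℕ) (ha : 0 < a) (hb : 0 < b) (hm : 0 < m)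
    (hn : 0 < n) :
    (Nat.card {xy : ℕ × ℕ // 0 < xy.1 ∧ 0 < xy.2 ∧
        (a : ℤ) * (xy.1 : ℤ) ^ 2 - (b : ℤ) * (xy.2 : ℤ) ^ 2 = (n : ℤ) ∧
        a * xy.1 ^ 2 ≤ m} : ℝ)
      ≤ 2 * n.divisors.card * (1 + Real.log m) := by
  classical
  open EstLemma in
  set W : ℕ := ⌊(Real.log 2 + Real.log m / 2) / Real.log (3/2)⌋₊ + 1 with hW
  have hcard : Nat.card {xy : ℕ × ℕ // 0 < xy.1 ∧ 0 < xy.2 ∧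
        (a : ℤ) * (xy.1 : ℤ) ^ 2 - (b : ℤ) * (xy.2 : ℤ) ^ 2 = (n : ℤ) ∧
        a * xy.1 ^ 2 ≤ m} ≤ W * n.divisors.card := by
    have hSol : ∀ xy : {xy : ℕ × ℕ // 0 < xy.1 ∧ 0 < xy.2 ∧
        (a : ℤ) * (xy.1 : ℤ) ^ 2 - (b : ℤ) * (xy.2 : ℤ) ^ 2 = (n : ℤ) ∧
        a * xy.1 ^ 2 ≤ m}, SolT a b m n xy.1 := fun xy => xy.2
    have hmem : ∀ xy : {xy : ℕ × ℕ // 0 < xy.1 ∧ 0 < xy.2 ∧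
        (a : ℤ) * (xy.1 : ℤ) ^ 2 - (b : ℤ) * (xy.2 : ℤ) ^ 2 = (n : ℤ) ∧
        a * xy.1 ^ 2 ≤ m},
        (wdxP a b xy.1, DmapP a b m n xy.1) ∈ Finset.range W ×ˢ n.divisors := by
      intro xy
      rw [Finset.mem_product, Finset.mem_range]
      exact ⟨hW ▸ wdx_lt ha hb hn (hSol xy), Dmap_mem ha hn (hSol xy)⟩
    let F : {xy : ℕ × ℕ // 0 < xy.1 ∧ 0 < xy.2 ∧
        (a : ℤ) * (xy.1 : ℤ) ^ 2 - (b : ℤ) * (xy.2 : ℤ) ^ 2 = (n : ℤ) ∧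
        a * xy.1 ^ 2 ≤ m} → {q : ℕ × ℕ // q ∈ Finset.range W ×ˢ n.divisors} :=
      fun xy => ⟨(wdxP a b xy.1, DmapP a b m n xy.1), hmem xy⟩
    have hinj : Function.Injective F := by
      intro P Q hFPQ
      have h1 : wdxP a b P.1 = wdxP a b Q.1 := by
        have := congrArg (fun t => t.1.1) hFPQ
        simpa [F] using this
      have h2 : DmapP a b m n P.1 = DmapP a b m n Q.1 := by
        have := congrArg (fun t => t.1.2) hFPQ
        simpa [F] using this
      obtain ⟨hc, hbit⟩ := decode ha hn (hSol P) (hSol Q) h2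
      exact Subtype.ext (same_sol ha hb hn (hSol P) (hSol Q) hc hbit h1)
    calc Nat.card _ ≤ Nat.card {q : ℕ × ℕ // q ∈ Finset.range W ×ˢ n.divisors} :=
          Nat.card_le_card_of_injective F hinj
      _ = (Finset.range W ×ˢ n.divisors).card := by
          rw [Nat.card_eq_fintype_card]; exact Fintype.card_coe _
      _ = W * n.divisors.card := by rw [Finset.card_product, Finset.card_range]
  have hWle : (W:ℝ) ≤ 2 * (1 + Real.log m) := hW ▸ Wb_le hm
  calc (Nat.card {xy : ℕ × ℕ // 0 < xy.1 ∧ 0 < xy.2 ∧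
        (a : ℤ) * (xy.1 : ℤ) ^ 2 - (b : ℤ) * (xy.2 : ℤ) ^ 2 = (n : ℤ) ∧
        a * xy.1 ^ 2 ≤ m} : ℝ)
      ≤ ((W * n.divisors.card : ℕ) : ℝ) := by exact_mod_cast hcard
    _ = (W:ℝ) * (n.divisors.card : ℝ) := by push_cast; ring
    _ ≤ (2 * (1 + Real.log m)) * (n.divisors.card : ℝ) := by
        apply mul_le_mul_of_nonneg_right hWle (by positivity)
    _ = 2 * n.divisors.card * (1 + Real.log m) := by ring
end

section
/- Suppose that n is a positive integer, b an integer, and P ≥ 1 a real number, and let S(P;n,b) denote the number of integers y ∈ [−P, P] such that n·y + b is a perfect square. Let k² be the largest square dividing gcd(n,b) (with the convention gcd(n,0) = n). Then for every ε > 0 there is a constant C depending only on ε such that S(P;n,b) ≤ C·n^ε·(1 + k·√(P/n)). -/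
lemma exp_quad (x : ℝ) (hx : 0 ≤ x) : x^2/4 ≤ Real.exp x := by
  have h := Real.add_one_le_exp (x/2)
  have h2 : Real.exp x = Real.exp (x/2) * Real.exp (x/2) := by
    rw [← Real.exp_add]; ring_nf
  nlinarith [Real.exp_pos (x/2)]

lemma pointwise (ε : ℝ) (hε : 0 < ε) :
    ∃ M : ℝ, 1 ≤ M ∧ ∀ a : ℕ, (a + 1 : ℝ) ≤ M * (2:ℝ) ^ (ε * a) := by
  refine ⟨max 1 (8 / (ε * Real.log 2)^2), le_max_left _ _, fun a => ?_⟩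
  have hlog : 0 < Real.log 2 := Real.log_pos (by norm_num)
  have hx : 0 ≤ ε * a * Real.log 2 := by positivity
  have hrw : (2:ℝ) ^ (ε * a) = Real.exp (ε * a * Real.log 2) := by
    rw [Real.rpow_def_of_pos (by norm_num), mul_comm (Real.log 2)]
  rcases Nat.eq_zero_or_pos a with rfl | ha
  · simpa [hrw] using le_max_left (1:ℝ) (8 / (ε * Real.log 2)^2)
  · have hq := exp_quad _ hx
    rw [hrw]
    have hM : 8 / (ε * Real.log 2)^2 ≤ max 1 (8 / (ε * Real.log 2)^2) := le_max_right _ _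
    have ha1 : (1:ℝ) ≤ a := by exact_mod_cast ha
    have hpos : 0 < (ε * Real.log 2)^2 := by positivity
    have key : (a + 1 : ℝ) ≤ (8 / (ε * Real.log 2)^2) * ((ε * a * Real.log 2)^2/4) := by
      rw [div_mul_div_comm, le_div_iff₀ (by positivity)]
      have : (ε * a * Real.log 2)^2 = (a:ℝ)^2 * (ε * Real.log 2)^2 := by ring
      rw [this]
      have h4 : ((a:ℝ)+1)*4 ≤ 8*(a:ℝ)^2 := by nlinarith
      nlinarith [mul_le_mul_of_nonneg_right h4 hpos.le]
    calc (a + 1 : ℝ) ≤ (8 / (ε * Real.log 2)^2) * ((ε * a * Real.log 2)^2/4) := key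
      _ ≤ max 1 (8 / (ε * Real.log 2)^2) * Real.exp (ε * a * Real.log 2) := by
        apply mul_le_mul hM ?_ (by positivity) (by positivity)
        exact le_trans (by nlinarith) hq

lemma divisor_bound (ε : ℝ) (hε : 0 < ε) :
    ∃ C : ℝ, 1 ≤ C ∧ ∀ n : ℕ, n ≠ 0 → (n.divisors.card : ℝ) ≤ C * (n:ℝ) ^ ε := by
  obtain ⟨M, hM1, hM⟩ := pointwise ε hε
  set thr : ℕ := ⌈(2:ℝ)^(1/ε)⌉₊ with hthr
  set S := (Finset.range (thr+1)).filter Nat.Prime with hS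
  refine ⟨M ^ S.card, one_le_pow₀ hM1, fun n hn => ?_⟩
  have hd : (n.divisors.card : ℝ) = ∏ p ∈ n.primeFactors, ((n.factorization p : ℝ) + 1) := by
    rw [Nat.card_divisors hn]; push_cast; rfl
  have hnprod : (n:ℝ) = ∏ p ∈ n.primeFactors, (p:ℝ) ^ (n.factorization p) := by
    conv_lhs => rw [← Nat.factorization_prod_pow_eq_self hn]
    rw [Finsupp.prod, Nat.support_factorization]
    push_cast; rfl
  have hrpow : (n:ℝ) ^ ε = ∏ p ∈ n.primeFactors, ((p:ℝ) ^ ε) ^ (n.factorization p) := by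
    rw [hnprod, ← Real.finset_prod_rpow _ _ (fun p _ => by positivity) ε]
    apply Finset.prod_congr rfl
    intro p hp
    have hp2 : (0:ℝ) ≤ p := by positivity
    rw [← Real.rpow_natCast (p:ℝ) (n.factorization p), ← Real.rpow_mul hp2,
        mul_comm, Real.rpow_mul hp2, Real.rpow_natCast]
  have key : ∀ p ∈ n.primeFactors,
      ((n.factorization p : ℝ) + 1) ≤ (if p ∈ S then M else 1) * ((p:ℝ) ^ ε) ^ (n.factorization p) := by
    intro p hp
    have hpp : p.Prime := Nat.prime_of_mem_primeFactors hp
    have hp2 : (2:ℝ) ≤ p := by exact_mod_cast hpp.two_le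
    set a := n.factorization p
    by_cases hmem : p ∈ S
    · rw [if_pos hmem]
      calc ((a:ℝ)+1) ≤ M * (2:ℝ) ^ (ε * a) := hM a
        _ ≤ M * ((p:ℝ) ^ ε) ^ a := by
          apply mul_le_mul_of_nonneg_left _ (le_trans zero_le_one hM1)
          rw [← Real.rpow_natCast ((p:ℝ)^ε) a, ← Real.rpow_mul (by positivity), mul_comm ε]
          exact Real.rpow_le_rpow (by norm_num) hp2 (by positivity)
    · rw [if_neg hmem, one_mul]
      have hbig : (2:ℝ)^(1/ε) ≤ p := by
        have : thr + 1 ≤ p := by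
          by_contra hlt
          exact hmem (Finset.mem_filter.mpr ⟨Finset.mem_range.mpr (by omega), hpp⟩)
        calc (2:ℝ)^(1/ε) ≤ thr := Nat.le_ceil _
          _ ≤ p := by exact_mod_cast Nat.le_of_succ_le this
      have h2le : (2:ℝ) ≤ (p:ℝ) ^ ε := by
        calc (2:ℝ) = ((2:ℝ)^(1/ε)) ^ ε := by
              rw [← Real.rpow_mul (by norm_num), one_div_mul_cancel hε.ne', Real.rpow_one]
          _ ≤ (p:ℝ) ^ ε := Real.rpow_le_rpow (by positivity) hbig hε.le
      calc ((a:ℝ)+1) ≤ (2:ℝ)^a := by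
            have := Nat.lt_two_pow_self (n := a)
            exact_mod_cast this
        _ ≤ ((p:ℝ)^ε)^a := pow_le_pow_left₀ (by norm_num) h2le a
  calc (n.divisors.card : ℝ) = ∏ p ∈ n.primeFactors, ((n.factorization p : ℝ) + 1) := hd
    _ ≤ ∏ p ∈ n.primeFactors, (if p ∈ S then M else 1) * ((p:ℝ) ^ ε) ^ (n.factorization p) :=
        Finset.prod_le_prod (fun p _ => by positivity) key
    _ = (∏ p ∈ n.primeFactors, if p ∈ S then M else 1) * ∏ p ∈ n.primeFactors, ((p:ℝ) ^ ε) ^ (n.factorization p) := Finset.prod_mul_distrib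
    _ ≤ M ^ S.card * (n:ℝ) ^ ε := by
        rw [← hrpow]
        apply mul_le_mul_of_nonneg_right _ (by positivity)
        rw [Finset.prod_ite_mem, Finset.prod_const]
        exact pow_le_pow_right₀ hM1 (Finset.card_le_card Finset.inter_subset_right)


lemma fiber_count (G : Finset ℤ) (q : ℕ) (hq : 0 < q) (m₁ : ℤ) (hm₁ : m₁ ∈ G) (L : ℝ)
    (hdvd : ∀ m ∈ G, (q:ℤ) ∣ m - m₁) (hint : ∀ m ∈ G, |(m:ℝ) - m₁| ≤ L) :
    (G.card : ℝ) ≤ 2 * (L / q) + 1 := by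
  have hq0 : (0:ℝ) < q := by exact_mod_cast hq
  have hqz : (q:ℤ) ≠ 0 := by exact_mod_cast hq.ne'
  set J : ℕ := ⌊L / q⌋₊ with hJ
  have hcard : G.card ≤ (Finset.Icc (-(J:ℤ)) J).card := by
    apply Finset.card_le_card_of_injOn (fun m => (m - m₁) / q)
    · intro m hm
      obtain ⟨e, he⟩ := hdvd m hm
      have hdiv : (m - m₁) / (q:ℤ) = e := by rw [he, Int.mul_ediv_cancel_left _ hqz]
      show (m - m₁) / (q:ℤ) ∈ Finset.Icc (-(J:ℤ)) J
      rw [Finset.mem_Icc, hdiv]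
      have hz : |m - m₁| = (q:ℤ) * |e| := by
        rw [he, abs_mul, abs_of_nonneg (by positivity : (0:ℤ) ≤ (q:ℤ))]
      have hcast : ((|m - m₁| : ℤ) : ℝ) ≤ L := by
        rw [Int.cast_abs]; push_cast; exact hint m hm
      have habs : (e.natAbs : ℝ) ≤ L / q := by
        rw [le_div_iff₀ hq0]
        rw [hz] at hcast
        push_cast at hcast
        rw [Nat.cast_natAbs]
        push_cast
        linarith
      have hJe : e.natAbs ≤ J := Nat.le_floor habs
      omega
    · intro x hx y hy hxy
      have hxy' : (x - m₁)/(q:ℤ) = (y - m₁)/(q:ℤ) := hxy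
      obtain ⟨ex, hex⟩ := hdvd x (by simpa using hx)
      obtain ⟨ey, hey⟩ := hdvd y (by simpa using hy)
      rw [hex, hey, Int.mul_ediv_cancel_left _ hqz, Int.mul_ediv_cancel_left _ hqz] at hxy'
      have : x - m₁ = y - m₁ := by rw [hex, hey, hxy']
      omega
  have hicc : ((Finset.Icc (-(J:ℤ)) J).card : ℝ) = 2 * J + 1 := by
    rw [Int.card_Icc]
    have h2 : ((J:ℤ) + 1 - -(J:ℤ)).toNat = 2 * J + 1 := by omega
    rw [h2]; push_cast; ring
  have hL0 : 0 ≤ L := le_trans (abs_nonneg _) (hint m₁ hm₁)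
  calc (G.card : ℝ) ≤ ((Finset.Icc (-(J:ℤ)) J).card : ℝ) := by exact_mod_cast hcard
    _ = 2 * J + 1 := hicc
    _ ≤ 2 * (L / q) + 1 := by
      have : (J:ℝ) ≤ L / q := Nat.floor_le (by positivity)
      linarith

set_option maxHeartbeats 1000000 in
/-- **Counting `y ∈ [-P,P]` with `ny + b` a perfect square.**
If `n` is a positive integer, `b` an integer, `P ≥ 1`, and `k²` is the largest square
dividing `gcd(n,b)`, then the number of integers `y ∈ [-P,P]` such that `ny + b` is a
perfect square is `≪_ε n^ε (1 + k √(P/n))`. -/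
theorem count_square_values_linear (ε : ℝ) (hε : 0 < ε) :
    ∃ C : ℝ, ∀ (n : ℕ) (b : ℤ) (P : ℝ) (k : ℕ), 0 < n → 1 ≤ P →
      k ^ 2 ∣ Int.gcd (n : ℤ) b → (∀ k' : ℕ, k' ^ 2 ∣ Int.gcd (n : ℤ) b → k' ≤ k) →
      (Nat.card {y : ℤ // (|y| : ℝ) ≤ P ∧ ∃ m : ℤ, (n : ℤ) * y + b = m ^ 2} : ℝ)
        ≤ C * (n : ℝ) ^ ε * (1 + (k : ℝ) * Real.sqrt (P / (n : ℝ))) := by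
  classical
  obtain ⟨D, hD1, hD⟩ := divisor_bound ε hε
  refine ⟨6 * D, ?_⟩
  intro n b P k hn hP hk hkmax
  have hn0 : (0:ℝ) < n := by exact_mod_cast hn
  have hnZ : ((n:ℤ)) ≠ 0 := by exact_mod_cast hn.ne'
  have hP0 : (0:ℝ) < P := lt_of_lt_of_le one_pos hP
  have hk1 : 1 ≤ k := hkmax 1 (by simpa using one_dvd _)
  have hk0 : (0:ℝ) < k := by exact_mod_cast hk1
  set L : ℝ := Real.sqrt (2 * n * P) with hLdef
  have hL0 : 0 ≤ L := Real.sqrt_nonneg _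
  set Q : ℝ := 4 * k * L / n with hQdef
  have hQ0 : 0 ≤ Q := by positivity
  set Mset : Set ℤ :=
    {m | 0 ≤ m ∧ ((m:ℝ)^2 ≤ (b:ℝ) + n * P ∧ (b:ℝ) - n * P ≤ (m:ℝ)^2) ∧ (n:ℤ) ∣ m^2 - b}
    with hMdef
  have hfin : Mset.Finite := by
    apply Set.Finite.subset (Set.finite_Icc (0:ℤ) ⌈Real.sqrt ((b:ℝ) + n*P)⌉)
    rintro m ⟨h0, ⟨h1, _⟩, _⟩
    refine Set.mem_Icc.mpr ⟨h0, ?_⟩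
    have hm : (m:ℝ) ≤ Real.sqrt ((b:ℝ) + n*P) := by
      calc (m:ℝ) = |(m:ℝ)| := (abs_of_nonneg (by exact_mod_cast h0)).symm
        _ = Real.sqrt ((m:ℝ)^2) := (Real.sqrt_sq_eq_abs _).symm
        _ ≤ _ := Real.sqrt_le_sqrt h1
    exact_mod_cast hm.trans (Int.le_ceil _)
  haveI := hfin.to_subtype
  have hsqrt : ∀ y : ℤ, (∃ m : ℤ, (n:ℤ)*y + b = m^2) →
      ((Int.sqrt ((n:ℤ)*y + b) : ℤ))^2 = (n:ℤ)*y + b := by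
    rintro y ⟨m, hm⟩
    rw [hm, sq m, Int.sqrt_eq, ← sq, Int.natAbs_sq]
  have hmem : ∀ y : ℤ, ((|y| : ℝ) ≤ P ∧ ∃ m : ℤ, (n:ℤ)*y + b = m^2) →
      Int.sqrt ((n:ℤ)*y + b) ∈ Mset := by
    rintro y ⟨hy, hex⟩
    have h2 := hsqrt y hex
    have hyP : |(y:ℝ)| ≤ P := by
      rw [← Int.cast_abs]; exact_mod_cast hy
    obtain ⟨hy1, hy2⟩ := abs_le.mp hyP
    have hcast : ((Int.sqrt ((n:ℤ)*y + b) : ℤ):ℝ)^2 = (n:ℝ)*(y:ℝ) + (b:ℝ) := by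
      have h3 := congrArg (fun z : ℤ => (z:ℝ)) h2
      push_cast at h3
      linarith [h3]
    refine ⟨Int.sqrt_nonneg _, ⟨?_, ?_⟩, ⟨y, by rw [h2]; ring⟩⟩
    · rw [hcast]; nlinarith
    · rw [hcast]; nlinarith
  have step1 : (Nat.card {y : ℤ // (|y| : ℝ) ≤ P ∧ ∃ m : ℤ, (n : ℤ) * y + b = m ^ 2})
      ≤ Nat.card Mset := by
    apply Nat.card_le_card_of_injective
      (fun y => (⟨Int.sqrt ((n:ℤ)*y.1 + b), hmem y.1 y.2⟩ : Mset))
    intro y y' hyy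
    have hval : Int.sqrt ((n:ℤ)*y.1 + b) = Int.sqrt ((n:ℤ)*y'.1 + b) := congrArg Subtype.val hyy
    have heq : (n:ℤ)*y.1 + b = (n:ℤ)*y'.1 + b := by
      rw [← hsqrt y.1 y.2.2, ← hsqrt y'.1 y'.2.2, hval]
    ext
    exact mul_left_cancel₀ hnZ (by linarith)
  set Fs : Finset ℤ := hfin.toFinset with hFs
  have step2 : Nat.card Mset = Fs.card := by
    rw [Nat.card_coe_set_eq, Set.ncard_eq_toFinset_card Mset hfin]
  have main : (Fs.card : ℝ) ≤ (n.divisors.card : ℝ) * (1 + Q) := by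
    rcases Fs.eq_empty_or_nonempty with hFe | ⟨m₀, hm₀⟩
    · rw [hFe]; simp; positivity
    have hm₀M : m₀ ∈ Mset := (Set.Finite.mem_toFinset hfin).mp hm₀
    have hkeymem : ∀ m ∈ Fs, Int.gcd (n:ℤ) (m - m₀) ∈ n.divisors := by
      intro m hm
      refine Nat.mem_divisors.mpr ⟨?_, hn.ne'⟩
      have h := Int.gcd_dvd_left (a := (n:ℤ)) (b := m - m₀)
      exact_mod_cast h
    have hsum := Finset.card_eq_sum_card_fiberwise hkeymem
    have hfib : ∀ d ∈ n.divisors,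
        ((Fs.filter (fun m => Int.gcd (n:ℤ) (m - m₀) = d)).card : ℝ) ≤ 1 + Q := by
      intro d hd
      set G := Fs.filter (fun m => Int.gcd (n:ℤ) (m - m₀) = d) with hG
      rcases G.eq_empty_or_nonempty with hGe | ⟨m₁, hm₁⟩
      · rw [hGe]; simp; positivity
      obtain ⟨hm₁F, hm₁key⟩ := Finset.mem_filter.mp hm₁
      have hm₁M : m₁ ∈ Mset := (hfin.mem_toFinset).mp hm₁F
      have hd_dvd : d ∣ n := (Nat.mem_divisors.mp hd).1
      have hd0 : 0 < d := Nat.pos_of_mem_divisors hd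
      have hdz : (d:ℤ) ≠ 0 := by exact_mod_cast hd0.ne'
      set nd := n / d with hndd
      have hnd0 : 0 < nd := Nat.div_pos (Nat.le_of_dvd hn hd_dvd) hd0
      have hdnd : d * nd = n := Nat.mul_div_cancel' hd_dvd
      have hfacts : ∀ m ∈ G, (d:ℤ) ∣ m - m₀ ∧ ((nd:ℕ):ℤ) ∣ m + m₀ := by
        intro m hm
        obtain ⟨hmF, hmkey⟩ := Finset.mem_filter.mp hm
        have hmM : m ∈ Mset := (hfin.mem_toFinset).mp hmF
        have hdZ : (d:ℤ) ∣ m - m₀ := by rw [← hmkey]; exact Int.gcd_dvd_right _ _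
        refine ⟨hdZ, ?_⟩
        obtain ⟨e, he⟩ := hdZ
        have hnmul : (n:ℤ) ∣ (m - m₀)*(m + m₀) := by
          obtain ⟨_, _, hm3⟩ := hmM
          obtain ⟨_, _, hm03⟩ := hm₀M
          have h := dvd_sub hm3 hm03
          have hrw : (m - m₀)*(m + m₀) = (m^2 - b) - (m₀^2 - b) := by ring
          rw [hrw]; exact h
        have hco : Int.gcd ((nd:ℕ):ℤ) e = 1 := by
          have h := Int.gcd_div_gcd_div_gcd (i := (n:ℤ)) (j := m - m₀) (by rw [hmkey]; exact hd0)
          rw [hmkey] at h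
          have e1 : (n:ℤ)/(d:ℤ) = ((nd:ℕ):ℤ) := by
            rw [← hdnd]; push_cast; rw [Int.mul_ediv_cancel_left _ hdz]
          have e2 : (m - m₀)/(d:ℤ) = e := by rw [he, Int.mul_ediv_cancel_left _ hdz]
          rwa [e1, e2] at h
        have hnd_dvd : ((nd:ℕ):ℤ) ∣ e * (m + m₀) := by
          have hmm : (d:ℤ) * ((nd:ℕ):ℤ) ∣ (d:ℤ) * (e * (m + m₀)) := by
            have hrw : (d:ℤ) * (e * (m + m₀)) = (m - m₀)*(m + m₀) := by rw [he]; ring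
            rw [hrw]
            have hrw2 : (d:ℤ) * ((nd:ℕ):ℤ) = (n:ℤ) := by exact_mod_cast hdnd
            rw [hrw2]; exact hnmul
          exact (mul_dvd_mul_iff_left hdz).mp hmm
        exact (Int.isCoprime_iff_gcd_eq_one.mpr hco).dvd_of_dvd_mul_left hnd_dvd
      set q := Nat.lcm d nd with hqd
      have hq0 : 0 < q := Nat.lcm_pos hd0 hnd0
      set g := Nat.gcd d nd with hgd
      have hgq : g * q = n := by rw [hgd, hqd, Nat.gcd_mul_lcm, hdnd]
      have hf1 := hfacts m₁ hm₁
      have hgm1 : (g:ℤ) ∣ m₁ - m₀ :=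
        dvd_trans (by exact_mod_cast Nat.gcd_dvd_left d nd) hf1.1
      have hgp1 : (g:ℤ) ∣ m₁ + m₀ :=
        dvd_trans (by exact_mod_cast Nat.gcd_dvd_right d nd) hf1.2
      have hg2m : (g:ℤ) ∣ 2 * m₁ := by
        rw [show (2:ℤ)*m₁ = (m₁ - m₀) + (m₁ + m₀) by ring]
        exact dvd_add hgm1 hgp1
      set g₁ := if 2 ∣ g then g / 2 else g with hg₁d
      have hg₁g : g₁ ∣ g := by
        by_cases h2 : 2 ∣ g
        · rw [hg₁d, if_pos h2]; exact Nat.div_dvd_of_dvd h2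
        · rw [hg₁d, if_neg h2]
      have hg₁m : ((g₁:ℕ):ℤ) ∣ m₁ := by
        by_cases h2 : 2 ∣ g
        · rw [hg₁d, if_pos h2]
          obtain ⟨h, hh⟩ := h2
          have hg2 : g / 2 = h := by omega
          rw [hg2]
          have hmul : (2:ℤ) * (h:ℕ) ∣ 2 * m₁ := by
            have : ((g:ℕ):ℤ) = 2 * (h:ℕ) := by exact_mod_cast hh
            rwa [this] at hg2m
          exact (mul_dvd_mul_iff_left (two_ne_zero)).mp hmul
        · rw [hg₁d, if_neg h2]
          have hco : IsCoprime ((g:ℕ):ℤ) 2 := by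
            rw [Int.isCoprime_iff_gcd_eq_one]
            rw [show ((2:ℤ)) = ((2:ℕ):ℤ) by norm_num, Int.gcd_natCast_natCast]
            exact Nat.coprime_two_right.mpr (Nat.odd_iff.mpr (by omega))
          exact hco.dvd_of_dvd_mul_left hg2m
      have hg2g₁ : g ≤ 2 * g₁ := by
        by_cases h2 : 2 ∣ g
        · rw [hg₁d, if_pos h2]; omega
        · rw [hg₁d, if_neg h2]; omega
      have hg₁n : g₁^2 ∣ n := by
        have h2 : g * g ∣ n := by
          rw [← hdnd]; exact mul_dvd_mul (Nat.gcd_dvd_left _ _) (Nat.gcd_dvd_right _ _)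
        calc g₁^2 ∣ g*g := by rw [sq]; exact mul_dvd_mul hg₁g hg₁g
          _ ∣ n := h2
      have hg₁b : ((g₁:ℕ):ℤ)^2 ∣ b := by
        have hnb : (n:ℤ) ∣ m₁^2 - b := hm₁M.2.2
        have h1 : ((g₁:ℕ):ℤ)^2 ∣ m₁^2 := pow_dvd_pow_of_dvd hg₁m 2
        have h2 : ((g₁:ℕ):ℤ)^2 ∣ (n:ℤ) := by exact_mod_cast hg₁n
        rw [show b = m₁^2 - (m₁^2 - b) by ring]
        exact dvd_sub h1 (h2.trans hnb)
      have hg₁k : g₁ ≤ k := by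
        apply hkmax
        have h2Z : ((g₁:ℕ):ℤ)^2 ∣ (n:ℤ) := by exact_mod_cast hg₁n
        have h := Int.dvd_gcd h2Z hg₁b
        exact_mod_cast h
      have hnkq : n ≤ 2 * k * q := by
        calc n = g * q := hgq.symm
          _ ≤ (2*k) * q := Nat.mul_le_mul_right _ (le_trans hg2g₁ (by omega))
      have hqdvd : ∀ m ∈ G, (q:ℤ) ∣ m - m₁ := by
        intro m hm
        have h1 := hfacts m hm
        have hdm : (d:ℤ) ∣ m - m₁ := by
          rw [show m - m₁ = (m - m₀) - (m₁ - m₀) by ring]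
          exact dvd_sub h1.1 hf1.1
        have hndm : ((nd:ℕ):ℤ) ∣ m - m₁ := by
          rw [show m - m₁ = (m + m₀) - (m₁ + m₀) by ring]
          exact dvd_sub h1.2 hf1.2
        have h : ((Int.lcm (d:ℤ) ((nd:ℕ):ℤ) : ℕ) : ℤ) ∣ m - m₁ := by
          rw [Int.coe_lcm]; exact lcm_dvd hdm hndm
        have hlcm : Int.lcm (d:ℤ) ((nd:ℕ):ℤ) = q := by
          simp [Int.lcm, hqd]
        rwa [hlcm] at h
      have hintv : ∀ m ∈ G, |(m:ℝ) - m₁| ≤ L := by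
        intro m hm
        have hmM : m ∈ Mset := (hfin.mem_toFinset).mp (Finset.mem_filter.mp hm).1
        obtain ⟨ha0, ⟨ha1, ha2⟩, -⟩ := hmM
        obtain ⟨hb0, ⟨hb1, hb2⟩, -⟩ := hm₁M
        have h0 : (0:ℝ) ≤ (m:ℝ) := by exact_mod_cast ha0
        have h0' : (0:ℝ) ≤ (m₁:ℝ) := by exact_mod_cast hb0
        have hsq : ((m:ℝ) - m₁)^2 ≤ 2*n*P := by
          nlinarith [mul_nonneg h0 h0', sq_nonneg ((m:ℝ) - m₁), sq_nonneg ((m:ℝ) + m₁),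
            mul_nonneg (mul_nonneg h0 h0') (sq_nonneg ((m:ℝ) - m₁))]
        calc |(m:ℝ) - m₁| = Real.sqrt (((m:ℝ)-m₁)^2) := (Real.sqrt_sq_eq_abs _).symm
          _ ≤ L := Real.sqrt_le_sqrt hsq
      have hfc := fiber_count G q hq0 m₁ hm₁ L hqdvd hintv
      have hq0R : (0:ℝ) < q := by exact_mod_cast hq0
      have hLq : 2 * (L/q) ≤ Q := by
        have hcast : (n:ℝ) ≤ 2*(k:ℝ)*(q:ℝ) := by exact_mod_cast hnkq
        have hmul := mul_le_mul_of_nonneg_left hcast (by positivity : (0:ℝ) ≤ 2*L)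
        rw [hQdef, show 2*(L/(q:ℝ)) = 2*L/q by ring, div_le_div_iff₀ hq0R hn0]
        nlinarith [hmul]
      linarith
    calc (Fs.card:ℝ)
        = ∑ d ∈ n.divisors,
            ((Fs.filter (fun m => Int.gcd (n:ℤ) (m - m₀) = d)).card : ℝ) := by
          exact_mod_cast hsum
      _ ≤ ∑ _d ∈ n.divisors, (1+Q) := Finset.sum_le_sum hfib
      _ = (n.divisors.card:ℝ) * (1+Q) := by rw [Finset.sum_const, nsmul_eq_mul]
  have hdiv := hD n hn.ne'
  have hQ6 : 1 + Q ≤ 6 * (1 + k * Real.sqrt (P / n)) := by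
    have hsn : Real.sqrt n * Real.sqrt n = n := Real.mul_self_sqrt hn0.le
    have hsn0 : (0:ℝ) < Real.sqrt n := Real.sqrt_pos.mpr hn0
    have hLeq : L = Real.sqrt 2 * (Real.sqrt n * Real.sqrt P) := by
      rw [hLdef, show 2*(n:ℝ)*P = 2*((n:ℝ)*P) by ring, Real.sqrt_mul (by norm_num),
        Real.sqrt_mul hn0.le]
    have hPn : Real.sqrt (P / n) = Real.sqrt P / Real.sqrt n := Real.sqrt_div hP0.le n
    have hQeq : Q = 4 * Real.sqrt 2 * ((k:ℝ) * Real.sqrt (P/(n:ℝ))) := by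
      have h1 : Real.sqrt (P/(n:ℝ)) * Real.sqrt n = Real.sqrt P := by
        rw [hPn, div_mul_cancel₀ _ hsn0.ne']
      have h2 : Q * n = 4*k*L := by rw [hQdef, div_mul_cancel₀ _ hn0.ne']
      have h3 : (4 * Real.sqrt 2 * ((k:ℝ) * Real.sqrt (P/(n:ℝ)))) * n = 4*k*L := by
        calc (4 * Real.sqrt 2 * ((k:ℝ) * Real.sqrt (P/(n:ℝ)))) * n
            = 4 * Real.sqrt 2 * k * (Real.sqrt (P/(n:ℝ)) * (Real.sqrt n * Real.sqrt n)) := by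
              rw [hsn]; ring
          _ = 4 * Real.sqrt 2 * k * (Real.sqrt P * Real.sqrt n) := by
              rw [← mul_assoc (Real.sqrt (P/(n:ℝ))), h1]
          _ = 4*k*L := by rw [hLeq]; ring
      exact mul_right_cancel₀ hn0.ne' (h2.trans h3.symm)
    have hs2 : Real.sqrt 2 ≤ 3/2 := by
      have h := Real.sqrt_le_sqrt (by norm_num : (2:ℝ) ≤ 9/4)
      rwa [show (9/4:ℝ) = (3/2)^2 by norm_num, Real.sqrt_sq (by norm_num)] at h
    have hx0 : 0 ≤ (k:ℝ) * Real.sqrt (P/(n:ℝ)) := by positivity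
    rw [hQeq]
    nlinarith [hx0, hs2]
  calc (Nat.card {y : ℤ // (|y| : ℝ) ≤ P ∧ ∃ m : ℤ, (n : ℤ) * y + b = m ^ 2} : ℝ)
      ≤ (Fs.card : ℝ) := by exact_mod_cast step2 ▸ step1
    _ ≤ (n.divisors.card : ℝ) * (1 + Q) := main
    _ ≤ (D * (n:ℝ)^ε) * (6 * (1 + k * Real.sqrt (P / n))) := by
        apply mul_le_mul hdiv hQ6 (by positivity) (by positivity)
    _ = 6 * D * (n:ℝ)^ε * (1 + k * Real.sqrt (P / n)) := by ring
end

section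
/- Let P ≥ 2, Q ≥ 2 be real numbers, let a, b, c, d, e, f be integers in [−Q, Q], and set Δ = 4ac − b² and Θ = 4acf + ebd − ae² − cd² − fb². Let N(P,Q) denote the number of integer solutions (x,y) of a·x² + b·x·y + c·y² + d·x + e·y + f = 0 with |x| ≤ P and |y| ≤ P. If (a² + c²)·Δ ≠ 0, Θ = 0, and −Δ is not a perfect square, then N(P,Q) ≤ C for an absolute constant C. -/
lemma not_sq_aux (D u v : ℤ) (hD : ¬ ∃ m : ℤ, D = m ^ 2) (h : v ^ 2 = D * u ^ 2) :
    u = 0 ∧ v = 0 := by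
  by_cases hu : u = 0
  · subst hu
    refine ⟨rfl, ?_⟩
    have : v ^ 2 = 0 := by linarith [h]
    exact (pow_eq_zero_iff two_ne_zero).mp this
  · exfalso
    have hdvd : u ∣ v := by
      have h2 : u ^ 2 ∣ v ^ 2 := ⟨D, by linarith [h]⟩
      exact (Int.pow_dvd_pow_iff two_ne_zero).mp h2
    obtain ⟨m, hm⟩ := hdvd
    apply hD
    refine ⟨m, ?_⟩
    have hu2 : u ^ 2 ≠ 0 := pow_ne_zero _ hu
    have : D * u ^ 2 = m ^ 2 * u ^ 2 := by rw [← h, hm]; ring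
    exact mul_right_cancel₀ hu2 this

/-- **Quadratic lemma, case (ii).**
If `(a² + c²)·Δ ≠ 0`, `Θ = 0` and `-Δ` is not a perfect square, then the number of
integer solutions `(x,y)` of `ax² + bxy + cy² + dx + ey + f = 0` with `|x| ≤ P`,
`|y| ≤ P` is bounded by an absolute constant. -/
theorem quadratic_count_case_ii :
    ∃ K : ℝ, ∀ (P Q : ℝ) (a b c d e f : ℤ), 2 ≤ P → 2 ≤ Q →
      (|a| : ℝ) ≤ Q → (|b| : ℝ) ≤ Q → (|c| : ℝ) ≤ Q →
      (|d| : ℝ) ≤ Q → (|e| : ℝ) ≤ Q → (|f| : ℝ) ≤ Q →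
      (a ^ 2 + c ^ 2) * (4 * a * c - b ^ 2) ≠ 0 →
      4 * a * c * f + e * b * d - a * e ^ 2 - c * d ^ 2 - f * b ^ 2 = 0 →
      (¬ ∃ m : ℤ, -(4 * a * c - b ^ 2) = m ^ 2) →
      (Nat.card {xy : ℤ × ℤ // (|xy.1| : ℝ) ≤ P ∧ (|xy.2| : ℝ) ≤ P ∧
          a * xy.1 ^ 2 + b * xy.1 * xy.2 + c * xy.2 ^ 2 + d * xy.1 + e * xy.2 + f = 0} : ℝ)
        ≤ K := by
  refine ⟨1, ?_⟩
  intro P Q a b c d e f hP hQ _ _ _ _ _ _ hac hΘ hsq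
  have hΔ : (4 * a * c - b ^ 2) ≠ 0 := fun h => hac (by rw [h]; ring)
  have ha2c2 : a ^ 2 + c ^ 2 ≠ 0 := fun h => hac (by rw [h]; ring)
  have hac' : a ≠ 0 ∨ c ≠ 0 := by
    by_contra h
    push_neg at h
    exact ha2c2 (by rw [h.1, h.2]; ring)
  -- key: for any solution (x,y), both auxiliary linear forms vanish
  have key : ∀ x y : ℤ,
      a * x ^ 2 + b * x * y + c * y ^ 2 + d * x + e * y + f = 0 →
      (a ≠ 0 → (2*a*x + b*y + d = 0 ∧ (4*a*c - b^2)*y + 2*a*e - b*d = 0)) ∧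
      (c ≠ 0 → (2*c*y + b*x + e = 0 ∧ (4*a*c - b^2)*x + 2*c*d - b*e = 0)) := by
    intro x y hF
    constructor
    · intro ha
      have hid : ((4*a*c - b^2)*y + 2*a*e - b*d) ^ 2
          = (-(4*a*c - b^2)) * (2*a*x + b*y + d) ^ 2 := by
        linear_combination (4*a*(4*a*c - b^2)) * hF - (4*a) * hΘ
      obtain ⟨hU, hV⟩ := not_sq_aux _ _ _ hsq hid
      exact ⟨hU, hV⟩
    · intro hc
      have hid : ((4*a*c - b^2)*x + 2*c*d - b*e) ^ 2
          = (-(4*a*c - b^2)) * (2*c*y + b*x + e) ^ 2 := by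
        linear_combination (4*c*(4*a*c - b^2)) * hF - (4*c) * hΘ
      obtain ⟨hU, hV⟩ := not_sq_aux _ _ _ hsq hid
      exact ⟨hU, hV⟩
  have hsub : Subsingleton {xy : ℤ × ℤ // (|xy.1| : ℝ) ≤ P ∧ (|xy.2| : ℝ) ≤ P ∧
      a * xy.1 ^ 2 + b * xy.1 * xy.2 + c * xy.2 ^ 2 + d * xy.1 + e * xy.2 + f = 0} := by
    constructor
    rintro ⟨⟨x1, y1⟩, _, _, h1⟩ ⟨⟨x2, y2⟩, _, _, h2⟩
    have k1 := key x1 y1 h1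
    have k2 := key x2 y2 h2
    have hxy : x1 = x2 ∧ y1 = y2 := by
      rcases hac' with ha | hc
      · obtain ⟨hU1, hV1⟩ := k1.1 ha
        obtain ⟨hU2, hV2⟩ := k2.1 ha
        have hy : y1 = y2 := by
          have : (4*a*c - b^2) * (y1 - y2) = 0 := by linarith [hV1, hV2]
          have := mul_eq_zero.mp this
          rcases this with h | h
          · exact absurd h hΔ
          · linarith
        have hx : x1 = x2 := by
          have : (2*a) * (x1 - x2) = 0 := by rw [hy] at hU1; linarith [hU1, hU2]
          have := mul_eq_zero.mp this
          rcases this with h | h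
          · exact absurd (by linarith : a = 0) ha
          · linarith
        exact ⟨hx, hy⟩
      · obtain ⟨hU1, hV1⟩ := k1.2 hc
        obtain ⟨hU2, hV2⟩ := k2.2 hc
        have hx : x1 = x2 := by
          have : (4*a*c - b^2) * (x1 - x2) = 0 := by linarith [hV1, hV2]
          have := mul_eq_zero.mp this
          rcases this with h | h
          · exact absurd h hΔ
          · linarith
        have hy : y1 = y2 := by
          have : (2*c) * (y1 - y2) = 0 := by rw [hx] at hU1; linarith [hU1, hU2]
          have := mul_eq_zero.mp this
          rcases this with h | h
          · exact absurd (by linarith : c = 0) hc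
          · linarith
        exact ⟨hx, hy⟩
    simp [hxy.1, hxy.2]
  have hcard : Nat.card {xy : ℤ × ℤ // (|xy.1| : ℝ) ≤ P ∧ (|xy.2| : ℝ) ≤ P ∧
      a * xy.1 ^ 2 + b * xy.1 * xy.2 + c * xy.2 ^ 2 + d * xy.1 + e * xy.2 + f = 0} ≤ 1 := by
    haveI := hsub
    haveI : Finite {xy : ℤ × ℤ // (|xy.1| : ℝ) ≤ P ∧ (|xy.2| : ℝ) ≤ P ∧
      a * xy.1 ^ 2 + b * xy.1 * xy.2 + c * xy.2 ^ 2 + d * xy.1 + e * xy.2 + f = 0} :=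
      Finite.of_subsingleton
    exact Finite.card_le_one_iff_subsingleton.mpr hsub
  exact_mod_cast hcard
end
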